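/- arXiv:1805.05306 — 7 statements merged into one kernel-verified Lean document; each statement's English description precedes it below -/
import Mathlib

section
/- Let X be a double occurrence word and let G = A(X) be its alternance graph. Let G' be a graph with V(G') ⊆ V(X). Then G' is a vertex-minor of G if and only if there exists a sequence v of elements of V(X) such that G' = A(τ̃_v(X)[V(G')]). -/
/-!
Whether two letters `a, b` alternate in a double occurrence word depends only on its subword on
`{a, b}`, which has to be `abab` or `baba`; coding `a ↦ true`, `b ↦ false` turns every question
about it into a finite check on Boolean words of length four. Write `X = A v B v C`, so that
`τ̃_v X = A v B̃ v C`. For letters `x, y ≠ v` the reversal of `B` changes whether `x, y`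
alternate exactly when `B` holds one occurrence of each, i.e. exactly when both `x` and `y`
alternate with `v`; pairs containing `v` are untouched. Hence `𝒜(τ̃_v X) = τ_v(𝒜(X))`, and
since deleting letters from a word induces the corresponding subgraph of its alternance graph,
the theorem follows by iterating.
-/

universe u v w

attribute [local instance 10] Classical.propDecidable

noncomputable section

variable {V : Type u} {E : Type v} {W : Type w}

/-- A finite labeled simple graph: a finite vertex set together with an
adjacency relation.  Well-formedness (symmetry, irreflexivity, support on the
vertex set) is captured by `LGraph.IsGraph`. -/
structure LGraph (V : Type u) where
  verts : Finset V
  Adj : V → V → Prop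

namespace LGraph

/-- `G` is an honest simple graph: `Adj` is symmetric, irreflexive and
supported on the vertex set. -/
def IsGraph (G : LGraph V) : Prop :=
  (∀ a b, G.Adj a b → G.Adj b a) ∧ (∀ a, ¬ G.Adj a a) ∧
    (∀ a b, G.Adj a b → a ∈ G.verts ∧ b ∈ G.verts)

/-- Local complementation at a vertex `v`: toggle every edge between two
distinct neighbours of `v`. -/
def localComp (G : LGraph V) (v : V) : LGraph V :=
  ⟨G.verts, fun a b => a ≠ b ∧ Xor' (G.Adj a b) (G.Adj v a ∧ G.Adj v b)⟩

/-- `τ_{v_k} ∘ ⋯ ∘ τ_{v_1}(G)` for a sequence `l = v_1 … v_k`. -/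
def localCompSeq (G : LGraph V) (l : List V) : LGraph V :=
  l.foldl LGraph.localComp G

/-- Induced subgraph on a set of vertices `A`. -/
def induce (G : LGraph V) (A : Finset V) : LGraph V :=
  ⟨G.verts ∩ A, fun a b => G.Adj a b ∧ a ∈ A ∧ b ∈ A⟩

/-- Vertex deletion `G \ v`. -/
def delete (G : LGraph V) (v : V) : LGraph V :=
  G.induce (G.verts.erase v)

/-- `G'` is a vertex-minor of `G`: there is a sequence of local
complementations at vertices of `G` after which the induced subgraph
on `V(G')` equals `G'`. -/
def IsVertexMinor (G' G : LGraph V) : Prop :=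
  ∃ l : List V, (∀ x ∈ l, x ∈ G.verts) ∧ (G.localCompSeq l).induce G'.verts = G'

/-- `G` and `G'` are related by a sequence of local complementations. -/
def LCEquiv (G G' : LGraph V) : Prop :=
  ∃ l : List V, (∀ x ∈ l, x ∈ G.verts) ∧ G.localCompSeq l = G'

/-- Connectedness of a labeled graph. -/
def Connected (G : LGraph V) : Prop :=
  G.verts.Nonempty ∧ ∀ a ∈ G.verts, ∀ b ∈ G.verts, Relation.ReflTransGen G.Adj a b

end LGraph

/-- The star graph on vertex set `V'` with center `c`. -/
def starGraph (V' : Finset V) (c : V) : LGraph V :=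
  ⟨V', fun a b => a ∈ V' ∧ b ∈ V' ∧ a ≠ b ∧ (a = c ∨ b = c)⟩

/-- `S_{V'} < G`: some star graph on the vertex set `V'` is a vertex-minor
of `G` (all stars on `V'` are LC-equivalent, so the choice of center is
immaterial). -/
def HasStarVertexMinor (G : LGraph V) (V' : Finset V) : Prop :=
  ∃ c ∈ V', (starGraph V' c).IsVertexMinor G

/-- Two words are equivalent if one is a cyclic permutation of the other or
of its reversal. -/
def WordEquiv (X Y : List V) : Prop :=
  (∃ n, Y = X.rotate n) ∨ (∃ n, Y = X.reverse.rotate n)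

/-- A double occurrence word: each letter occurring in it occurs exactly
twice. -/
def IsDOW (X : List V) : Prop := ∀ x ∈ X, X.count x = 2

/-- `(a, b)` is an alternance of (the equivalence class of) `X`: `a ≠ b`
and some word of the form `… a … b … a … b …` is equivalent to `X`. -/
def IsAlternance (X : List V) (a b : V) : Prop :=
  a ≠ b ∧ ∃ A B C D E' : List V,
    WordEquiv X (A ++ a :: (B ++ b :: (C ++ a :: (D ++ b :: E'))))

/-- The alternance graph `𝒜(X)` of a double occurrence word `X`. -/
def alternanceGraph (X : List V) : LGraph V :=
  ⟨X.toFinset, fun a b => IsAlternance X a b⟩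

/-- The operation `τ̃_v` on double occurrence words: writing `X = A v B v C`
with `v` not occurring in `A` or `B`, it returns `A v B̃ v C` where `B̃` is
the reversal of `B`.  (If `v` does not occur twice in `X`, the word is
returned unchanged.) -/
def tauWord (v : V) (X : List V) : List V :=
  let i := X.idxOf v
  let rest := X.drop (i + 1)
  let j := rest.idxOf v
  X.take (i + 1) ++ (rest.take j).reverse ++ rest.drop j

/-- `τ̃_{v_l} ∘ ⋯ ∘ τ̃_{v_1}(X)` for a sequence `l = v_1 … v_l`. -/
def tauWordSeq (l : List V) (X : List V) : List V :=
  l.foldl (fun Y x => tauWord x Y) X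

open List

theorem List.IsRotated.filter {α : Type*} {l l' : List α} (h : l ~r l') (p : α → Bool) :
    l.filter p ~r l'.filter p := by
  obtain ⟨n, rfl⟩ := h
  rw [rotate_eq_drop_append_take_mod, filter_append]
  conv_lhs => rw [← take_append_drop (n % l.length) l, filter_append]
  exact isRotated_append

section Interlacing

variable {a b : V} {X Y : List V}

def pairCode (X : List V) (a b : V) : List Bool :=
  (X.filter fun x => decide (x = a ∨ x = b)).map fun x => decide (x = a)

def IsInterlaced (L : List Bool) : Prop :=
  L = [true, false, true, false] ∨ L = [false, true, false, true]

instance : DecidablePred IsInterlaced := fun _ => inferInstanceAs (Decidable (_ ∨ _))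

lemma IsInterlaced.of_isRotated {L L' : List Bool} (hL : IsInterlaced L) (h : L ~r L') :
    IsInterlaced L' := by
  rw [isRotated_iff_mem_map_range] at h
  rcases hL with rfl | rfl <;> simp [range_succ, IsInterlaced] at h ⊢ <;> tauto

lemma IsInterlaced.reverse {L : List Bool} (hL : IsInterlaced L) : IsInterlaced L.reverse := by
  rcases hL with rfl | rfl <;> simp [IsInterlaced]

lemma pairCode_isRotated (h : X ~r Y) : pairCode X a b ~r pairCode Y a b :=
  (h.filter _).map _

@[simp] lemma pairCode_reverse : pairCode X.reverse a b = (pairCode X a b).reverse := by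
  simp [pairCode, filter_reverse]

lemma pairCode_append : pairCode (X ++ Y) a b = pairCode X a b ++ pairCode Y a b := by
  simp [pairCode]

@[simp] lemma pairCode_nil : pairCode [] a b = [] := rfl

@[simp] lemma pairCode_cons_left : pairCode (a :: X) a b = true :: pairCode X a b := by
  simp [pairCode]

lemma pairCode_cons_right (hab : a ≠ b) : pairCode (b :: X) a b = false :: pairCode X a b := by
  simp [pairCode, hab.symm]

lemma count_true_pairCode : (pairCode X a b).count true = X.count a := by
  rw [pairCode, count_eq_countP, countP_map, count_eq_countP, countP_filter]
  exact countP_congr fun x _ => by by_cases hx : x = a <;> simp [hx]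

lemma count_false_pairCode (hab : a ≠ b) : (pairCode X a b).count false = X.count b := by
  rw [pairCode, count_eq_countP, countP_map, count_eq_countP, countP_filter]
  exact countP_congr fun x _ => by by_cases hx : x = b <;> simp [hx, hab.symm]

lemma length_pairCode (hab : a ≠ b) : (pairCode X a b).length = X.count a + X.count b := by
  rw [← count_true_add_count_false, count_true_pairCode, count_false_pairCode hab]

lemma map_cond_pairCode : (pairCode X a b).map (fun c => cond c a b) =
    X.filter fun x => decide (x = a ∨ x = b) := by
  rw [pairCode, map_map]
  refine (map_congr_left fun x hx => ?_).trans (map_id _)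
  rcases of_decide_eq_true (mem_filter.mp hx).2 with rfl | rfl
  · simp
  · by_cases h : x = a <;> simp [h]

lemma not_isInterlaced_pairCode_self : ¬ IsInterlaced (pairCode X a a) := by
  have h : ∀ c ∈ pairCode X a a, c = true := by simp [pairCode]
  rintro (hc | hc) <;> simp [hc] at h

lemma mem_of_isInterlaced_pairCode (h : IsInterlaced (pairCode X a b)) : a ∈ X ∧ b ∈ X := by
  have hab : a ≠ b := by rintro rfl; exact not_isInterlaced_pairCode_self h
  have hpos : 0 < X.count a ∧ 0 < X.count b := by
    rw [← count_true_pairCode (b := b), ← count_false_pairCode hab]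
    rcases h with h | h <;> simp [h]
  exact ⟨count_pos_iff.mp hpos.1, count_pos_iff.mp hpos.2⟩

lemma IsDOW.perm (hX : IsDOW X) (h : X ~ Y) : IsDOW Y := fun x hx => by
  rw [← h.count_eq]
  exact hX x (h.mem_iff.mpr hx)

lemma IsDOW.filter (hX : IsDOW X) (p : V → Bool) : IsDOW (X.filter p) := fun x hx => by
  rw [count_filter (of_mem_filter hx)]
  exact hX x (mem_of_mem_filter hx)

lemma isInterlaced_pairCode_of_wordEquiv (h : WordEquiv X Y)
    (hY : IsInterlaced (pairCode Y a b)) : IsInterlaced (pairCode X a b) := by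
  rcases h with ⟨n, rfl⟩ | ⟨n, rfl⟩
  · exact hY.of_isRotated (pairCode_isRotated (IsRotated.forall X n))
  · simpa using (hY.of_isRotated (pairCode_isRotated (IsRotated.forall X.reverse n))).reverse

lemma isInterlaced_pairCode_of_eq (hX : IsDOW X) (hab : a ≠ b) {A B C D E : List V}
    (h : X = A ++ a :: (B ++ b :: (C ++ a :: (D ++ b :: E)))) :
    IsInterlaced (pairCode X a b) := by
  have hlen : (pairCode X a b).length = 4 := by
    rw [length_pairCode hab, hX a (by simp [h]), hX b (by simp [h])]
  subst h
  simp only [pairCode_append, pairCode_cons_left, pairCode_cons_right hab, length_append,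
    length_cons] at hlen ⊢
  obtain ⟨hA, hB, hC, hD, hE⟩ : pairCode A a b = [] ∧ pairCode B a b = [] ∧ pairCode C a b = [] ∧
      pairCode D a b = [] ∧ pairCode E a b = [] := by
    simp only [← length_eq_zero_iff]; omega
  simp [hA, hB, hC, hD, hE, IsInterlaced]

lemma exists_eq_of_filter_eq {p : V → Bool} (h : X.filter p = [a, b, a, b]) :
    ∃ A B C D E, X = A ++ a :: (B ++ b :: (C ++ a :: (D ++ b :: E))) := by
  obtain ⟨A, X1, rfl, -, -, h1⟩ := filter_eq_cons_iff.mp h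
  obtain ⟨B, X2, rfl, -, -, h2⟩ := filter_eq_cons_iff.mp h1
  obtain ⟨C, X3, rfl, -, -, h3⟩ := filter_eq_cons_iff.mp h2
  obtain ⟨D, E, rfl, -, -, -⟩ := filter_eq_cons_iff.mp h3
  exact ⟨A, B, C, D, E, rfl⟩

lemma isAlternance_of_isInterlaced_pairCode (h : IsInterlaced (pairCode X a b)) :
    IsAlternance X a b := by
  have hab : a ≠ b := by rintro rfl; exact not_isInterlaced_pairCode_self h
  have hF := map_cond_pairCode (X := X) (a := a) (b := b)
  refine ⟨hab, ?_⟩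
  rcases h with h | h <;> rw [h] at hF <;>
    simp only [map_cons, map_nil, cond_true, cond_false] at hF
  · obtain ⟨A, B, C, D, E, rfl⟩ := exists_eq_of_filter_eq hF.symm
    exact ⟨A, B, C, D, E, Or.inl ⟨0, (rotate_zero _).symm⟩⟩
  · obtain ⟨A, B, C, D, E, rfl⟩ := exists_eq_of_filter_eq hF.symm
    -- rotating the prefix `A b` to the end turns `b a b a` into `a b a b`
    refine ⟨B, C, D, E ++ A, [], Or.inl ⟨A.length + 1, ?_⟩⟩
    have := rotate_append_length_eq (A ++ [b]) (B ++ a :: (C ++ b :: (D ++ a :: E)))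
    simp_all

theorem isAlternance_iff (hX : IsDOW X) : IsAlternance X a b ↔ IsInterlaced (pairCode X a b) := by
  refine ⟨fun ⟨hab, A, B, C, D, E, h⟩ => ?_, isAlternance_of_isInterlaced_pairCode⟩
  have hperm : X ~ A ++ a :: (B ++ b :: (C ++ a :: (D ++ b :: E))) := by
    rcases h with ⟨n, h⟩ | ⟨n, h⟩ <;> rw [h]
    · exact (rotate_perm X n).symm
    · exact (reverse_perm X).symm.trans (rotate_perm _ n).symm
  exact isInterlaced_pairCode_of_wordEquiv h
    (isInterlaced_pairCode_of_eq (hX.perm hperm) hab rfl)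

lemma pairCode_filter {p : V → Bool} (ha : p a) (hb : p b) :
    pairCode (X.filter p) a b = pairCode X a b := by
  rw [pairCode, pairCode, filter_filter]
  congr 1
  refine filter_congr fun x _ => ?_
  by_cases hxa : x = a
  · simp [hxa, ha]
  · by_cases hxb : x = b <;> simp [hxa, hxb, hb]

theorem alternanceGraph_filter (hX : IsDOW X) (W : Finset V) :
    alternanceGraph (X.filter fun x => decide (x ∈ W)) = (alternanceGraph X).induce W := by
  simp only [alternanceGraph, LGraph.induce, LGraph.mk.injEq]
  refine ⟨by ext; simp [and_comm], funext fun x => funext fun y => propext ?_⟩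
  rw [isAlternance_iff (hX.filter _), isAlternance_iff hX]
  constructor
  · intro h
    obtain ⟨hx, hy⟩ := mem_of_isInterlaced_pairCode h
    have hxW : x ∈ W := by simpa using of_mem_filter hx
    have hyW : y ∈ W := by simpa using of_mem_filter hy
    exact ⟨by rwa [pairCode_filter (by simpa using hxW) (by simpa using hyW)] at h, hxW, hyW⟩
  · rintro ⟨h, hxW, hyW⟩
    rwa [pairCode_filter (by simpa using hxW) (by simpa using hyW)]

end Interlacing

section TauWord

variable {v : V} {X A B C : List V}

lemma tauWord_perm (v : V) (X : List V) : tauWord v X ~ X := by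
  unfold tauWord
  set rest := X.drop (X.idxOf v + 1)
  calc X.take (X.idxOf v + 1) ++ (rest.take (rest.idxOf v)).reverse ++ rest.drop (rest.idxOf v)
      ~ X.take (X.idxOf v + 1) ++ (rest.take (rest.idxOf v) ++ rest.drop (rest.idxOf v)) := by
        rw [append_assoc]
        exact ((reverse_perm _).append_right _).append_left _
    _ = X := by rw [take_append_drop, take_append_drop]

lemma tauWordSeq_perm (l : List V) (X : List V) : tauWordSeq l X ~ X := by
  induction l generalizing X with
  | nil => rfl
  | cons v l ih => exact (ih (tauWord v X)).trans (tauWord_perm v X)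

lemma tauWord_of_notMem (h : v ∉ X) : tauWord v X = X := by
  simp [tauWord, idxOf_eq_length_iff.mpr h, take_of_length_le (Nat.le_succ _),
    drop_of_length_le (Nat.le_succ _)]

lemma tauWord_append_cons_append_cons (hA : v ∉ A) (hB : v ∉ B) :
    tauWord v (A ++ v :: (B ++ v :: C)) = A ++ v :: (B.reverse ++ v :: C) := by
  simp [tauWord, idxOf_append_of_notMem hA, idxOf_append_of_notMem hB,
    take_length_add_append]

lemma IsDOW.exists_eq_append_cons_append_cons (hX : IsDOW X) (hv : v ∈ X) :
    ∃ A B C, X = A ++ v :: (B ++ v :: C) ∧ v ∉ A ∧ v ∉ B ∧ v ∉ C := by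
  have hf : X.filter (· == v) = [v, v] := by
    rw [filter_beq, hX v hv]
    rfl
  obtain ⟨A, X1, rfl, hA, -, h1⟩ := filter_eq_cons_iff.mp hf
  obtain ⟨B, C, rfl, hB, -, hC⟩ := filter_eq_cons_iff.mp h1
  exact ⟨A, B, C, rfl, fun h => by simpa using hA v h, fun h => by simpa using hB v h,
    fun h => by simpa using filter_eq_nil_iff.mp hC v h⟩

end TauWord

section BoolWords

lemma isInterlaced_replicate_iff {p q r : ℕ} (h : p + q + r = 2) :
    IsInterlaced (replicate p false ++ true :: (replicate q false ++ true :: replicate r false)) ↔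
      q = 1 := by
  obtain rfl : r = 2 - p - q := by omega
  have hp : p ≤ 2 := by omega
  have hq : q ≤ 2 - p := by omega
  interval_cases p <;> interval_cases q <;> decide

-- `i` and `j` run over all cuts of a word of length four into three pieces.
lemma isInterlaced_take_drop_iff : ∀ (i j : Fin 5) (x₁ x₂ x₃ x₄ : Bool),
    [x₁, x₂, x₃, x₄].count true = 2 → [x₁, x₂, x₃, x₄].count false = 2 →
      (IsInterlaced ([x₁, x₂, x₃, x₄].take i ++ (([x₁, x₂, x₃, x₄].drop i).take j).reverse ++
          ([x₁, x₂, x₃, x₄].drop i).drop j) ↔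
        Xor (IsInterlaced [x₁, x₂, x₃, x₄])
          ((([x₁, x₂, x₃, x₄].drop i).take j).count true = 1 ∧
            (([x₁, x₂, x₃, x₄].drop i).take j).count false = 1)) := by
  unfold Xor
  decide

lemma isInterlaced_append_reverse_iff {A B C : List Bool} (ht : (A ++ B ++ C).count true = 2)
    (hf : (A ++ B ++ C).count false = 2) :
    IsInterlaced (A ++ B.reverse ++ C) ↔
      Xor (IsInterlaced (A ++ B ++ C)) (B.count true = 1 ∧ B.count false = 1) := by
  have hlen : (A ++ B ++ C).length = 4 := by rw [← count_true_add_count_false, ht, hf]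
  obtain ⟨x₁, x₂, x₃, x₄, hL⟩ : ∃ x₁ x₂ x₃ x₄, A ++ B ++ C = [x₁, x₂, x₃, x₄] := by
    match h : A ++ B ++ C, hlen with
    | [x₁, x₂, x₃, x₄], _ => exact ⟨x₁, x₂, x₃, x₄, rfl⟩
  have hi : A.length < 5 := by simp only [length_append] at hlen; omega
  have hj : B.length < 5 := by simp only [length_append] at hlen; omega
  have key := isInterlaced_take_drop_iff ⟨A.length, hi⟩ ⟨B.length, hj⟩ x₁ x₂ x₃ x₄
  simp only [← hL, append_assoc, take_left, drop_left] at key ⊢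
  exact key (by simpa using ht) (by simpa using hf)

end BoolWords

section LocalComplementation

variable {a b v x y : V} {L A B C : List V}

lemma pairCode_eq_replicate (hab : a ≠ b) (ha : a ∉ L) :
    pairCode L a b = replicate (L.count b) false := by
  refine eq_replicate_iff.mpr
    ⟨by simp [length_pairCode hab, count_eq_zero.mpr ha], fun c hc => ?_⟩
  obtain ⟨z, hz, rfl⟩ := mem_map.mp hc
  exact decide_eq_false fun h => ha (h ▸ mem_of_mem_filter hz)

lemma reverse_pairCode_of_notMem (h : a ∉ L ∨ b ∉ L) :
    (pairCode L a b).reverse = pairCode L a b := by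
  suffices ∃ c, ∀ d ∈ pairCode L a b, d = c by
    obtain ⟨c, hc⟩ := this
    rw [eq_replicate_of_mem hc, reverse_replicate]
  have hmem : ∀ d ∈ pairCode L a b, ∃ z ∈ L, (z = a ∨ z = b) ∧ d = decide (z = a) := by
    intro d hd
    obtain ⟨z, hz, rfl⟩ := mem_map.mp hd
    exact ⟨z, mem_of_mem_filter hz, of_decide_eq_true (mem_filter.mp hz).2, rfl⟩
  rcases h with ha | hb
  · refine ⟨false, fun d hd => ?_⟩
    obtain ⟨z, hzL, -, rfl⟩ := hmem d hd
    exact decide_eq_false fun h => ha (h ▸ hzL)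
  · refine ⟨true, fun d hd => ?_⟩
    obtain ⟨z, hzL, hz, rfl⟩ := hmem d hd
    exact decide_eq_true (hz.resolve_right fun h => hb (h ▸ hzL))

lemma pairCode_append_cons_append_cons {B' : List V} :
    pairCode (A ++ v :: (B' ++ v :: C)) a b =
      pairCode A a b ++ pairCode [v] a b ++
        (pairCode B' a b ++ pairCode [v] a b ++ pairCode C a b) := by
  simp only [← pairCode_append, singleton_append, append_assoc]

lemma isInterlaced_pairCode_append_cons_append_cons_iff (hX : IsDOW (A ++ v :: (B ++ v :: C)))
    (hA : v ∉ A) (hB : v ∉ B) (hC : v ∉ C) (hx : x ∈ A ++ v :: (B ++ v :: C)) (hvx : v ≠ x) :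
    IsInterlaced (pairCode (A ++ v :: (B ++ v :: C)) v x) ↔ B.count x = 1 := by
  have hcount := hX x hx
  simp only [count_append, count_cons, beq_iff_eq, hvx, if_false] at hcount
  rw [pairCode_append_cons_append_cons, pairCode_eq_replicate hvx hA,
    pairCode_eq_replicate hvx hB, pairCode_eq_replicate hvx hC]
  simpa using isInterlaced_replicate_iff (q := B.count x) (by omega)

lemma isInterlaced_pairCode_reverse_middle_iff (hX : IsDOW (A ++ v :: (B ++ v :: C)))
    (hA : v ∉ A) (hB : v ∉ B) (hC : v ∉ C) :
    IsInterlaced (pairCode (A ++ v :: (B.reverse ++ v :: C)) x y) ↔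
      x ≠ y ∧ Xor (IsInterlaced (pairCode (A ++ v :: (B ++ v :: C)) x y))
        (IsInterlaced (pairCode (A ++ v :: (B ++ v :: C)) v x) ∧
          IsInterlaced (pairCode (A ++ v :: (B ++ v :: C)) v y)) := by
  by_cases hxy : x = y
  · subst hxy
    simp only [not_isInterlaced_pairCode_self, ne_eq, not_true_eq_false, false_and]
  by_cases hv : v = x ∨ v = y
  · rw [pairCode_append_cons_append_cons, pairCode_reverse,
      reverse_pairCode_of_notMem (hv.imp (· ▸ hB) (· ▸ hB)), ← pairCode_append_cons_append_cons]
    rcases hv with rfl | rfl <;> simp [hxy, not_isInterlaced_pairCode_self, Xor]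
  set X := A ++ v :: (B ++ v :: C)
  push Not at hv
  by_cases hmem : x ∈ X ∧ y ∈ X
  swap
  · have hmemY : ∀ z, z ∈ A ++ v :: (B.reverse ++ v :: C) ↔ z ∈ X := by simp [X]
    refine iff_of_false (fun h => hmem ?_) (fun h => hmem ?_)
    · exact (mem_of_isInterlaced_pairCode h).imp (hmemY x).mp (hmemY y).mp
    · rcases h.2 with ⟨h, -⟩ | ⟨⟨h₁, h₂⟩, -⟩
      exacts [mem_of_isInterlaced_pairCode h,
        ⟨(mem_of_isInterlaced_pairCode h₁).2, (mem_of_isInterlaced_pairCode h₂).2⟩]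
  obtain ⟨hx, hy⟩ := hmem
  have hv' : pairCode [v] x y = [] := by simp [pairCode, hv.1, hv.2]
  have hXcode : pairCode X x y = pairCode A x y ++ pairCode B x y ++ pairCode C x y := by
    simp only [X, pairCode_append_cons_append_cons, hv', append_nil, append_assoc]
  have hYcode : pairCode (A ++ v :: (B.reverse ++ v :: C)) x y =
      pairCode A x y ++ (pairCode B x y).reverse ++ pairCode C x y := by
    simp only [pairCode_append_cons_append_cons, pairCode_reverse, hv', append_nil,
      append_assoc]
  rw [isInterlaced_pairCode_append_cons_append_cons_iff hX hA hB hC hx hv.1,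
    isInterlaced_pairCode_append_cons_append_cons_iff hX hA hB hC hy hv.2, hYcode, hXcode,
    isInterlaced_append_reverse_iff (by rw [← hXcode, count_true_pairCode, hX x hx])
      (by rw [← hXcode, count_false_pairCode hxy, hX y hy]),
    count_true_pairCode, count_false_pairCode hxy]
  simp [hxy]

end LocalComplementation

lemma LGraph.localComp_eq_self {G : LGraph V} {v : V} (hirr : ∀ a b, G.Adj a b → a ≠ b)
    (hv : ∀ a, ¬ G.Adj v a) : G.localComp v = G := by
  simp only [LGraph.localComp, hv, and_false]
  congr
  exact funext fun a => funext fun b => propext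
    ⟨fun h => h.2.elim And.left fun h' => h'.1.elim, fun h => ⟨hirr a b h, Or.inl ⟨h, id⟩⟩⟩

theorem alternanceGraph_tauWord {X : List V} (hX : IsDOW X) (v : V) :
    alternanceGraph (tauWord v X) = (alternanceGraph X).localComp v := by
  by_cases hv : v ∈ X
  swap
  · rw [tauWord_of_notMem hv,
      LGraph.localComp_eq_self (G := alternanceGraph X) (fun _ _ h => h.1)]
    exact fun a h => hv ((mem_of_isInterlaced_pairCode ((isAlternance_iff hX).mp h)).1)
  obtain ⟨A, B, C, rfl, hA, hB, hC⟩ := hX.exists_eq_append_cons_append_cons hv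
  have hY : IsDOW (tauWord v (A ++ v :: (B ++ v :: C))) := hX.perm (tauWord_perm _ _).symm
  rw [tauWord_append_cons_append_cons hA hB] at hY ⊢
  simp only [alternanceGraph, LGraph.localComp, LGraph.mk.injEq]
  refine ⟨by ext; simp, funext fun x => funext fun y => propext ?_⟩
  rw [isAlternance_iff hY, isAlternance_iff hX, isAlternance_iff hX, isAlternance_iff hX]
  exact isInterlaced_pairCode_reverse_middle_iff hX hA hB hC

theorem alternanceGraph_tauWordSeq {X : List V} (hX : IsDOW X) (l : List V) :
    alternanceGraph (tauWordSeq l X) = (alternanceGraph X).localCompSeq l := by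
  induction l generalizing X with
  | nil => rfl
  | cons v l ih =>
    calc alternanceGraph (tauWordSeq l (tauWord v X))
        = (alternanceGraph (tauWord v X)).localCompSeq l := ih (hX.perm (tauWord_perm v X).symm)
      _ = ((alternanceGraph X).localComp v).localCompSeq l := by rw [alternanceGraph_tauWord hX]

theorem vertexMinor_iff_tauWord_general (X : List V) (hX : IsDOW X)
    (G' : LGraph V) :
    G'.IsVertexMinor (alternanceGraph X) ↔
      ∃ l : List V, (∀ x ∈ l, x ∈ X.toFinset) ∧
        G' = alternanceGraph ((tauWordSeq l X).filter fun x => decide (x ∈ G'.verts)) := by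
  have key (l : List V) :
      alternanceGraph ((tauWordSeq l X).filter fun x => decide (x ∈ G'.verts)) =
        ((alternanceGraph X).localCompSeq l).induce G'.verts := by
    rw [alternanceGraph_filter (hX.perm (tauWordSeq_perm l X).symm),
      alternanceGraph_tauWordSeq hX]
  simp only [LGraph.IsVertexMinor, key]
  exact exists_congr fun l => and_congr_right fun _ => eq_comm

/-- for a double occurrence word `X` with alternance graph
`G = 𝒜(X)` and a graph `G'` with `V(G') ⊆ V(X)`, `G'` is a vertex-minor of
`G` iff `G' = 𝒜(τ̃_𝐯(X)[V(G')])` for some sequence `𝐯` of letters of `X`. -/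
theorem vertexMinor_iff_tauWord (X : List V) (hX : IsDOW X)
    (G' : LGraph V) (hG' : G'.IsGraph) (hsub : G'.verts ⊆ X.toFinset) :
    G'.IsVertexMinor (alternanceGraph X) ↔
      ∃ l : List V, (∀ x ∈ l, x ∈ X.toFinset) ∧
        G' = alternanceGraph ((tauWordSeq l X).filter fun x => decide (x ∈ G'.verts)) :=
  vertexMinor_iff_tauWord_general X hX G'
end
end

section
/- Let G be a connected distance-hereditary graph, and let G' be obtained from G by adding a leaf or by performing a (true or false) twin-split. Then |T(G')| ≥ |T(G)|. -/
universe u v w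

attribute [local instance 10] Classical.propDecidable

noncomputable section

variable {V : Type u} {E : Type v} {W : Type w}

/-- Graph distance: the least `n` such that there is a walk with `n` edges
from `a` to `b` inside `G`. -/
def LGraph.dist (G : LGraph V) (a b : V) : ℕ :=
  sInf {n | ∃ vs : List V, vs.Chain' G.Adj ∧ (∀ x ∈ vs, x ∈ G.verts) ∧
    vs.head? = some a ∧ vs.getLast? = some b ∧ vs.length = n + 1}

/-- `G` is distance-hereditary: in every connected induced subgraph,
distances agree with those in `G`. -/
def LGraph.DistanceHereditary (G : LGraph V) : Prop :=
  ∀ A : Finset V, A ⊆ G.verts → (G.induce A).Connected →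
    ∀ a ∈ A, ∀ b ∈ A, (G.induce A).dist a b = G.dist a b

/-- The neighbourhood of a vertex. -/
def LGraph.nbhd (G : LGraph V) (x : V) : Set V := {u | G.Adj x u}

/-- A leaf: a vertex of degree one. -/
def LGraph.IsLeaf (G : LGraph V) (x : V) : Prop :=
  x ∈ G.verts ∧ ∃ u, G.nbhd x = {u}

/-- An axil: the neighbour of a leaf. -/
def LGraph.IsAxil (G : LGraph V) (x : V) : Prop :=
  ∃ l, G.IsLeaf l ∧ G.Adj l x

/-- A twin: a vertex `x` such that some other vertex `u` has
`N_x \ {u} = N_u \ {x}`. -/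
def LGraph.IsTwin (G : LGraph V) (x : V) : Prop :=
  x ∈ G.verts ∧ ∃ u, u ≠ x ∧ u ∈ G.verts ∧ G.nbhd x \ {u} = G.nbhd u \ {x}

/-- The foliage `T(G)`: the set of leaves, axils and twins of `G`. -/
def LGraph.foliage (G : LGraph V) : Finset V :=
  G.verts.filter fun x => G.IsLeaf x ∨ G.IsAxil x ∨ G.IsTwin x

/-- Add a new leaf `x` attached to the vertex `u`. -/
def LGraph.addLeaf (G : LGraph V) (u x : V) : LGraph V :=
  ⟨insert x G.verts, fun a b => G.Adj a b ∨ (a = u ∧ b = x) ∨ (a = x ∧ b = u)⟩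

/-- False twin-split at `u`: add a new vertex `x` adjacent exactly to the
neighbours of `u`. -/
def LGraph.falseTwinSplit (G : LGraph V) (u x : V) : LGraph V :=
  ⟨insert x G.verts, fun a b => G.Adj a b ∨ (a = x ∧ G.Adj u b) ∨ (b = x ∧ G.Adj u a)⟩

/-- True twin-split at `u`: add a new vertex `x` adjacent exactly to
`N_u ∪ {u}`. -/
def LGraph.trueTwinSplit (G : LGraph V) (u x : V) : LGraph V :=
  ⟨insert x G.verts, fun a b =>
    G.Adj a b ∨ (a = x ∧ (G.Adj u b ∨ b = u)) ∨ (b = x ∧ (G.Adj u a ∨ a = u))⟩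

/-! The new vertex `x` always lies in `T(G')`: it is a leaf at `u` or a twin of `u`. A vertex of
`T(G)` can only drop out of the foliage if it is a leaf at `u`, the neighbour of `u` when `u` is a
leaf, or a twin of `u`. Two distinct such vertices cannot both drop out: either a degree count
forces them to coincide, or one of them is a leaf of `G'` away from `x`, or they are twins of each
other (twins of `u` are twins of each other) and stay twins in `G'`. So at most one vertex is lost
while `x` is gained. -/

lemma Set.insert_sdiff_singleton_eq {α : Type*} {s t : Set α} {a v w : α}
    (h : s \ {v} = t \ {w}) (hav : a ≠ v) (haw : a ≠ w) :
    insert a s \ {v} = insert a t \ {w} := by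
  rw [Set.insert_sdiff_of_notMem _ (by simpa using hav),
    Set.insert_sdiff_of_notMem _ (by simpa using haw), h]

namespace LGraph

variable {G : LGraph V} {u v w x z : V} {S : Set V}

lemma IsGraph.adj_comm (hG : G.IsGraph) : G.Adj v w ↔ G.Adj w v :=
  ⟨hG.1 _ _, hG.1 _ _⟩

lemma mem_foliage :
    v ∈ G.foliage ↔ v ∈ G.verts ∧ (G.IsLeaf v ∨ G.IsAxil v ∨ G.IsTwin v) :=
  Finset.mem_filter

lemma adj_iff_of_nbhd_eq_singleton (h : G.nbhd v = {u}) : G.Adj v w ↔ w = u :=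
  Set.ext_iff.mp h w

def Twins (G : LGraph V) (v w : V) : Prop :=
  G.nbhd v \ {w} = G.nbhd w \ {v}

lemma Twins.symm (h : G.Twins v w) : G.Twins w v :=
  Eq.symm h

lemma Twins.isTwin (h : G.Twins v w) (hv : v ∈ G.verts) (hw : w ∈ G.verts) (hwv : w ≠ v) :
    G.IsTwin v :=
  ⟨hv, w, hwv, hw, h⟩

lemma Twins.adj_iff (h : G.Twins v w) (hzv : z ≠ v) (hzw : z ≠ w) :
    G.Adj v z ↔ G.Adj w z := by
  simpa [nbhd, hzv, hzw] using Set.ext_iff.mp h z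

lemma twins_of_nbhd_eq (hirr : ∀ a, ¬ G.Adj a a) (h : G.nbhd v = G.nbhd w) : G.Twins v w := by
  have hv : v ∉ G.nbhd w := by rw [← h]; exact hirr v
  have hw : w ∉ G.nbhd v := by rw [h]; exact hirr w
  rw [Twins, Set.sdiff_singleton_eq_self hw, Set.sdiff_singleton_eq_self hv, h]

lemma Twins.trans (hG : G.IsGraph) (h₁ : G.Twins v u) (h₂ : G.Twins u w) : G.Twins v w := by
  by_cases hvu : v = u
  · exact hvu ▸ h₂
  by_cases hwu : w = u
  · exact hwu ▸ h₁
  by_cases hvw : v = w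
  · exact hvw ▸ rfl
  have hu : G.Adj v u ↔ G.Adj w u :=
    calc G.Adj v u ↔ G.Adj u v := hG.adj_comm
      _ ↔ G.Adj w v := h₂.adj_iff hvu hvw
      _ ↔ G.Adj v w := hG.adj_comm
      _ ↔ G.Adj u w := h₁.adj_iff (Ne.symm hvw) hwu
      _ ↔ G.Adj w u := hG.adj_comm
  ext z
  have := hG.2.1 z
  by_cases hzu : z = u
  · subst hzu
    simp [nbhd, hu, Ne.symm hvu, Ne.symm hwu]
  have hv := h₁.adj_iff (z := z)
  have hw := h₂.adj_iff (z := z)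
  by_cases hzv : z = v <;> by_cases hzw : z = w <;> simp_all [nbhd]

lemma eq_of_nbhd_eq_singleton (hG : G.IsGraph) (hv : G.nbhd v = {u}) (hu : G.nbhd u = {w}) :
    v = w :=
  (adj_iff_of_nbhd_eq_singleton hu).mp
    (hG.adj_comm.mp ((adj_iff_of_nbhd_eq_singleton hv).mpr rfl))

lemma Twins.eq_of_nbhd_eq_singleton (hG : G.IsGraph) (h : G.Twins w u) (hwu : w ≠ u)
    (hv : G.nbhd v = {u}) : v = w := by
  have hvu : G.Adj v u := (adj_iff_of_nbhd_eq_singleton hv).mpr rfl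
  by_contra hvw
  have hwv : G.Adj w v :=
    (h.adj_iff hvw fun hvu' => hG.2.1 v (hvu' ▸ hvu)).mpr (hG.adj_comm.mp hvu)
  exact hwu ((adj_iff_of_nbhd_eq_singleton hv).mp (hG.adj_comm.mp hwv))

lemma Twins.nbhd_eq_singleton (hG : G.IsGraph) (h : G.Twins w u) (hu : G.nbhd u = {v})
    (hwv : w ≠ v) : G.nbhd w = {v} := by
  have hu' : ∀ {z}, G.Adj u z ↔ z = v := adj_iff_of_nbhd_eq_singleton hu
  ext z
  change G.Adj w z ↔ z = v
  by_cases hzu : z = u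
  · subst hzu
    have hzv : z ≠ v := fun hzv => hG.2.1 z (hu'.mpr hzv)
    simpa [hzv] using fun hwz => hwv (hu'.mp (hG.adj_comm.mp hwz))
  by_cases hzw : z = w
  · subst hzw
    simpa [hwv] using hG.2.1 z
  · rw [h.adj_iff hzw hzu, hu']

def extend (G : LGraph V) (x : V) (S : Set V) : LGraph V :=
  ⟨insert x G.verts, fun a b => G.Adj a b ∨ (a = x ∧ b ∈ S) ∨ (b = x ∧ a ∈ S)⟩

lemma addLeaf_eq_extend : G.addLeaf u x = G.extend x {u} := by
  simp only [addLeaf, extend, Set.mem_singleton_iff, mk.injEq, true_and]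
  funext a b
  exact propext (by tauto)

lemma falseTwinSplit_eq_extend : G.falseTwinSplit u x = G.extend x (G.nbhd u) :=
  rfl

lemma trueTwinSplit_eq_extend : G.trueTwinSplit u x = G.extend x (G.nbhd u ∪ {u}) :=
  rfl

lemma mem_extend_verts_of_mem (hv : v ∈ G.verts) : v ∈ (G.extend x S).verts :=
  Finset.mem_insert_of_mem hv

lemma extend_nbhd_of_notMem (hvx : v ≠ x) (hvS : v ∉ S) : (G.extend x S).nbhd v = G.nbhd v := by
  ext b
  simp [extend, nbhd, hvx, hvS]

lemma extend_nbhd_of_mem (hvx : v ≠ x) (hvS : v ∈ S) :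
    (G.extend x S).nbhd v = insert x (G.nbhd v) := by
  ext b
  simp [extend, nbhd, hvx, hvS, or_comm]

lemma extend_nbhd_sdiff_new (hvx : v ≠ x) : (G.extend x S).nbhd v \ {x} = G.nbhd v \ {x} := by
  by_cases hvS : v ∈ S
  · rw [extend_nbhd_of_mem hvx hvS, Set.insert_sdiff_of_mem _ (Set.mem_singleton x)]
  · rw [extend_nbhd_of_notMem hvx hvS]

lemma extend_nbhd_new (hG : G.IsGraph) (hx : x ∉ G.verts) (hxS : x ∉ S) :
    (G.extend x S).nbhd x = S := by
  have hxb : ∀ b, ¬ G.Adj x b := fun b h => hx (hG.2.2 _ _ h).1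
  ext b
  by_cases hbx : b = x
  · subst hbx
    simp [extend, nbhd, hxb, hxS]
  · simp [extend, nbhd, hxb, hbx]

lemma IsLeaf.extend (hx : x ∉ G.verts) (hl : G.IsLeaf v) (hvS : v ∉ S) :
    (G.extend x S).IsLeaf v := by
  obtain ⟨hv, w, hw⟩ := hl
  have hvx : v ≠ x := fun h => hx (h ▸ hv)
  exact ⟨mem_extend_verts_of_mem hv, w, by rw [extend_nbhd_of_notMem hvx hvS, hw]⟩

lemma Twins.extend (hx : x ∉ G.verts) (hv : v ∈ G.verts) (hw : w ∈ G.verts) (h : G.Twins v w)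
    (hS : v ∈ S ↔ w ∈ S) : (G.extend x S).Twins v w := by
  have hvx : v ≠ x := fun h => hx (h ▸ hv)
  have hwx : w ≠ x := fun h => hx (h ▸ hw)
  by_cases hvS : v ∈ S
  · rw [Twins, extend_nbhd_of_mem hvx hvS, extend_nbhd_of_mem hwx (hS.mp hvS)]
    exact Set.insert_sdiff_singleton_eq h hwx.symm hvx.symm
  · rw [Twins, extend_nbhd_of_notMem hvx hvS, extend_nbhd_of_notMem hwx (hS.not.mp hvS)]
    exact h

lemma twins_extend_new (hG : G.IsGraph) (hx : x ∉ G.verts) (hu : u ∈ G.verts)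
    (hS : S \ {u} = G.nbhd u) (hxS : x ∉ S) : (G.extend x S).Twins x u := by
  have hux : u ≠ x := fun h => hx (h ▸ hu)
  have hxu : x ∉ G.nbhd u := fun h => hx (hG.2.2 _ _ h).2
  rw [Twins, extend_nbhd_new hG hx hxS, extend_nbhd_sdiff_new hux, hS,
    Set.sdiff_singleton_eq_self hxu]

lemma IsLeaf.mem_foliage_extend (hx : x ∉ G.verts) (hl : G.IsLeaf v) (hvS : v ∉ S) :
    v ∈ (G.extend x S).foliage :=
  mem_foliage.mpr ⟨mem_extend_verts_of_mem hl.1, .inl (hl.extend hx hvS)⟩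

lemma Twins.adj_iff_of_ne (hG : G.IsGraph) (h : G.Twins v w) (hvu : v ≠ u) (hwu : w ≠ u) :
    G.Adj u v ↔ G.Adj u w := by
  rw [hG.adj_comm, hG.adj_comm (v := u)]
  exact h.adj_iff hvu.symm hwu.symm

/-! The neighbourhood `S` of the new vertex `x` is `{u}` when a leaf is added at `u`, and satisfies
`S \ {u} = N_u` for a false (`S = N_u`) or true (`S = N_u ∪ {u}`) twin-split at `u`. -/

lemma subset_nbhd_union_singleton (hS : S = {u} ∨ S \ {u} = G.nbhd u) :
    S ⊆ G.nbhd u ∪ {u} := by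
  rcases hS with rfl | hS
  · exact Set.subset_union_right
  · rw [← hS, Set.sdiff_union_self]
    exact Set.subset_union_left

lemma mem_iff_mem_of_adj_iff (hS : S = {u} ∨ S \ {u} = G.nbhd u) (hvu : v ≠ u) (hwu : w ≠ u)
    (h : G.Adj u v ↔ G.Adj u w) : v ∈ S ↔ w ∈ S := by
  rcases hS with rfl | hS
  · simp [hvu, hwu]
  · have hmem : ∀ a, a ≠ u → (a ∈ S ↔ a ∈ G.nbhd u) := fun a ha => by simp [← hS, ha]
    rw [hmem v hvu, hmem w hwu]
    exact h

lemma mem_foliage_extend_new (hG : G.IsGraph) (hu : u ∈ G.verts) (hx : x ∉ G.verts)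
    (hS : S = {u} ∨ S \ {u} = G.nbhd u) :
    x ∈ (G.extend x S).foliage ∧ u ∈ (G.extend x S).foliage := by
  have hxu : x ≠ u := fun h => hx (h ▸ hu)
  have hxV : x ∈ (G.extend x S).verts := Finset.mem_insert_self x _
  have huV : u ∈ (G.extend x S).verts := mem_extend_verts_of_mem hu
  have hxS : x ∉ S := fun hxS => (subset_nbhd_union_singleton hS hxS).elim
    (fun h => hx (hG.2.2 _ _ h).2) hxu
  rcases hS with rfl | hS
  · have hxLeaf : (G.extend x {u}).IsLeaf x := ⟨hxV, u, extend_nbhd_new hG hx hxS⟩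
    exact ⟨mem_foliage.mpr ⟨hxV, .inl hxLeaf⟩,
      mem_foliage.mpr ⟨huV, .inr <| .inl ⟨x, hxLeaf, .inr <| .inl ⟨rfl, rfl⟩⟩⟩⟩
  · have htw := twins_extend_new hG hx hu hS hxS
    exact ⟨mem_foliage.mpr ⟨hxV, .inr <| .inr <| htw.isTwin hxV huV hxu.symm⟩,
      mem_foliage.mpr ⟨huV, .inr <| .inr <| htw.symm.isTwin huV hxV hxu⟩⟩

lemma Twins.mem_foliage_extend (hG : G.IsGraph) (hx : x ∉ G.verts)
    (hS : S = {u} ∨ S \ {u} = G.nbhd u) (hv : v ∈ G.verts) (hw : w ∈ G.verts) (hwv : w ≠ v)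
    (hvu : v ≠ u) (hwu : w ≠ u) (h : G.Twins v w) : v ∈ (G.extend x S).foliage :=
  mem_foliage.mpr ⟨mem_extend_verts_of_mem hv, .inr <| .inr <|
    (h.extend hx hv hw (mem_iff_mem_of_adj_iff hS hvu hwu (h.adj_iff_of_ne hG hvu hwu))).isTwin
      (mem_extend_verts_of_mem hv) (mem_extend_verts_of_mem hw) hwv⟩

lemma nbhd_eq_singleton_or_twins_of_mem_foliage_sdiff (hG : G.IsGraph) (hu : u ∈ G.verts)
    (hx : x ∉ G.verts) (hS : S = {u} ∨ S \ {u} = G.nbhd u)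
    (hv : v ∈ G.foliage \ (G.extend x S).foliage) :
    v ≠ u ∧ (G.nbhd v = {u} ∨ G.nbhd u = {v} ∨ G.Twins v u) := by
  obtain ⟨hvT, hvT'⟩ := Finset.mem_sdiff.mp hv
  have hvu : v ≠ u := by rintro rfl; exact hvT' (mem_foliage_extend_new hG hu hx hS).2
  have hSu := subset_nbhd_union_singleton hS
  refine ⟨hvu, ?_⟩
  obtain ⟨hvV, hleaf | ⟨l, hl, hlv⟩ | ⟨-, w, hwv, hwV, hvw⟩⟩ := mem_foliage.mp hvT
  · have hvS : v ∈ S := by_contra fun hvS => hvT' (hleaf.mem_foliage_extend hx hvS)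
    have hvu : G.Adj v u := hG.adj_comm.mp ((hSu hvS).resolve_right hvu)
    obtain ⟨-, w, hw⟩ := hleaf
    rw [hw, ← (adj_iff_of_nbhd_eq_singleton hw).mp hvu]
    exact .inl rfl
  · have hlS : l ∈ S := by
      by_contra hlS
      exact hvT' (mem_foliage.mpr ⟨mem_extend_verts_of_mem hvV, .inr <| .inl
        ⟨l, hl.extend hx hlS, .inl hlv⟩⟩)
    obtain ⟨-, w, hw⟩ := hl
    rcases hSu hlS with hul | rfl
    · -- the leaf `l` hangs at `u`, so its axil `v` would be `u`
      have h₁ := (adj_iff_of_nbhd_eq_singleton hw).mp (hG.adj_comm.mp hul)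
      have h₂ := (adj_iff_of_nbhd_eq_singleton hw).mp hlv
      exact absurd (h₂.trans h₁.symm) hvu
    · rw [hw, (adj_iff_of_nbhd_eq_singleton hw).mp hlv]
      exact .inr (.inl rfl)
  · by_cases hwu : w = u
    · exact .inr (.inr (hwu ▸ hvw))
    · exact absurd (Twins.mem_foliage_extend hG hx hS hvV hwV hwv hvu hwu hvw) hvT'

lemma eq_of_mem_foliage_sdiff_extend (hG : G.IsGraph) (hu : u ∈ G.verts) (hx : x ∉ G.verts)
    (hS : S = {u} ∨ S \ {u} = G.nbhd u) (hv : v ∈ G.foliage \ (G.extend x S).foliage)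
    (hw : w ∈ G.foliage \ (G.extend x S).foliage) : v = w := by
  have verts_of_lost : ∀ {a}, a ∈ G.foliage \ (G.extend x S).foliage → a ∈ G.verts :=
    fun ha => (mem_foliage.mp (Finset.mem_sdiff.mp ha).1).1
  have twins_eq : G.Twins v w → v ≠ u → w ≠ u → v = w := fun h hvu hwu =>
    by_contra fun hvw => (Finset.mem_sdiff.mp hv).2 <|
      Twins.mem_foliage_extend hG hx hS (verts_of_lost hv) (verts_of_lost hw) (Ne.symm hvw) hvu
        hwu h
  -- a twin `b` of the leaf `u` other than its neighbour `a` is a leaf outside `S`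
  have axil_eq : ∀ {a b}, G.nbhd u = {a} → G.Twins b u → b ≠ u →
      b ∈ G.foliage \ (G.extend x S).foliage → a = b := by
    intro a b hu hb hbu hbT
    by_contra hab
    have hbS : b ∉ S := fun hbS => (subset_nbhd_union_singleton hS hbS).elim
      (fun h => hab ((adj_iff_of_nbhd_eq_singleton hu).mp h).symm) hbu
    exact (Finset.mem_sdiff.mp hbT).2 <| IsLeaf.mem_foliage_extend hx
      ⟨verts_of_lost hbT, a, hb.nbhd_eq_singleton hG hu (Ne.symm hab)⟩ hbS
  obtain ⟨hvu, hv' | hv' | hv'⟩ :=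
    nbhd_eq_singleton_or_twins_of_mem_foliage_sdiff hG hu hx hS hv <;>
  obtain ⟨hwu, hw' | hw' | hw'⟩ :=
    nbhd_eq_singleton_or_twins_of_mem_foliage_sdiff hG hu hx hS hw
  · exact twins_eq (twins_of_nbhd_eq hG.2.1 (hv'.trans hw'.symm)) hvu hwu
  · exact eq_of_nbhd_eq_singleton hG hv' hw'
  · exact hw'.eq_of_nbhd_eq_singleton hG hwu hv'
  · exact (eq_of_nbhd_eq_singleton hG hw' hv').symm
  · exact Set.singleton_injective (hv'.symm.trans hw')
  · exact axil_eq hv' hw' hwu hw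
  · exact (hv'.eq_of_nbhd_eq_singleton hG hvu hw').symm
  · exact (axil_eq hw' hv' hvu hv).symm
  · exact twins_eq (hv'.trans hG hw'.symm) hvu hwu

theorem card_foliage_le_extend (hG : G.IsGraph) (hu : u ∈ G.verts) (hx : x ∉ G.verts)
    (hS : S = {u} ∨ S \ {u} = G.nbhd u) : G.foliage.card ≤ (G.extend x S).foliage.card := by
  have hxT := (mem_foliage_extend_new hG hu hx hS).1
  refine Finset.card_sdiff_le_card_sdiff_iff.mp (le_trans (b := 1) ?_ ?_)
  · exact Finset.card_le_one.mpr fun _ hv _ hw => eq_of_mem_foliage_sdiff_extend hG hu hx hS hv hw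
  · exact Finset.card_pos.mpr
      ⟨x, Finset.mem_sdiff.mpr ⟨hxT, fun h => hx (mem_foliage.mp h).1⟩⟩

end LGraph

theorem foliage_card_mono_general (G : LGraph V) (hG : G.IsGraph) (u x : V) (hu : u ∈ G.verts)
    (hx : x ∉ G.verts) (G' : LGraph V)
    (h : G' = G.addLeaf u x ∨ G' = G.falseTwinSplit u x ∨ G' = G.trueTwinSplit u x) :
    G.foliage.card ≤ G'.foliage.card := by
  have hnbhd : G.nbhd u \ {u} = G.nbhd u := Set.sdiff_singleton_eq_self (hG.2.1 u)
  rcases h with rfl | rfl | rfl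
  · rw [LGraph.addLeaf_eq_extend]
    exact LGraph.card_foliage_le_extend hG hu hx (.inl rfl)
  · rw [LGraph.falseTwinSplit_eq_extend]
    exact LGraph.card_foliage_le_extend hG hu hx (.inr hnbhd)
  · rw [LGraph.trueTwinSplit_eq_extend]
    exact LGraph.card_foliage_le_extend hG hu hx (.inr (by rw [Set.union_sdiff_right, hnbhd]))

/-- adding a leaf or performing a (true or false) twin-split on
a connected distance-hereditary graph does not decrease the size of the
foliage. -/
theorem foliage_card_mono (G : LGraph V) (hG : G.IsGraph) (hconn : G.Connected)
    (hdh : G.DistanceHereditary) (u x : V) (hu : u ∈ G.verts) (hx : x ∉ G.verts)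
    (G' : LGraph V)
    (h : G' = G.addLeaf u x ∨ G' = G.falseTwinSplit u x ∨ G' = G.trueTwinSplit u x) :
    G.foliage.card ≤ G'.foliage.card :=
  foliage_card_mono_general G hG u x hu hx G' h
end
end

section
/- Let G be a connected distance-hereditary graph and let v ∈ V(G) be a cut-vertex, i.e., a vertex such that G\v has strictly more connected components than G. Then every connected component of G\v contains a vertex belonging to the foliage T(G). -/
universe u v w

attribute [local instance 10] Classical.propDecidable

noncomputable section

variable {V : Type u} {E : Type v} {W : Type w}

/-- The number of connected components: the number of distinct reachability
classes of vertices. -/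
def LGraph.numComponents (G : LGraph V) : ℕ :=
  (G.verts.image fun x => G.verts.filter fun u => Relation.ReflTransGen G.Adj x u).card

/-! ### Auxiliary infrastructure for the proof -/

namespace LGraph

variable {G : LGraph V}

/-- The set of walk lengths between `a` and `b`. -/
def chainLens (G : LGraph V) (a b : V) : Set ℕ :=
  {n | ∃ vs : List V, vs.Chain' G.Adj ∧ (∀ x ∈ vs, x ∈ G.verts) ∧
    vs.head? = some a ∧ vs.getLast? = some b ∧ vs.length = n + 1}

lemma dist_eq_sInf (a b : V) : G.dist a b = sInf (G.chainLens a b) := rfl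

lemma dist_le' {a b : V} {n : ℕ} (h : n ∈ G.chainLens a b) : G.dist a b ≤ n :=
  Nat.sInf_le h

lemma singleton_mem_chainLens {a : V} (ha : a ∈ G.verts) : 0 ∈ G.chainLens a a :=
  ⟨[a], List.isChain_singleton _, by simp [ha], by simp, by simp, by simp⟩

lemma chainLens_nonempty_of_reach (hG : G.IsGraph) {a b : V} (ha : a ∈ G.verts)
    (h : Relation.ReflTransGen G.Adj a b) : (G.chainLens a b).Nonempty := by
  induction h with
  | refl => exact ⟨0, singleton_mem_chainLens ha⟩
  | @tail b c hr hadj ih =>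
    obtain ⟨n, vs, h1, h2, h3, h4, h5⟩ := ih
    have hvsne : vs ≠ [] := by
      intro h; subst h; simp at h3
    refine ⟨n + 1, vs ++ [c], ?_, ?_, ?_, ?_, ?_⟩
    · rw [List.Chain', List.isChain_append]
      refine ⟨h1, by simp, ?_⟩
      intro x hx y hy
      rw [h4] at hx
      simp at hx hy
      subst hx; subst hy; exact hadj
    · intro x hx
      rcases List.mem_append.1 hx with h | h
      · exact h2 x h
      · simp at h; subst h; exact (hG.2.2 _ _ hadj).2
    · rw [List.head?_append_of_ne_nil _ hvsne]; exact h3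
    · simp
    · simp [h5]

lemma exists_min_chain {a b : V} (h : (G.chainLens a b).Nonempty) :
    G.dist a b ∈ G.chainLens a b := Nat.sInf_mem h

lemma dist_self {a : V} (ha : a ∈ G.verts) : G.dist a a = 0 :=
  Nat.le_zero.1 (dist_le' (singleton_mem_chainLens ha))

lemma eq_of_dist_eq_zero {a b : V} (hne : (G.chainLens a b).Nonempty)
    (h : G.dist a b = 0) : a = b := by
  obtain ⟨vs, h1, h2, h3, h4, h5⟩ := exists_min_chain hne
  rw [h] at h5
  obtain ⟨x, rfl⟩ := List.length_eq_one_iff.1 h5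
  simp at h3 h4
  subst h3; subst h4; rfl

lemma adj_of_dist_eq_one (hne : (G.chainLens a b).Nonempty)
    (h : G.dist a b = 1) : G.Adj a b := by
  obtain ⟨vs, h1, h2, h3, h4, h5⟩ := exists_min_chain hne
  rw [h] at h5
  match vs, h5 with
  | [x, y], _ =>
    simp at h3 h4
    subst h3; subst h4
    exact (List.isChain_cons_cons.1 h1).1

lemma chainLens_snoc {a b c : V} (h : (G.chainLens a b).Nonempty)
    (hadj : G.Adj b c) (hc : c ∈ G.verts) {n : ℕ} (hn : n ∈ G.chainLens a b) :
    n + 1 ∈ G.chainLens a c := by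
  obtain ⟨vs, h1, h2, h3, h4, h5⟩ := hn
  have hvsne : vs ≠ [] := by intro h; subst h; simp at h3
  refine ⟨vs ++ [c], ?_, ?_, ?_, ?_, ?_⟩
  · rw [List.Chain', List.isChain_append]
    refine ⟨h1, by simp, ?_⟩
    intro x hx y hy
    rw [h4] at hx
    simp at hx hy
    subst hx; subst hy; exact hadj
  · intro x hx
    rcases List.mem_append.1 hx with h | h
    · exact h2 x h
    · simp at h; subst h; exact hc
  · rw [List.head?_append_of_ne_nil _ hvsne]; exact h3
  · simp
  · simp [h5]

lemma dist_le_dist_add_one {a b c : V} (hne : (G.chainLens a b).Nonempty)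
    (hadj : G.Adj b c) (hc : c ∈ G.verts) : G.dist a c ≤ G.dist a b + 1 :=
  dist_le' (chainLens_snoc hne hadj hc (exists_min_chain hne))

lemma exists_penultimate (hG : G.IsGraph) {a c : V} {n : ℕ}
    (hne : (G.chainLens a c).Nonempty) (h : G.dist a c = n + 1) :
    ∃ p, G.Adj p c ∧ p ∈ G.verts ∧ (G.chainLens a p).Nonempty ∧ G.dist a p = n := by
  obtain ⟨vs, h1, h2, h3, h4, h5⟩ := exists_min_chain hne
  rw [h] at h5
  have hvsne : vs ≠ [] := by intro hh; subst hh; simp at h5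
  have hc : c = vs.getLast hvsne := by
    rw [List.getLast?_eq_getLast hvsne] at h4
    exact (Option.some_inj.1 h4).symm
  have hsplit : vs.dropLast ++ [c] = vs := by
    rw [hc]; exact List.dropLast_append_getLast hvsne
  have hwsne : vs.dropLast ≠ [] := by
    intro hh
    have := congrArg List.length hsplit
    rw [hh] at this; simp at this; omega
  set p := vs.dropLast.getLast hwsne with hp
  have hchain : vs.dropLast.Chain' G.Adj ∧ G.Adj p c := by
    rw [← hsplit] at h1
    rw [List.Chain', List.isChain_append] at h1
    refine ⟨h1.1, ?_⟩
    refine h1.2.2 p ?_ c (by simp)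
    rw [List.getLast?_eq_getLast hwsne]; simp [hp]
  have hmem : ∀ x ∈ vs.dropLast, x ∈ G.verts := by
    intro x hx
    exact h2 x (by rw [← hsplit]; exact List.mem_append.2 (Or.inl hx))
  have hhead : vs.dropLast.head? = some a := by
    rw [← hsplit] at h3
    rwa [List.head?_append_of_ne_nil _ hwsne] at h3
  have hlen : vs.dropLast.length = n + 1 := by
    rw [List.length_dropLast, h5]; omega
  have hnp : n ∈ G.chainLens a p :=
    ⟨vs.dropLast, hchain.1, hmem, hhead, by rw [List.getLast?_eq_getLast hwsne], hlen⟩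
  have hple : G.dist a p ≤ n := dist_le' hnp
  have hpge : n ≤ G.dist a p := by
    have := dist_le_dist_add_one ⟨n, hnp⟩ hchain.2 (hG.2.2 _ _ hchain.2).2
    omega
  exact ⟨p, hchain.2, hmem p (List.getLast_mem hwsne), ⟨n, hnp⟩, le_antisymm hple hpge⟩

lemma exists_geodesic (hG : G.IsGraph) {v : V} (hv : v ∈ G.verts) :
    ∀ (n : ℕ) {c : V}, (G.chainLens v c).Nonempty → G.dist v c = n →
    ∃ vs : List V, vs.Chain' G.Adj ∧ (∀ x ∈ vs, x ∈ G.verts) ∧ vs.head? = some v ∧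
      vs.getLast? = some c ∧ vs.length = n + 1 ∧
      ∀ i (hi : i < vs.length), G.dist v vs[i] = i := by
  intro n
  induction n with
  | zero =>
    intro c hne hd
    have : v = c := eq_of_dist_eq_zero hne hd
    subst this
    exact ⟨[v], List.isChain_singleton _, by simp [hv], by simp, by simp, by simp, by
      intro i hi; simp at hi; subst hi; simpa using dist_self hv⟩
  | succ n ih =>
    intro c hne hd
    obtain ⟨p, hadj, hpv, hpne, hpd⟩ := exists_penultimate hG hne hd
    obtain ⟨ws, w1, w2, w3, w4, w5, w6⟩ := ih hpne hpd
    have hwsne : ws ≠ [] := by intro hh; subst hh; simp at w3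
    refine ⟨ws ++ [c], ?_, ?_, ?_, by simp, by simp [w5], ?_⟩
    · rw [List.Chain', List.isChain_append]
      refine ⟨w1, by simp, ?_⟩
      intro x hx y hy
      rw [w4] at hx; simp at hx hy; subst hx; subst hy; exact hadj
    · intro x hx
      rcases List.mem_append.1 hx with h | h
      · exact w2 x h
      · simp at h; subst h
        have := hG.2.2 _ _ hadj; exact this.2
    · rw [List.head?_append_of_ne_nil _ hwsne]; exact w3
    · intro i hi
      simp at hi
      rw [w5] at hi
      rcases Nat.lt_or_ge i (n + 1) with hlt | hge
      · rw [List.getElem_append_left (by omega)]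
        exact w6 i (by omega)
      · have hieq : i = n + 1 := by omega
        subst hieq
        have : (ws ++ [c])[n+1]'(by simp; omega) = c := by
          rw [List.getElem_append_right (by omega)]
          simp [w5]
        rw [this, hd]

lemma reach_of_chain' {R : V → V → Prop} (l : List V) (hc : l.Chain' R) :
    ∀ (j : ℕ) (hj : j < l.length) (i : ℕ) (hij : i ≤ j),
      Relation.ReflTransGen R (l[i]'(Nat.lt_of_le_of_lt hij hj)) l[j] := by
  intro j
  induction j with
  | zero => intro hj i hi; interval_cases i; exact Relation.ReflTransGen.refl
  | succ j ihj =>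
    intro hj i hi
    rcases Nat.lt_or_ge i (j + 1) with hlt | hge
    · have hstep : R l[j] l[j+1] := by
        have := List.isChain_iff_getElem.1 hc j (by omega)
        simpa using this
      exact Relation.ReflTransGen.tail (ihj (by omega) i (by omega)) hstep
    · have : i = j + 1 := by omega
      subst this; exact Relation.ReflTransGen.refl

lemma chain_head_last_bound {R : V → V → Prop} (f : V → ℕ)
    (hstep : ∀ x y, R x y → f y ≤ f x + 1 ∧ f x ≤ f y + 1) :
    ∀ (l : List V), l.Chain' R → ∀ a b, l.head? = some a → l.getLast? = some b →
      f b ≤ f a + (l.length - 1) ∧ f a ≤ f b + (l.length - 1) := by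
  intro l
  induction l with
  | nil => intro _ a b ha; simp at ha
  | cons x t iht =>
    intro hc a b ha hb
    cases t with
    | nil =>
      simp at ha hb; subst ha; subst hb; simp
    | cons y t' =>
      have hxy : R x y := (List.isChain_cons_cons.1 hc).1
      have hrec := iht (List.isChain_cons_cons.1 hc).2 y b rfl
        (by rwa [List.getLast?_cons_cons] at hb)
      simp at ha; subst ha
      have := hstep _ _ hxy
      simp only [List.length_cons] at hrec ⊢
      omega

lemma dist_eq_of_inducedPath (hG : G.IsGraph) (hdh : G.DistanceHereditary)
    {vs : List V} (h1 : vs.Chain' G.Adj) (h2 : ∀ x ∈ vs, x ∈ G.verts)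
    (h3 : vs.Nodup)
    (h4 : ∀ (i j : ℕ) (hi : i < vs.length) (hj : j < vs.length), i + 2 ≤ j →
      ¬ G.Adj vs[i] vs[j])
    {a b : V} (ha : vs.head? = some a) (hb : vs.getLast? = some b) :
    G.dist a b + 1 = vs.length := by
  classical
  have hvsne : vs ≠ [] := by intro hh; subst hh; simp at ha
  have hamem : a ∈ vs := by
    cases vs with
    | nil => simp at ha
    | cons x t => simp at ha; subst ha; exact List.mem_cons_self
  have hbeq : b = vs.getLast hvsne := by
    rw [List.getLast?_eq_getLast hvsne] at hb
    exact (Option.some_inj.1 hb).symm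
  have hbmem : b ∈ vs := hbeq ▸ List.getLast_mem hvsne
  set n := vs.length - 1 with hn
  have hlen : vs.length = n + 1 := by
    have := List.length_pos_iff.2 hvsne; omega
  set A := vs.toFinset with hA
  have hAsub : A ⊆ G.verts := by
    intro x hx; exact h2 x (List.mem_toFinset.1 hx)
  set H := G.induce A with hH
  have hHverts : ∀ x ∈ vs, x ∈ H.verts := by
    intro x hx
    exact Finset.mem_inter.2 ⟨h2 x hx, List.mem_toFinset.2 hx⟩
  have hHadj : ∀ x y, H.Adj x y ↔ (G.Adj x y ∧ x ∈ A ∧ y ∈ A) := fun _ _ => Iff.rfl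
  have chainH : vs.Chain' H.Adj := by
    rw [List.Chain', List.isChain_iff_getElem]
    intro i hi
    refine ⟨?_, ?_, ?_⟩
    · simpa using List.isChain_iff_getElem.1 h1 i hi
    · exact List.mem_toFinset.2 (List.getElem_mem _)
    · exact List.mem_toFinset.2 (List.getElem_mem _)
  have hHsymm : Symmetric H.Adj := by
    intro x y hxy
    exact ⟨hG.1 _ _ hxy.1, hxy.2.2, hxy.2.1⟩
  have hHconn : H.Connected := by
    constructor
    · exact ⟨a, hHverts a hamem⟩
    · intro x hx y hy
      have hxA : x ∈ vs := List.mem_toFinset.1 (Finset.mem_inter.1 hx).2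
      have hyA : y ∈ vs := List.mem_toFinset.1 (Finset.mem_inter.1 hy).2
      obtain ⟨i, hi, rfl⟩ := List.mem_iff_getElem.1 hxA
      obtain ⟨j, hj, rfl⟩ := List.mem_iff_getElem.1 hyA
      rcases le_or_gt i j with hle | hlt
      · exact reach_of_chain' vs chainH j hj i hle
      · exact (@Relation.ReflTransGen.symmetric _ _ ⟨fun _ _ h' => hHsymm h'⟩).symm _ _
          (reach_of_chain' vs chainH i hi j (by omega))
  have hchainH : (n : ℕ) ∈ H.chainLens a b :=
    ⟨vs, chainH, hHverts, ha, hb, by omega⟩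
  have hmle : H.dist a b ≤ n := dist_le' hchainH
  have hmge : n ≤ H.dist a b := by
    obtain ⟨ws, w1, w2, w3, w4, w5⟩ := exists_min_chain ⟨n, hchainH⟩
    set f : V → ℕ := fun x => vs.idxOf x with hf
    have hstep : ∀ x y, H.Adj x y → f y ≤ f x + 1 ∧ f x ≤ f y + 1 := by
      intro x y hxy
      simp only [hf]
      have hxv : x ∈ vs := List.mem_toFinset.1 hxy.2.1
      have hyv : y ∈ vs := List.mem_toFinset.1 hxy.2.2
      have hxi : vs.idxOf x < vs.length := List.idxOf_lt_length_iff.2 hxv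
      have hyi : vs.idxOf y < vs.length := List.idxOf_lt_length_iff.2 hyv
      have hgx : vs[vs.idxOf x] = x := List.getElem_idxOf hxi
      have hgy : vs[vs.idxOf y] = y := List.getElem_idxOf hyi
      have hxyne : x ≠ y := by
        intro hh; subst hh; exact hG.2.1 x hxy.1
      have hine : vs.idxOf x ≠ vs.idxOf y := by
        intro hh
        exact hxyne ((List.idxOf_inj hxv).1 hh)
      rcases Nat.lt_or_ge (vs.idxOf x) (vs.idxOf y) with hlt | hge
      · have : vs.idxOf y ≤ vs.idxOf x + 1 := by
          by_contra hcon
          exact h4 _ _ hxi hyi (by omega) (by rw [hgx, hgy]; exact hxy.1)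
        constructor <;> omega
      · have hlt : vs.idxOf y < vs.idxOf x := by omega
        have : vs.idxOf x ≤ vs.idxOf y + 1 := by
          by_contra hcon
          exact h4 _ _ hyi hxi (by omega)
            (by rw [hgx, hgy]; exact hG.1 _ _ hxy.1)
        constructor <;> omega
    have hbound := chain_head_last_bound f hstep ws w1 a b w3 w4
    have hfa : f a = 0 := by
      cases vs with
      | nil => simp at ha
      | cons x t =>
        simp at ha; subst ha
        simp [hf, List.idxOf_cons_self]
    have hfb : f b = n := by
      have hbn : vs[n]'(by omega) = b := by
        rw [hbeq, List.getLast_eq_getElem]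
      have hbi : vs.idxOf b < vs.length := List.idxOf_lt_length_iff.2 hbmem
      have hgb : vs[vs.idxOf b] = b := List.getElem_idxOf hbi
      have := (List.Nodup.getElem_inj_iff h3).1 (hgb.trans hbn.symm)
      simpa [hf] using this
    simp only [hfa, hfb] at hbound
    omega
  have hdd := hdh A hAsub hHconn a (List.mem_toFinset.2 hamem) b (List.mem_toFinset.2 hbmem)
  rw [← hH] at hdd
  omega

lemma dist_eq_two_of (hG : G.IsGraph) {a b w : V} (hab : a ≠ b) (hnadj : ¬ G.Adj a b)
    (h1 : G.Adj a w) (h2 : G.Adj w b) : G.dist a b = 2 := by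
  have hc : (2:ℕ) ∈ G.chainLens a b := by
    refine ⟨[a, w, b], ?_, ?_, by simp, by simp, by simp⟩
    · simp [List.Chain', h1, h2]
    · intro x hx
      simp at hx
      rcases hx with rfl | rfl | rfl
      exacts [(hG.2.2 _ _ h1).1, (hG.2.2 _ _ h1).2, (hG.2.2 _ _ h2).2]
  have hle := dist_le' hc
  have hne : (G.chainLens a b).Nonempty := ⟨2, hc⟩
  have h0 : G.dist a b ≠ 0 := fun h => hab (eq_of_dist_eq_zero hne h)
  have h1' : G.dist a b ≠ 1 := fun h => hnadj (adj_of_dist_eq_one hne h)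
  omega

lemma dist_le_of_adj (hG : G.IsGraph) {v a b : V}
    (hne : (G.chainLens v a).Nonempty) (hadj : G.Adj a b) :
    G.dist v b ≤ G.dist v a + 1 :=
  dist_le_dist_add_one hne hadj (hG.2.2 _ _ hadj).2

/-- Appending a "hanging" tail to a geodesic yields an induced path; its length
is then the distance between the endpoints. -/
lemma dist_of_geodesic_append (hG : G.IsGraph) (hdh : G.DistanceHereditary)
    {v : V} (hv : v ∈ G.verts)
    (hr : ∀ x ∈ G.verts, (G.chainLens v x).Nonempty)
    {z : V} {i : ℕ} (hzv : z ∈ G.verts) (hz : G.dist v z = i)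
    {ts : List V} (htsne : ts ≠ [])
    (hts1 : (z :: ts).Chain' G.Adj)
    (hts2 : ∀ t ∈ ts, t ∈ G.verts)
    (hts3 : ∀ t ∈ ts, i + 1 ≤ G.dist v t)
    (hts4 : ∀ t ∈ ts.tail, ¬ G.Adj z t)
    (hts5 : ts.Nodup)
    (hts6 : ∀ (p q : ℕ) (hp : p < ts.length) (hq : q < ts.length), p + 2 ≤ q →
      ¬ G.Adj ts[p] ts[q])
    {b : V} (hlast : ts.getLast? = some b) :
    G.dist v b = i + ts.length := by
  obtain ⟨ws, w1, w2, w3, w4, w5, w6⟩ := exists_geodesic hG hv i (hr z hzv) hz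
  have hwlvl : ∀ (k : ℕ) (hk : k < ws.length), G.dist v ws[k] = k := w6
  have hwsne : ws ≠ [] := by intro hh; subst hh; simp at w3
  have hwlast : ws[i]'(by omega) = z := by
    have := List.getLast?_eq_getLast hwsne
    rw [this] at w4
    have h5 : ws.getLast hwsne = ws[ws.length - 1]'(by omega) := List.getLast_eq_getElem _
    have : z = ws[ws.length - 1]'(by omega) := by rw [← h5]; exact (Option.some_inj.1 w4).symm
    rw [this]
    congr 1
    omega
  -- membership index lemma for ws
  have hmemws : ∀ x ∈ ws, G.dist v x ≤ i := by
    intro x hx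
    obtain ⟨k, hk, rfl⟩ := List.mem_iff_getElem.1 hx
    rw [hwlvl k hk]; omega
  have htscases : ∀ (q : ℕ) (hq : q < ts.length), 1 ≤ q → ts[q] ∈ ts.tail := by
    intro q hq h1q
    have : ts.tail = ts.drop 1 := List.drop_one.symm
    rw [this]
    have hq' : q - 1 < (ts.drop 1).length := by simp; omega
    have : (ts.drop 1)[q-1] = ts[q] := by
      rw [List.getElem_drop]
      congr 1; omega
    rw [← this]
    exact List.getElem_mem _
  have key := dist_eq_of_inducedPath (vs := ws ++ ts) hG hdh ?_ ?_ ?_ ?_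
    (a := v) (b := b) ?_ ?_
  · rw [List.length_append, w5] at key
    omega
  · -- Chain'
    rw [List.Chain', List.isChain_append]
    refine ⟨w1, ?_, ?_⟩
    · cases ts with
      | nil => simp
      | cons t0 t => exact (List.isChain_cons_cons.1 hts1).2
    · intro x hx y hy
      rw [w4] at hx
      simp at hx; subst hx
      cases ts with
      | nil => simp at hy
      | cons t0 t =>
        simp at hy; subst hy
        exact (List.isChain_cons_cons.1 hts1).1
  · intro x hx
    rcases List.mem_append.1 hx with h | h
    exacts [w2 x h, hts2 x h]
  · -- Nodup
    refine List.Nodup.append ?_ hts5 ?_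
    · rw [List.nodup_iff_injective_get]
      intro ⟨k1, hk1⟩ ⟨k2, hk2⟩ hkk
      simp only [List.get_eq_getElem] at hkk
      have e1 := hwlvl k1 hk1
      have e2 := hwlvl k2 hk2
      rw [hkk] at e1
      rw [e2] at e1
      exact Fin.ext e1.symm
    · intro x hx1 hx2
      have := hmemws x hx1
      have := hts3 x hx2
      omega
  · -- induced
    intro p q hp hq hpq
    rw [List.length_append] at hp hq
    rcases Nat.lt_or_ge q ws.length with hqws | hqts
    · -- both in ws
      have hpws : p < ws.length := by omega
      have e_p : (ws ++ ts)[p]'(by rw [List.length_append]; omega) = ws[p]'hpws :=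
        List.getElem_append_left hpws
      have e_q : (ws ++ ts)[q]'(by rw [List.length_append]; omega) = ws[q]'hqws :=
        List.getElem_append_left hqws
      rw [e_p, e_q]
      intro hadj
      have h5 := dist_le_of_adj hG (hr _ (w2 _ (List.getElem_mem hpws))) hadj
      rw [hwlvl p (by omega), hwlvl q (by omega)] at h5
      omega
    · have hqlt : q - ws.length < ts.length := by omega
      have e_q : (ws ++ ts)[q]'(by rw [List.length_append]; omega) =
          ts[q - ws.length]'hqlt := List.getElem_append_right hqts
      rcases Nat.lt_or_ge p ws.length with hpws | hpts
      · have e_p : (ws ++ ts)[p]'(by rw [List.length_append]; omega) = ws[p]'hpws :=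
          List.getElem_append_left hpws
        rw [e_p, e_q]
        intro hadj
        have hlvlq := hts3 _ (List.getElem_mem hqlt)
        have h5 := dist_le_of_adj hG (hr _ (w2 _ (List.getElem_mem hpws))) hadj
        rw [hwlvl p (by omega)] at h5
        -- so p ≥ i, hence p = i and ws[p] = z
        have hpi : p = i := by omega
        have hq1 : 1 ≤ q - ws.length := by omega
        refine hts4 _ (htscases _ hqlt hq1) ?_
        have hz' : ws[p]'hpws = z := by subst hpi; exact hwlast
        rwa [hz'] at hadj
      · have hplt : p - ws.length < ts.length := by omega
        have e_p : (ws ++ ts)[p]'(by rw [List.length_append]; omega) =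
            ts[p - ws.length]'hplt := List.getElem_append_right hpts
        rw [e_p, e_q]
        exact hts6 _ _ hplt hqlt (by omega)
  · rw [List.head?_append_of_ne_nil _ hwsne]; exact w3
  · rw [List.getLast?_append_of_ne_nil _ htsne]; exact hlast

/-- Adjacent vertices on the same BFS level share their
neighbours on the previous level. -/
lemma shared_below_adj (hG : G.IsGraph) (hdh : G.DistanceHereditary)
    {v : V} (hv : v ∈ G.verts) (hr : ∀ x ∈ G.verts, (G.chainLens v x).Nonempty)
    {x y z : V} {i : ℕ} (hi : 1 ≤ i)
    (hx : G.dist v x = i) (hy : G.dist v y = i)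
    (hxy : G.Adj x y) (hzx : G.Adj z x) (hz : G.dist v z = i - 1) :
    G.Adj z y := by
  by_contra hzy
  have hxv : x ∈ G.verts := (hG.2.2 _ _ hxy).1
  have hyv := (hG.2.2 _ _ hxy).2
  have hzv := (hG.2.2 _ _ hzx).1
  have hxyne : x ≠ y := fun h => hG.2.1 _ (h ▸ hxy)
  have key := dist_of_geodesic_append hG hdh hv hr hzv hz (ts := [x, y])
    (by simp) ?_ ?_ ?_ ?_ ?_ ?_ (b := y) (by simp)
  · rw [hy] at key; simp at key; omega
  · simp [List.Chain']; exact ⟨hzx, hxy⟩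
  · intro t ht; simp at ht; rcases ht with rfl | rfl; exacts [hxv, hyv]
  · intro t ht; simp at ht; rcases ht with rfl | rfl
    · rw [hx]; omega
    · rw [hy]; omega
  · intro t ht; simp at ht; subst ht; exact hzy
  · simp [hxyne]
  · intro p q hp hq hpq; simp at hp hq; omega

/-- Nonadjacent vertices on the same BFS level with a common neighbour on the
next level share their neighbours on the previous level. -/
lemma shared_below_common_upper (hG : G.IsGraph) (hdh : G.DistanceHereditary)
    {v : V} (hv : v ∈ G.verts) (hr : ∀ x ∈ G.verts, (G.chainLens v x).Nonempty)
    {x y u z : V} {i : ℕ} (hi : 1 ≤ i)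
    (hx : G.dist v x = i) (hy : G.dist v y = i) (hxyne : x ≠ y)
    (hxy : ¬ G.Adj x y)
    (hu : G.dist v u = i + 1) (hux : G.Adj x u) (huy : G.Adj u y)
    (hzx : G.Adj z x) (hz : G.dist v z = i - 1) :
    G.Adj z y := by
  by_contra hzy
  have hxv : x ∈ G.verts := (hG.2.2 _ _ hux).1
  have huv : u ∈ G.verts := (hG.2.2 _ _ hux).2
  have hyv : y ∈ G.verts := (hG.2.2 _ _ huy).2
  have hzv : z ∈ G.verts := (hG.2.2 _ _ hzx).1
  have hxune : x ≠ u := fun h => hG.2.1 _ (h ▸ hux)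
  have huyne : u ≠ y := fun h => hG.2.1 _ (h ▸ huy)
  have key := dist_of_geodesic_append hG hdh hv hr hzv hz (ts := [x, u, y])
    (by simp) ?_ ?_ ?_ ?_ ?_ ?_ (b := y) (by simp)
  · rw [hy] at key; simp at key; omega
  · simp [List.Chain']; exact ⟨hzx, hux, huy⟩
  · intro t ht; simp at ht; rcases ht with rfl | rfl | rfl
    exacts [hxv, huv, hyv]
  · intro t ht; simp at ht; rcases ht with rfl | rfl | rfl
    · rw [hx]; omega
    · rw [hu]; omega
    · rw [hy]; omega
  · intro t ht; simp at ht; rcases ht with rfl | rfl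
    · intro hzu
      have := dist_le_of_adj hG (hr z hzv) hzu
      rw [hu, hz] at this; omega
    · exact hzy
  · simp [hxune, huyne, hxyne]
  · intro p q hp hq hpq
    simp at hp hq
    have hp0 : p = 0 := by omega
    have hq2 : q = 2 := by omega
    subst hp0; subst hq2
    simpa using hxy

/-- An induced path on four vertices forces distance three between its ends. -/
lemma dist_of_P4 (hG : G.IsGraph) (hdh : G.DistanceHereditary)
    {a b c d : V}
    (hab : G.Adj a b) (hbc : G.Adj b c) (hcd : G.Adj c d)
    (hac : ¬ G.Adj a c) (had : ¬ G.Adj a d) (hbd : ¬ G.Adj b d) :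
    G.dist a d = 3 := by
  have hS := hG.1
  have hI := hG.2.1
  have hM := hG.2.2
  have hne_ab : a ≠ b := fun h => hI _ (h ▸ hab)
  have hne_bc : b ≠ c := fun h => hI _ (h ▸ hbc)
  have hne_cd : c ≠ d := fun h => hI _ (h ▸ hcd)
  have hne_ac : a ≠ c := fun h => had (h ▸ hcd)
  have hne_ad : a ≠ d := fun h => hac (hS _ _ (h ▸ hcd))
  have hne_bd : b ≠ d := fun h => had (h ▸ hab)
  have key := dist_eq_of_inducedPath (vs := [a, b, c, d]) hG hdh ?_ ?_ ?_ ?_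
    (a := a) (b := d) rfl (by simp)
  · simp at key; omega
  · simp [List.Chain']; exact ⟨hab, hbc, hcd⟩
  · intro x hx; simp at hx
    rcases hx with rfl | rfl | rfl | rfl
    exacts [(hM _ _ hab).1, (hM _ _ hab).2, (hM _ _ hcd).1, (hM _ _ hcd).2]
  · simp [hne_ab, hne_ac, hne_ad, hne_bc, hne_bd, hne_cd]
  · intro p q hp hq hpq
    simp at hp hq
    interval_cases q <;> interval_cases p <;> simp_all

/-- An induced path on five vertices forces distance four between its ends. -/
lemma dist_of_P5 (hG : G.IsGraph) (hdh : G.DistanceHereditary)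
    {a b c d e : V}
    (hab : G.Adj a b) (hbc : G.Adj b c) (hcd : G.Adj c d) (hde : G.Adj d e)
    (hac : ¬ G.Adj a c) (had : ¬ G.Adj a d) (hae : ¬ G.Adj a e)
    (hbd : ¬ G.Adj b d) (hbe : ¬ G.Adj b e) (hce : ¬ G.Adj c e) :
    G.dist a e = 4 := by
  have hS := hG.1
  have hI := hG.2.1
  have hM := hG.2.2
  have hne_ab : a ≠ b := fun h => hI _ (h ▸ hab)
  have hne_bc : b ≠ c := fun h => hI _ (h ▸ hbc)
  have hne_cd : c ≠ d := fun h => hI _ (h ▸ hcd)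
  have hne_de : d ≠ e := fun h => hI _ (h ▸ hde)
  have hne_ac : a ≠ c := fun h => had (h ▸ hcd)
  have hne_ad : a ≠ d := fun h => hae (h ▸ hde)
  have hne_ae : a ≠ e := fun h => had (hS _ _ (h ▸ hde))
  have hne_bd : b ≠ d := fun h => hbe (h ▸ hde)
  have hne_be : b ≠ e := fun h => hae (h ▸ hab)
  have hne_ce : c ≠ e := fun h => hbe (h ▸ hbc)
  have key := dist_eq_of_inducedPath (vs := [a, b, c, d, e]) hG hdh ?_ ?_ ?_ ?_
    (a := a) (b := e) rfl (by simp)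
  · simp at key; omega
  · simp [List.Chain']; exact ⟨hab, hbc, hcd, hde⟩
  · intro x hx; simp at hx
    rcases hx with rfl | rfl | rfl | rfl | rfl
    exacts [(hM _ _ hab).1, (hM _ _ hab).2, (hM _ _ hcd).1, (hM _ _ hcd).2,
      (hM _ _ hde).2]
  · simp [hne_ab, hne_ac, hne_ad, hne_ae, hne_bc, hne_bd, hne_be, hne_cd,
      hne_ce, hne_de]
  · intro p q hp hq hpq
    simp at hp hq
    interval_cases q <;> interval_cases p <;> simp_all

end LGraph

section Cograph

/-- One step of adjacency inside a finite set. -/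
def FStep (s : Finset V) (A : V → V → Prop) : V → V → Prop :=
  fun u w => A u w ∧ u ∈ s ∧ w ∈ s

/-- Connectivity of a relation restricted to a finite set. -/
def FConn (s : Finset V) (A : V → V → Prop) : Prop :=
  ∀ a ∈ s, ∀ b ∈ s, Relation.ReflTransGen (FStep s A) a b

lemma fstep_symm {s : Finset V} {A : V → V → Prop}
    (hsym : ∀ a b, A a b → A b a) : Symmetric (FStep s A) :=
  fun _ _ h => ⟨hsym _ _ h.1, h.2.2, h.2.1⟩

lemma freach_mem {s : Finset V} {A : V → V → Prop} {a u : V}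
    (h : Relation.ReflTransGen (FStep s A) a u) (ha : a ∈ s) : u ∈ s := by
  induction h with
  | refl => exact ha
  | tail _ hstep _ => exact hstep.2.2

lemma exists_crossing {s : Finset V} {A : V → V → Prop} {v a y : V}
    (h : Relation.ReflTransGen (FStep s A) a y) (hna : ¬ A v a) (hy : A v y) :
    ∃ u w, Relation.ReflTransGen (FStep s A) a u ∧ FStep s A u w ∧
      ¬ A v u ∧ A v w := by
  induction h with
  | refl => exact absurd hy hna
  | @tail b c hab hbc ih =>
    by_cases hvb : A v b
    · exact ih hvb
    · exact ⟨b, c, hab, hbc, hvb, hy⟩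

lemma seinsche_step {s : Finset V} {A B : V → V → Prop}
    (hsymA : ∀ a b, A a b → A b a) (hirrB : ∀ a, ¬ B a a)
    (hcompl : ∀ u w, u ≠ w → (A u w ↔ ¬ B u w))
    {v : V} (hv : v ∈ s) (hcard : 2 ≤ s.card)
    (hconnA : FConn s A) (hconnB : FConn s B)
    (hdisc : ¬ FConn (s.erase v) A) :
    ∃ a ∈ s, ∃ b ∈ s, ∃ c ∈ s, ∃ d ∈ s,
      A a b ∧ A b c ∧ A c d ∧ ¬ A a c ∧ ¬ A b d ∧ ¬ A a d := by
  classical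
  set s' := s.erase v with hs'
  by_cases huniv : ∀ w ∈ s', A v w
  · exfalso
    obtain ⟨x, hx, y, hy, hxy⟩ := Finset.one_lt_card.1 hcard
    have hw0 : ∃ w0 ∈ s, w0 ≠ v := by
      by_cases hxv : x = v
      · exact ⟨y, hy, fun h => hxy (by rw [hxv, h])⟩
      · exact ⟨x, hx, hxv⟩
    obtain ⟨w0, hw0s, hw0v⟩ := hw0
    have := hconnB v hv w0 hw0s
    rcases Relation.ReflTransGen.cases_head this with heq | ⟨z, hz, _⟩
    · exact hw0v heq.symm
    · have hzs : z ∈ s := hz.2.2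
      have hzv : z ≠ v := by
        intro h; subst h; exact hirrB _ hz.1
      have hzA : A v z := huniv z (Finset.mem_erase.2 ⟨hzv, hzs⟩)
      exact ((hcompl v z (Ne.symm hzv)).1 hzA) hz.1
  · push_neg at huniv
    obtain ⟨a, has', hva⟩ := huniv
    -- the component of `a` in `s'`
    have hclosure : ∀ {t : V} (R0 : V → Prop)
        (hR0 : ∀ u, R0 u → u ∈ s')
        (hR0a : R0 t) (hnoedge : ∀ y, R0 y → ¬ A v y)
        (hRclosed : ∀ u w, R0 u → w ∈ s' → A u w → R0 w), False := by
      intro t R0 hR0 hR0a hnoedge hRclosed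
      have hts : t ∈ s := Finset.mem_of_mem_erase (hR0 t hR0a)
      have hinv : ∀ u, Relation.ReflTransGen (FStep s A) t u → R0 u := by
        intro u hu
        induction hu with
        | refl => exact hR0a
        | @tail b c hab hbc ih =>
          have hRb := ih
          have hcs : c ∈ s := hbc.2.2
          have hcv : c ≠ v := by
            intro h; subst h
            exact hnoedge b hRb (hsymA _ _ hbc.1)
          exact hRclosed b c hRb (Finset.mem_erase.2 ⟨hcv, hcs⟩) hbc.1
      have := hinv v (hconnA t hts v hv)
      have : v ∈ s' := hR0 v this
      simp [hs'] at this
    set Ra : V → Prop := fun u => Relation.ReflTransGen (FStep s' A) a u with hRa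
    have hRamem : ∀ u, Ra u → u ∈ s' := fun u h => freach_mem h has'
    have hRaclosed : ∀ u w, Ra u → w ∈ s' → A u w → Ra w := by
      intro u w hu hw hA
      exact Relation.ReflTransGen.tail hu ⟨hA, hRamem u hu, hw⟩
    -- v has a neighbour in the component of a
    have hy1 : ∃ y, Ra y ∧ A v y := by
      by_contra hcon
      push_neg at hcon
      exact hclosure Ra hRamem Relation.ReflTransGen.refl hcon hRaclosed
    obtain ⟨y1, hy1R, hy1A⟩ := hy1
    obtain ⟨u, w, huR, huw, hvu, hvw⟩ := exists_crossing hy1R hva hy1A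
    -- a vertex outside the component of a
    have hreach_symm : Symmetric (Relation.ReflTransGen (FStep s' A)) := fun x y h =>
      (@Relation.ReflTransGen.symmetric _ _ ⟨fun _ _ h' => fstep_symm (s := s') hsymA h'⟩).symm x y h
    have hγ : ∃ γ ∈ s', ¬ Ra γ := by
      rw [FConn] at hdisc
      push_neg at hdisc
      obtain ⟨α, hα, β, hβ, hαβ⟩ := hdisc
      by_cases hRα : Ra α
      · by_cases hRβ : Ra β
        · exact absurd ((hreach_symm hRα).trans hRβ) hαβ
        · exact ⟨β, hβ, hRβ⟩
      · exact ⟨α, hα, hRα⟩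
    obtain ⟨γ, hγs, hγR⟩ := hγ
    set Rγ : V → Prop := fun u => Relation.ReflTransGen (FStep s' A) γ u with hRγ
    have hRγmem : ∀ u, Rγ u → u ∈ s' := fun u h => freach_mem h hγs
    have hRγclosed : ∀ u' w', Rγ u' → w' ∈ s' → A u' w' → Rγ w' := by
      intro u' w' hu hw hA
      exact Relation.ReflTransGen.tail hu ⟨hA, hRγmem u' hu, hw⟩
    have hdisj : ∀ t, Ra t → ¬ Rγ t := by
      intro t hat hγt
      exact hγR (Relation.ReflTransGen.trans hat (hreach_symm hγt))
    have hc : ∃ c, Rγ c ∧ A v c := by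
      by_contra hcon
      push_neg at hcon
      have hvγ : ¬ A v γ := hcon γ Relation.ReflTransGen.refl
      exact hclosure Rγ hRγmem Relation.ReflTransGen.refl hcon hRγclosed
    obtain ⟨c, hcR, hcA⟩ := hc
    have hus : u ∈ s := Finset.mem_of_mem_erase (hRamem u huR)
    have hws : w ∈ s := Finset.mem_of_mem_erase huw.2.2
    have hcs : c ∈ s := Finset.mem_of_mem_erase (hRγmem c hcR)
    have hRaw : Ra w := hRaclosed u w huR huw.2.2 huw.1
    have hnuc : ¬ A u c := by
      intro h
      exact hdisj c (hRaclosed u c huR (hRγmem c hcR) h) hcR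
    have hnwc : ¬ A w c := by
      intro h
      exact hdisj c (hRaclosed w c hRaw (hRγmem c hcR) h) hcR
    have hnuv : ¬ A u v := fun h => hvu (hsymA _ _ h)
    exact ⟨u, hus, w, hws, v, hv, c, hcs, huw.1, hsymA _ _ hvw, hcA, hnuv,
      hnwc, hnuc⟩

/-- Seinsche's theorem: a set on which both a relation and its complement are
connected contains an induced path on four vertices. -/
lemma seinsche : ∀ (n : ℕ) (s : Finset V) (A B : V → V → Prop),
    s.card ≤ n →
    (∀ a b, A a b → A b a) → (∀ a, ¬ A a a) →
    (∀ a b, B a b → B b a) → (∀ a, ¬ B a a) →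
    (∀ u w, u ≠ w → (A u w ↔ ¬ B u w)) →
    2 ≤ s.card → FConn s A → FConn s B →
    ∃ a ∈ s, ∃ b ∈ s, ∃ c ∈ s, ∃ d ∈ s,
      A a b ∧ A b c ∧ A c d ∧ ¬ A a c ∧ ¬ A b d ∧ ¬ A a d := by
  classical
  intro n
  induction n with
  | zero =>
    intro s A B hn _ _ _ _ _ hcard _ _
    omega
  | succ n ih =>
    intro s A B hn hsymA hirrA hsymB hirrB hcompl hcard hconnA hconnB
    obtain ⟨x, hx, y, hy, hxy⟩ := Finset.one_lt_card.1 hcard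
    rcases Nat.lt_or_ge (s.erase x).card 2 with hsmall | hbig
    · -- s = {x, c}; both A and B connected is impossible
      exfalso
      have hys' : y ∈ s.erase x := Finset.mem_erase.2 ⟨fun h => hxy h.symm, hy⟩
      have hAxy : A x y := by
        have := hconnA x hx y hy
        rcases Relation.ReflTransGen.cases_head this with heq | ⟨z, hz, hrest⟩
        · exact absurd heq hxy
        · have hzx : z ≠ x := fun h => hirrA _ (h ▸ hz.1)
          have hzs' : z ∈ s.erase x := Finset.mem_erase.2 ⟨hzx, hz.2.2⟩
          have : z = y := by
            have h1 : (s.erase x).card = 1 := by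
              have := Finset.card_pos.2 ⟨y, hys'⟩
              omega
            obtain ⟨t, ht⟩ := Finset.card_eq_one.1 h1
            rw [ht] at hzs' hys'
            simp at hzs' hys'
            rw [hzs', hys']
          exact this ▸ hz.1
      have hBxy : B x y := by
        have := hconnB x hx y hy
        rcases Relation.ReflTransGen.cases_head this with heq | ⟨z, hz, hrest⟩
        · exact absurd heq hxy
        · have hzx : z ≠ x := fun h => hirrB _ (h ▸ hz.1)
          have hzs' : z ∈ s.erase x := Finset.mem_erase.2 ⟨hzx, hz.2.2⟩
          have : z = y := by
            have h1 : (s.erase x).card = 1 := by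
              have := Finset.card_pos.2 ⟨y, hys'⟩
              omega
            obtain ⟨t, ht⟩ := Finset.card_eq_one.1 h1
            rw [ht] at hzs' hys'
            simp at hzs' hys'
            rw [hzs', hys']
          exact this ▸ hz.1
      exact ((hcompl x y hxy).1 hAxy) hBxy
    · by_cases hdA : FConn (s.erase x) A
      · by_cases hdB : FConn (s.erase x) B
        · -- recurse into s.erase x
          have hcard' : (s.erase x).card ≤ n := by
            have := Finset.card_erase_of_mem hx
            have := Finset.card_pos.2 ⟨x, hx⟩
            omega
          obtain ⟨a, ha, b, hb, c, hc, d, hd, hP⟩ :=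
            ih (s.erase x) A B hcard' hsymA hirrA hsymB hirrB hcompl hbig hdA hdB
          exact ⟨a, Finset.mem_of_mem_erase ha, b, Finset.mem_of_mem_erase hb,
            c, Finset.mem_of_mem_erase hc, d, Finset.mem_of_mem_erase hd, hP⟩
        · -- complement disconnected after deleting x : use seinsche_step for B
          have hcompl' : ∀ u w, u ≠ w → (B u w ↔ ¬ A u w) := by
            intro u w huw
            constructor
            · intro hB hA
              exact ((hcompl u w huw).1 hA) hB
            · intro hA
              by_contra hB
              exact hA ((hcompl u w huw).2 hB)
          obtain ⟨a, ha, b, hb, c, hc, d, hd, h1, h2, h3, h4, h5, h6⟩ :=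
            seinsche_step hsymB hirrA hcompl' hx hcard hconnB hconnA hdB
          -- convert the B-induced-P4 into an A-induced-P4
          have hne_ab : a ≠ b := fun h => hirrB _ (h ▸ h1)
          have hne_bc : b ≠ c := fun h => hirrB _ (h ▸ h2)
          have hne_cd : c ≠ d := fun h => hirrB _ (h ▸ h3)
          have hne_ac : a ≠ c := fun h => h6 (h ▸ h3)
          have hne_ad : a ≠ d := fun h => h4 (hsymB _ _ (h ▸ h3))
          have hne_bd : b ≠ d := fun h => h6 (h ▸ h1)
          have hA_ac : A a c := by
            by_contra hcon
            exact h4 ((hcompl' a c hne_ac).2 hcon)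
          have hA_bd : A b d := by
            by_contra hcon
            exact h5 ((hcompl' b d hne_bd).2 hcon)
          have hA_ad : A a d := by
            by_contra hcon
            exact h6 ((hcompl' a d hne_ad).2 hcon)
          have hnA_ab : ¬ A a b := fun h => ((hcompl a b hne_ab).1 h) h1
          have hnA_bc : ¬ A b c := fun h => ((hcompl b c hne_bc).1 h) h2
          have hnA_cd : ¬ A c d := fun h => ((hcompl c d hne_cd).1 h) h3
          exact ⟨c, hc, a, ha, d, hd, b, hb, hsymA _ _ hA_ac, hA_ad,
            hsymA _ _ hA_bd, hnA_cd, hnA_ab, fun h => hnA_bc (hsymA _ _ h)⟩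
      · exact seinsche_step hsymA hirrB hcompl hx hcard hconnA hconnB hdA

/-- Every P4-free finite set with at least two elements contains a pair of
twins. -/
lemma cograph_twins : ∀ (n : ℕ) (s : Finset V) (A : V → V → Prop),
    s.card ≤ n →
    (∀ a b, A a b → A b a) → (∀ a, ¬ A a a) →
    2 ≤ s.card →
    (∀ a b c d, a ∈ s → b ∈ s → c ∈ s → d ∈ s →
      A a b → A b c → A c d → ¬ A a c → ¬ A b d → ¬ A a d → False) →
    ∃ p ∈ s, ∃ q ∈ s, p ≠ q ∧ ∀ r ∈ s, r ≠ p → r ≠ q → (A p r ↔ A q r) := by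
  classical
  intro n
  induction n with
  | zero => intro s A hn _ _ hcard _; omega
  | succ n ih =>
    intro s A hn hsym hirr hcard hP4
    -- the "disconnected" extraction, applied to a relation C on s
    have disc : ∀ (C : V → V → Prop),
        (∀ a b, C a b → C b a) → (∀ a, ¬ C a a) →
        (∀ a b c d, a ∈ s → b ∈ s → c ∈ s → d ∈ s →
          C a b → C b c → C c d → ¬ C a c → ¬ C b d → ¬ C a d → False) →
        ¬ FConn s C →
        ∃ p ∈ s, ∃ q ∈ s, p ≠ q ∧
          ∀ r ∈ s, r ≠ p → r ≠ q → (C p r ↔ C q r) := by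
      intro C hsymC hirrC hP4C hdisc
      rw [FConn] at hdisc
      push_neg at hdisc
      obtain ⟨a, ha, b, hb, hab⟩ := hdisc
      set K := s.filter (fun c => Relation.ReflTransGen (FStep s C) a c) with hK
      have haK : a ∈ K := Finset.mem_filter.2 ⟨ha, Relation.ReflTransGen.refl⟩
      have hbK : b ∉ K := by
        simp [hK, hb]
        intro h
        exact absurd h hab
      have hKsub : K ⊆ s := Finset.filter_subset _ _
      have hKlt : K.card < s.card :=
        Finset.card_lt_card (Finset.ssubset_iff_of_subset hKsub |>.2 ⟨b, hb, hbK⟩)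
      have hKclosed : ∀ u w, u ∈ K → w ∈ s → C u w → w ∈ K := by
        intro u w hu hw hC
        simp only [hK, Finset.mem_filter] at hu ⊢
        exact ⟨hw, Relation.ReflTransGen.tail hu.2 ⟨hC, hu.1, hw⟩⟩
      rcases Nat.lt_or_ge K.card 2 with hK1 | hK2
      · -- K = {a} : a is isolated in s
        have hKa : K = {a} := by
          have h1 : K.card = 1 := by
            have := Finset.card_pos.2 ⟨a, haK⟩
            omega
          obtain ⟨t, ht⟩ := Finset.card_eq_one.1 h1
          have := ht ▸ haK
          simp at this
          rw [ht, this]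
        have haiso : ∀ w ∈ s, ¬ C a w := by
          intro w hw hC
          have hwK : w ∈ K := hKclosed a w haK hw hC
          rw [hKa] at hwK
          simp at hwK
          subst hwK
          exact hirrC _ hC
        set s' := s.erase a with hs'
        have hs'card : s'.card + 1 = s.card := by
          rw [hs', Finset.card_erase_of_mem ha]
          have := Finset.card_pos.2 ⟨a, ha⟩
          omega
        rcases Nat.lt_or_ge s'.card 2 with hs1 | hs2
        · -- s = {a, c}
          have h1 : s'.card = 1 := by omega
          obtain ⟨c, hc⟩ := Finset.card_eq_one.1 h1
          have hcs' : c ∈ s' := by rw [hc]; simp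
          have hca : c ≠ a := (Finset.mem_erase.1 hcs').1
          refine ⟨a, ha, c, Finset.mem_of_mem_erase hcs', Ne.symm hca, ?_⟩
          intro r hr hra hrc
          exfalso
          have hrs' : r ∈ s' := Finset.mem_erase.2 ⟨hra, hr⟩
          rw [hc] at hrs'
          simp at hrs'
          exact hrc hrs'
        · obtain ⟨p, hp, q, hq, hpq, htw⟩ :=
            ih s' C (by omega) hsymC hirrC hs2
              (fun a' b' c' d' ha' hb' hc' hd' =>
                hP4C a' b' c' d' (Finset.mem_of_mem_erase ha')
                  (Finset.mem_of_mem_erase hb') (Finset.mem_of_mem_erase hc')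
                  (Finset.mem_of_mem_erase hd'))
          refine ⟨p, Finset.mem_of_mem_erase hp, q, Finset.mem_of_mem_erase hq,
            hpq, ?_⟩
          intro r hr hrp hrq
          by_cases hra : r = a
          · subst hra
            constructor
            · intro h
              exact absurd (hsymC _ _ h) (haiso p (Finset.mem_of_mem_erase hp))
            · intro h
              exact absurd (hsymC _ _ h) (haiso q (Finset.mem_of_mem_erase hq))
          · exact htw r (Finset.mem_erase.2 ⟨hra, hr⟩) hrp hrq
      · -- recurse into K
        have hKn : K.card ≤ n := by omega
        obtain ⟨p, hp, q, hq, hpq, htw⟩ :=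
          ih K C hKn hsymC hirrC hK2 (fun a' b' c' d' ha' hb' hc' hd' =>
            hP4C a' b' c' d' (hKsub ha') (hKsub hb') (hKsub hc') (hKsub hd'))
        refine ⟨p, hKsub hp, q, hKsub hq, hpq, ?_⟩
        intro r hr hrp hrq
        by_cases hrK : r ∈ K
        · exact htw r hrK hrp hrq
        · constructor
          · intro h
            exact absurd (hKclosed p r hp hr h) hrK
          · intro h
            exact absurd (hKclosed q r hq hr h) hrK
    by_cases hconnA : FConn s A
    · set A' : V → V → Prop := fun u w => u ≠ w ∧ ¬ A u w with hA'
      have hsymA' : ∀ a b, A' a b → A' b a := by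
        intro a b h
        exact ⟨h.1.symm, fun hc => h.2 (hsym _ _ hc)⟩
      have hirrA' : ∀ a, ¬ A' a a := fun a h => h.1 rfl
      have hcompl : ∀ u w, u ≠ w → (A u w ↔ ¬ A' u w) := by
        intro u w huw
        constructor
        · intro h hc
          exact hc.2 h
        · intro h
          by_contra hc
          exact h ⟨huw, hc⟩
      have hP4A' : ∀ a b c d, a ∈ s → b ∈ s → c ∈ s → d ∈ s →
          A' a b → A' b c → A' c d → ¬ A' a c → ¬ A' b d → ¬ A' a d → False := by
        intro a b c d ha hb hc hd h1 h2 h3 h4 h5 h6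
        have hne_ac : a ≠ c := by
          intro h; subst h; exact h6 h3
        have hne_bd : b ≠ d := by
          intro h; subst h; exact h6 h1
        have hne_ad : a ≠ d := by
          intro h; subst h; exact h4 (hsymA' _ _ h3)
        have hA_ac : A a c := by
          by_contra hcon; exact h4 ⟨hne_ac, hcon⟩
        have hA_bd : A b d := by
          by_contra hcon; exact h5 ⟨hne_bd, hcon⟩
        have hA_ad : A a d := by
          by_contra hcon; exact h6 ⟨hne_ad, hcon⟩
        exact hP4 c a d b hc ha hd hb (hsym _ _ hA_ac) hA_ad (hsym _ _ hA_bd)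
          h3.2 h1.2 (fun h => h2.2 (hsym _ _ h))
      by_cases hconnA' : FConn s A'
      · exfalso
        obtain ⟨a, ha, b, hb, c, hc, d, hd, e1, e2, e3, n1, n2, n3⟩ :=
          seinsche (n + 1) s A A' hn hsym hirr hsymA' hirrA' hcompl hcard
            hconnA hconnA'
        exact hP4 a b c d ha hb hc hd e1 e2 e3 n1 n2 n3
      · obtain ⟨p, hp, q, hq, hpq, htw⟩ := disc A' hsymA' hirrA' hP4A' hconnA'
        refine ⟨p, hp, q, hq, hpq, ?_⟩
        intro r hr hrp hrq
        have h5 := htw r hr hrp hrq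
        constructor
        · intro h
          by_contra hcon
          exact (h5.2 ⟨Ne.symm hrq, hcon⟩).2 h
        · intro h
          by_contra hcon
          exact (h5.1 ⟨Ne.symm hrp, hcon⟩).2 h
    · exact disc A hsym hirr hP4 hconnA

end Cograph

/-- if `v` is a cut-vertex of a connected distance-hereditary
graph `G`, then every connected component of `G \ v` contains a vertex of the
foliage `T(G)` (equivalently: every vertex of `G \ v` can reach, inside
`G \ v`, some vertex of `T(G)`). -/
theorem component_meets_foliage (G : LGraph V) (hG : G.IsGraph)
    (hconn : G.Connected) (hdh : G.DistanceHereditary)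
    (v : V) (hv : v ∈ G.verts)
    (hcut : G.numComponents < (G.delete v).numComponents) :
    ∀ w ∈ (G.delete v).verts,
      ∃ u, Relation.ReflTransGen (G.delete v).Adj w u ∧ u ∈ G.foliage := by
  classical
  intro w hw
  have hsym := hG.1
  have hirr := hG.2.1
  have hmem := hG.2.2
  have hw' : w ∈ G.verts ∧ w ≠ v := by
    have := hw
    simp only [LGraph.delete, LGraph.induce, Finset.mem_inter, Finset.mem_erase] at this
    exact ⟨this.1, this.2.1⟩
  obtain ⟨hwv, hwne⟩ := hw'
  have hDadj : ∀ a b, (G.delete v).Adj a b ↔ (G.Adj a b ∧ a ≠ v ∧ b ≠ v) := by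
    intro a b
    constructor
    · rintro ⟨h1, h2, h3⟩
      exact ⟨h1, (Finset.mem_erase.1 h2).1, (Finset.mem_erase.1 h3).1⟩
    · rintro ⟨h1, h2, h3⟩
      exact ⟨h1, Finset.mem_erase.2 ⟨h2, (hmem _ _ h1).1⟩,
        Finset.mem_erase.2 ⟨h3, (hmem _ _ h1).2⟩⟩
  set R : V → Prop := fun c => Relation.ReflTransGen (G.delete v).Adj w c with hR
  have hr : ∀ x ∈ G.verts, (G.chainLens v x).Nonempty := fun x hx =>
    LGraph.chainLens_nonempty_of_reach hG hv (hconn.2 v hv x hx)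
  set ℓ : V → ℕ := fun c => G.dist v c with hℓ
  have hreach_ne : ∀ c, R c → c ≠ v ∧ c ∈ G.verts := by
    intro c hc
    induction hc with
    | refl => exact ⟨hwne, hwv⟩
    | tail _ hstep _ =>
      rename_i hmid
      obtain ⟨h1, _, h3⟩ := (hDadj _ _).1 hstep
      exact ⟨h3, (hmem _ _ h1).2⟩
  set C : Finset V := G.verts.filter R with hC
  have hCmem : ∀ c, c ∈ C ↔ (c ∈ G.verts ∧ R c) := by
    intro c; simp [hC]
  have hCclose : ∀ c ∈ C, ∀ y, G.Adj c y → y ≠ v → y ∈ C := by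
    intro c hc y hcy hyv
    have hc' := (hCmem c).1 hc
    refine (hCmem y).2 ⟨(hmem _ _ hcy).2, ?_⟩
    refine Relation.ReflTransGen.tail hc'.2 ?_
    exact (hDadj c y).2 ⟨hcy, (hreach_ne c hc'.2).1, hyv⟩
  have hCv : ∀ c ∈ C, c ≠ v := fun c hc => (hreach_ne c ((hCmem c).1 hc).2).1
  have hCverts : ∀ c ∈ C, c ∈ G.verts := fun c hc => ((hCmem c).1 hc).1
  have hlvl0 : ℓ v = 0 := LGraph.dist_self hv
  have hlvlpos : ∀ c ∈ C, 1 ≤ ℓ c := by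
    intro c hc
    rcases Nat.eq_zero_or_pos (ℓ c) with h0 | h1
    · exact absurd (LGraph.eq_of_dist_eq_zero (hr c (hCverts c hc)) h0).symm (hCv c hc)
    · exact h1
  have hadj_le : ∀ a b, G.Adj a b → ℓ b ≤ ℓ a + 1 := fun a b h =>
    LGraph.dist_le_of_adj hG (hr a (hmem _ _ h).1) h
  have hwC : w ∈ C := (hCmem w).2 ⟨hwv, Relation.ReflTransGen.refl⟩
  obtain ⟨xm, hxmC, hxmax⟩ := Finset.exists_max_image C ℓ ⟨w, hwC⟩
  set d : ℕ := ℓ xm with hd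
  have hd1 : 1 ≤ d := hlvlpos xm hxmC
  set F : Finset V := C.filter (fun c => ℓ c = d) with hF
  have hFC : F ⊆ C := Finset.filter_subset _ _
  have hFmem : ∀ c, c ∈ F ↔ (c ∈ C ∧ ℓ c = d) := by intro c; simp [hF]
  have hxmF : xm ∈ F := (hFmem xm).2 ⟨hxmC, rfl⟩
  have hFnb : ∀ x ∈ F, ∀ y, G.Adj x y →
      (y = v ∧ d = 1) ∨ (y ∈ C ∧ (ℓ y = d - 1 ∨ ℓ y = d)) := by
    intro x hx y hxy
    obtain ⟨hxC, hxd⟩ := (hFmem x).1 hx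
    by_cases hyv : y = v
    · subst hyv
      left
      refine ⟨rfl, ?_⟩
      have := hadj_le y x (hsym _ _ hxy)
      rw [hlvl0, hxd] at this
      omega
    · right
      have hyC := hCclose x hxC y hxy hyv
      refine ⟨hyC, ?_⟩
      have h1 := hadj_le x y hxy
      have h2 := hadj_le y x (hsym _ _ hxy)
      have h3 := hxmax y hyC
      rw [hxd] at h1 h2
      omega
  have hpen : ∀ c ∈ G.verts, ∀ n : ℕ, ℓ c = n + 1 →
      ∃ p, G.Adj p c ∧ p ∈ G.verts ∧ ℓ p = n := by
    intro c hc n hn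
    obtain ⟨p, h1, h2, _, h4⟩ := LGraph.exists_penultimate hG (hr c hc) hn
    exact ⟨p, h1, h2, h4⟩
  set N : V → Finset V := fun x => G.verts.filter (fun y => G.Adj x y) with hN
  have hNmem : ∀ x y, y ∈ N x ↔ (y ∈ G.verts ∧ G.Adj x y) := by
    intro x y; simp [hN]
  have hNmem' : ∀ x y, G.Adj x y → y ∈ N x := fun x y h =>
    (hNmem x y).2 ⟨(hmem _ _ h).2, h⟩
  -- twins give foliage membership
  have htwin_foliage : ∀ p q : V, p ∈ G.verts → q ∈ G.verts → p ≠ q →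
      (∀ y, y ≠ p → y ≠ q → (G.Adj p y ↔ G.Adj q y)) → p ∈ G.foliage := by
    intro p q hpv hqv hpq hiff
    refine Finset.mem_filter.2 ⟨hpv, Or.inr (Or.inr ⟨hpv, q, Ne.symm hpq, hqv, ?_⟩)⟩
    ext y
    simp only [LGraph.nbhd, Set.mem_diff, Set.mem_setOf_eq, Set.mem_singleton_iff]
    constructor
    · rintro ⟨h1, h2⟩
      have hyp : y ≠ p := fun h => hirr _ (h ▸ h1)
      exact ⟨(hiff y hyp h2).1 h1, hyp⟩
    · rintro ⟨h1, h2⟩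
      have hyq : y ≠ q := fun h => hirr _ (h ▸ h1)
      exact ⟨(hiff y h2 hyq).2 h1, hyq⟩
  by_cases hFadj : ∃ x ∈ F, ∃ y ∈ F, G.Adj x y
  · -- Case I : two adjacent vertices in the top level
    obtain ⟨x, hxF, y, hyF, hxy⟩ := hFadj
    set K : Finset V := F.filter
      (fun c => Relation.ReflTransGen (FStep F G.Adj) x c) with hK
    have hKF : K ⊆ F := Finset.filter_subset _ _
    have hxK : x ∈ K := Finset.mem_filter.2 ⟨hxF, Relation.ReflTransGen.refl⟩
    have hyK : y ∈ K := Finset.mem_filter.2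
      ⟨hyF, Relation.ReflTransGen.single ⟨hxy, hxF, hyF⟩⟩
    have hxyne : x ≠ y := fun h => hirr _ (h ▸ hxy)
    have hK2 : 2 ≤ K.card := Finset.one_lt_card.2 ⟨x, hxK, y, hyK, hxyne⟩
    have hKclose : ∀ p ∈ K, ∀ z, z ∈ F → G.Adj p z → z ∈ K := by
      intro p hp z hz hpz
      refine Finset.mem_filter.2 ⟨hz, ?_⟩
      exact Relation.ReflTransGen.tail (Finset.mem_filter.1 hp).2
        ⟨hpz, hKF hp, hz⟩
    have hstep : ∀ p p', p ∈ F → p' ∈ F → G.Adj p p' →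
        ∀ z, ℓ z = d - 1 → (G.Adj p z ↔ G.Adj p' z) := by
      intro p p' hp hp' hpp' z hz
      have hpd := ((hFmem p).1 hp).2
      have hp'd := ((hFmem p').1 hp').2
      constructor
      · intro h
        exact hsym _ _ (LGraph.shared_below_adj hG hdh hv hr hd1 hpd hp'd hpp'
          (hsym _ _ h) hz)
      · intro h
        exact hsym _ _ (LGraph.shared_below_adj hG hdh hv hr hd1 hp'd hpd
          (hsym _ _ hpp') (hsym _ _ h) hz)
    have hsharedx : ∀ p ∈ K, ∀ z, ℓ z = d - 1 → (G.Adj x z ↔ G.Adj p z) := by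
      intro p hp
      have hreach := (Finset.mem_filter.1 hp).2
      clear hp
      induction hreach with
      | refl => intro z hz; exact Iff.rfl
      | @tail b c hab hbc ih =>
        intro z hz
        exact (ih z hz).trans (hstep b c hbc.2.1 hbc.2.2 hbc.1 z hz)
    have hshared : ∀ p ∈ K, ∀ q ∈ K, ∀ z, ℓ z = d - 1 →
        (G.Adj p z ↔ G.Adj q z) := by
      intro p hp q hq z hz
      exact (hsharedx p hp z hz).symm.trans (hsharedx q hq z hz)
    -- a common lower neighbour
    obtain ⟨z₀, hz₀x, hz₀v, hz₀l⟩ :=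
      hpen x (hCverts x (hFC hxF)) (d - 1) (by rw [((hFmem x).1 hxF).2]; omega)
    have hMz : ∀ p ∈ K, G.Adj p z₀ :=
      fun p hp => (hsharedx p hp z₀ hz₀l).1 (hsym _ _ hz₀x)
    -- K is P4-free
    have hP4K : ∀ a b c e, a ∈ K → b ∈ K → c ∈ K → e ∈ K →
        G.Adj a b → G.Adj b c → G.Adj c e → ¬ G.Adj a c → ¬ G.Adj b e →
        ¬ G.Adj a e → False := by
      intro a b c e ha hb hc he h1 h2 h3 h4 h5 h6
      have hane : a ≠ e := by
        intro h; subst h; exact h4 (hsym _ _ h3)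
      have hd3 := LGraph.dist_of_P4 hG hdh h1 h2 h3 h4 h6 h5
      have hd2 := LGraph.dist_eq_two_of hG hane h6 (hMz a ha) (hsym _ _ (hMz e he))
      omega
    obtain ⟨p, hpK, q, hqK, hpq, htw⟩ :=
      cograph_twins K.card K G.Adj le_rfl hsym hirr hK2 hP4K
    have hpF := hKF hpK
    have hqF := hKF hqK
    have hiff : ∀ y', y' ≠ p → y' ≠ q → (G.Adj p y' ↔ G.Adj q y') := by
      have main : ∀ p' q', p' ∈ K → q' ∈ K →
          (∀ r ∈ K, r ≠ p' → r ≠ q' → (G.Adj p' r ↔ G.Adj q' r)) →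
          ∀ y', y' ≠ p' → y' ≠ q' → G.Adj p' y' → G.Adj q' y' := by
        intro p' q' hp' hq' htw' y' hyp hyq hadj
        rcases hFnb p' (hKF hp') y' hadj with ⟨hyv, hdd⟩ | ⟨hyC, hyl | hyl⟩
        · refine (hshared p' hp' q' hq' y' ?_).1 hadj
          rw [hyv, hlvl0]; omega
        · exact (hshared p' hp' q' hq' y' hyl).1 hadj
        · have hyF : y' ∈ F := (hFmem y').2 ⟨hyC, hyl⟩
          have hyK : y' ∈ K := hKclose p' hp' y' hyF hadj
          exact (htw' y' hyK hyp hyq).1 hadj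
      intro y' h1 h2
      constructor
      · exact main p q hpK hqK htw y' h1 h2
      · exact main q p hqK hpK (fun r hr ha hb => (htw r hr hb ha).symm) y' h2 h1
    refine ⟨p, ((hCmem p).1 (hFC hpF)).2, ?_⟩
    exact htwin_foliage p q (hCverts p (hFC hpF)) (hCverts q (hFC hqF)) hpq hiff
  · -- Case II : the top level is independent
    push_neg at hFadj
    by_cases hdeq : d = 1
    · -- C = {w}, and w is a leaf
      have hCF : ∀ c ∈ C, c ∈ F := by
        intro c hc
        refine (hFmem c).2 ⟨hc, ?_⟩
        have h1 := hlvlpos c hc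
        have h2 := hxmax c hc
        omega
      have hCw : ∀ c ∈ C, c = w := by
        intro c hc
        have hrw : R c := ((hCmem c).1 hc).2
        rcases Relation.ReflTransGen.cases_head hrw with heq | ⟨z, hz, _⟩
        · exact heq.symm
        · exfalso
          obtain ⟨h1, _, h3⟩ := (hDadj _ _).1 hz
          have hzC : z ∈ C := hCclose w hwC z h1 h3
          exact hFadj w (hCF w hwC) z (hCF z hzC) h1
      have hwadjv : G.Adj w v := by
        have hlw : G.dist v w = 1 := by
          have h5 := ((hFmem w).1 (hCF w hwC)).2
          show ℓ w = 1
          omega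
        exact hsym _ _ (LGraph.adj_of_dist_eq_one (hr w hwv) hlw)
      refine ⟨w, Relation.ReflTransGen.refl, ?_⟩
      refine Finset.mem_filter.2 ⟨hwv, Or.inl ⟨hwv, v, ?_⟩⟩
      ext y
      simp only [LGraph.nbhd, Set.mem_setOf_eq, Set.mem_singleton_iff]
      constructor
      · intro h
        by_contra hyv
        have hyC : y ∈ C := hCclose w hwC y h hyv
        exact hirr w ((hCw y hyC) ▸ h)
      · intro h; subst h; exact hwadjv
    · have hd2 : 2 ≤ d := by omega
      have hFnb2 : ∀ x ∈ F, ∀ y, G.Adj x y → y ∈ C ∧ ℓ y = d - 1 := by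
        intro x hx y hxy
        rcases hFnb x hx y hxy with ⟨_, hh⟩ | ⟨hyC, hyl | hyl⟩
        · omega
        · exact ⟨hyC, hyl⟩
        · exact absurd hxy (hFadj x hx y ((hFmem y).2 ⟨hyC, hyl⟩))
      by_cases hsmall : ∃ x ∈ F, (N x).card ≤ 1
      · -- a top vertex of degree one : a leaf
        obtain ⟨x, hxF, hcard1⟩ := hsmall
        obtain ⟨z, hzx, hzv, hzl⟩ := hpen x (hCverts x (hFC hxF)) (d - 1)
          (by rw [((hFmem x).1 hxF).2]; omega)
        have hzN : z ∈ N x := hNmem' x z (hsym _ _ hzx)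
        have hNsing : ∀ y ∈ N x, y = z := by
          intro y hy
          exact Finset.card_le_one.1 hcard1 y hy z hzN
        refine ⟨x, ((hCmem x).1 (hFC hxF)).2, ?_⟩
        refine Finset.mem_filter.2 ⟨hCverts x (hFC hxF),
          Or.inl ⟨hCverts x (hFC hxF), z, ?_⟩⟩
        ext y
        simp only [LGraph.nbhd, Set.mem_setOf_eq, Set.mem_singleton_iff]
        constructor
        · intro h
          exact hNsing y (hNmem' x y h)
        · intro h; subst h; exact hsym _ _ hzx
      · push_neg at hsmall
        have hsmall' : ∀ x ∈ F, 2 ≤ (N x).card := by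
          intro x hx
          have := hsmall x hx
          omega
        obtain ⟨x, hxF, hmin⟩ :=
          Finset.exists_min_image F (fun s => (N s).card) ⟨xm, hxmF⟩
        have hxl := ((hFmem x).1 hxF).2
        -- neighbours of a common top vertex share their lower neighbours
        have hsh : ∀ s ∈ F, ∀ p ∈ N s, ∀ q ∈ N s, ∀ z, ℓ z = d - 2 →
            G.Adj p z → G.Adj q z := by
          intro s hsF p hp q hq z hz hpz
          by_cases hpqeq : p = q
          · exact hpqeq ▸ hpz
          · have hsd := ((hFmem s).1 hsF).2
            have hpl := (hFnb2 s hsF p ((hNmem s p).1 hp).2).2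
            have hql := (hFnb2 s hsF q ((hNmem s q).1 hq).2).2
            have hd1' : 1 ≤ d - 1 := by omega
            have hz' : G.dist v z = (d - 1) - 1 := by show ℓ z = (d - 1) - 1; omega
            have hpl' : G.dist v p = d - 1 := hpl
            have hql' : G.dist v q = d - 1 := hql
            by_cases hpq : G.Adj p q
            · exact hsym _ _ (LGraph.shared_below_adj hG hdh hv hr hd1' hpl'
                hql' hpq (hsym _ _ hpz) hz')
            · have hsd' : G.dist v s = (d - 1) + 1 := by show ℓ s = (d - 1) + 1; omega
              exact hsym _ _ (LGraph.shared_below_common_upper hG hdh hv hr hd1'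
                hpl' hql' hpqeq hpq hsd' (hsym _ _ ((hNmem s p).1 hp).2)
                ((hNmem s q).1 hq).2 (hsym _ _ hpz) hz')
        -- a common neighbour two levels below the top
        obtain ⟨p₀, hp₀⟩ := Finset.card_pos.1
          (by have := hsmall' x hxF; omega : 0 < (N x).card)
        have hp₀l := (hFnb2 x hxF p₀ ((hNmem x p₀).1 hp₀).2).2
        obtain ⟨w₀, hw₀p₀, hw₀v, hw₀l⟩ := hpen p₀ ((hNmem x p₀).1 hp₀).1 (d - 2)
          (by rw [hp₀l]; omega)
        have hw₀N : ∀ t ∈ N x, G.Adj t w₀ :=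
          fun t ht => hsh x hxF p₀ hp₀ t ht w₀ hw₀l (hsym _ _ hw₀p₀)
        have hnadj_lvl : ∀ a b, ℓ a = d → ℓ b = d - 2 → ¬ G.Adj a b := by
          intro a b ha hb h
          have := hadj_le b a (hsym _ _ h)
          omega
        have hne_lvl : ∀ a b : V, ℓ a ≠ ℓ b → a ≠ b := by
          intro a b h hh
          exact h (hh ▸ rfl)
        have hnxw : ¬ G.Adj x w₀ := hnadj_lvl x w₀ hxl hw₀l
        -- nestedness of top neighbourhoods
        have hnest : ∀ s ∈ F, ∀ p, p ∈ N x → p ∈ N s →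
            (∀ t ∈ N x, t ∈ N s) ∨ (∀ t ∈ N s, t ∈ N x) := by
          intro s hsF p hpx hps
          by_contra hcon
          push_neg at hcon
          obtain ⟨⟨a, haNx, haNs⟩, b, hbNs, hbNx⟩ := hcon
          have hxs : x ≠ s := by
            intro h; exact haNs (h ▸ haNx)
          have hxsadj : ¬ G.Adj x s := hFadj x hxF s hsF
          have hAxa : G.Adj x a := ((hNmem x a).1 haNx).2
          have hAxp : G.Adj x p := ((hNmem x p).1 hpx).2
          have hAsp : G.Adj s p := ((hNmem s p).1 hps).2
          have hAsb : G.Adj s b := ((hNmem s b).1 hbNs).2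
          have hnsa : ¬ G.Adj s a := by
            intro h; exact haNs (hNmem' s a h)
          have hnxb : ¬ G.Adj x b := by
            intro h; exact hbNx (hNmem' x b h)
          have hbl := (hFnb2 s hsF b hAsb).2
          have hsl := ((hFmem s).1 hsF).2
          have hAaw : G.Adj a w₀ := hw₀N a haNx
          have hApw : G.Adj p w₀ := hw₀N p hpx
          have hAbw : G.Adj b w₀ := hsh s hsF p hps b hbNs w₀ hw₀l hApw
          have hab_ne : a ≠ b := fun h => hnxb (h ▸ hAxa)
          have hnsw : ¬ G.Adj s w₀ := hnadj_lvl s w₀ hsl hw₀l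
          have hxbne : x ≠ b := hne_lvl x b (by rw [hxl, hbl]; omega)
          by_cases hab : G.Adj a b
          · have h3 := LGraph.dist_of_P4 hG hdh hAxa hab (hsym _ _ hAsb) hnxb
              hxsadj (fun h => hnsa (hsym _ _ h))
            have h2 := LGraph.dist_eq_two_of hG hxs hxsadj hAxp (hsym _ _ hAsp)
            omega
          · by_cases hap : G.Adj a p
            · by_cases hbp : G.Adj b p
              · have h3 := LGraph.dist_of_P4 hG hdh hAxa hAaw (hsym _ _ hAbw)
                  hnxw hnxb hab
                have h2 := LGraph.dist_eq_two_of hG hxbne hnxb hAxp (hsym _ _ hbp)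
                omega
              · have h3 := LGraph.dist_of_P4 hG hdh (hsym _ _ hAsb) hAsp
                  (hsym _ _ hap) hbp (fun h => hab (hsym _ _ h)) hnsa
                have h2 := LGraph.dist_eq_two_of hG (Ne.symm hab_ne)
                  (fun h => hab (hsym _ _ h)) hAbw (hsym _ _ hAaw)
                omega
            · by_cases hbp : G.Adj b p
              · have h3 := LGraph.dist_of_P4 hG hdh (hsym _ _ hAxa) hAxp
                  (hsym _ _ hbp) hap hab hnxb
                have h2 := LGraph.dist_eq_two_of hG hab_ne hab hAaw
                  (hsym _ _ hAbw)
                omega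
              · have h3 := LGraph.dist_of_P5 hG hdh (hsym _ _ hAxa) hAxp
                  (hsym _ _ hAsp) hAsb hap (fun h => hnsa (hsym _ _ h)) hab
                  hxsadj hnxb (fun h => hbp (hsym _ _ h))
                have h2 := LGraph.dist_eq_two_of hG hab_ne hab hAaw
                  (hsym _ _ hAbw)
                omega
        -- the neighbourhood of x is P4-free
        have hP4N : ∀ a b c e, a ∈ N x → b ∈ N x → c ∈ N x → e ∈ N x →
            G.Adj a b → G.Adj b c → G.Adj c e → ¬ G.Adj a c → ¬ G.Adj b e →
            ¬ G.Adj a e → False := by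
          intro a b c e ha hb hc he h1 h2 h3 h4 h5 h6
          have hane : a ≠ e := fun h => h4 (h ▸ (hsym _ _ h3))
          have hd3 := LGraph.dist_of_P4 hG hdh h1 h2 h3 h4 h6 h5
          have hd2 := LGraph.dist_eq_two_of hG hane h6
            (hsym _ _ ((hNmem x a).1 ha).2) ((hNmem x e).1 he).2
          omega
        obtain ⟨p, hpN, q, hqN, hpq, htw⟩ :=
          cograph_twins (N x).card (N x) G.Adj le_rfl hsym hirr
            (hsmall' x hxF) hP4N
        have hAxp : G.Adj x p := ((hNmem x p).1 hpN).2
        have hAxq : G.Adj x q := ((hNmem x q).1 hqN).2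
        have hpC := (hFnb2 x hxF p hAxp).1
        have hqC := (hFnb2 x hxF q hAxq).1
        have hiff : ∀ y, y ≠ p → y ≠ q → (G.Adj p y ↔ G.Adj q y) := by
          have main : ∀ p' q', p' ∈ N x → q' ∈ N x →
              (∀ r ∈ N x, r ≠ p' → r ≠ q' → (G.Adj p' r ↔ G.Adj q' r)) →
              ∀ y, y ≠ p' → y ≠ q' → G.Adj p' y → G.Adj q' y := by
            intro p' q' hp' hq' htw' y hyp hyq hadj
            have hAxp' : G.Adj x p' := ((hNmem x p').1 hp').2
            have hAxq' : G.Adj x q' := ((hNmem x q').1 hq').2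
            have hp'l := (hFnb2 x hxF p' hAxp').2
            have hq'l := (hFnb2 x hxF q' hAxq').2
            have hp'C := (hFnb2 x hxF p' hAxp').1
            have hyl1 := hadj_le p' y hadj
            have hyl2 := hadj_le y p' (hsym _ _ hadj)
            rw [hp'l] at hyl1 hyl2
            rcases (show ℓ y = d - 2 ∨ ℓ y = d - 1 ∨ ℓ y = d by omega)
              with hyl | hyl | hyl
            · exact hsh x hxF p' hp' q' hq' y hyl hadj
            · by_cases hyN : y ∈ N x
              · exact (htw' y hyN hyp hyq).1 hadj
              · have hnxy : ¬ G.Adj x y := fun h => hyN (hNmem' x y h)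
                have hd1' : 1 ≤ d - 1 := by omega
                have hAyw : G.Adj y w₀ := by
                  have hz' : G.dist v w₀ = (d - 1) - 1 := by show ℓ w₀ = (d - 1) - 1; omega
                  exact hsym _ _ (LGraph.shared_below_adj hG hdh hv hr hd1'
                    (show G.dist v p' = d - 1 from hp'l)
                    (show G.dist v y = d - 1 from hyl) hadj
                    (hsym _ _ (hw₀N p' hp')) hz')
                have hxy_ne : x ≠ y := hne_lvl x y (by rw [hxl, hyl]; omega)
                by_cases hpq2 : G.Adj p' q'
                · by_contra hcon
                  have h3 := LGraph.dist_of_P4 hG hdh hAxq' (hw₀N q' hq')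
                    (hsym _ _ hAyw) hnxw hnxy hcon
                  have h2 := LGraph.dist_eq_two_of hG hxy_ne hnxy hAxp' hadj
                  omega
                · by_contra hcon
                  have h3 := LGraph.dist_of_P4 hG hdh (hsym _ _ hAxq') hAxp'
                    hadj (fun h => hpq2 (hsym _ _ h)) hcon hnxy
                  have h2 := LGraph.dist_eq_two_of hG (Ne.symm hyq) hcon
                    (hw₀N q' hq') (hsym _ _ hAyw)
                  omega
            · have hyv2 : y ≠ v := by
                intro h
                rw [h, hlvl0] at hyl
                omega
              have hyC : y ∈ C := hCclose p' hp'C y hadj hyv2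
              have hyF : y ∈ F := (hFmem y).2 ⟨hyC, hyl⟩
              have hp'Ny : p' ∈ N y := hNmem' y p' (hsym _ _ hadj)
              rcases hnest y hyF p' hp' hp'Ny with hsub | hsub
              · exact hsym _ _ ((hNmem y q').1 (hsub q' hq')).2
              · have heq : N y = N x :=
                  Finset.eq_of_subset_of_card_le (fun t ht => hsub t ht)
                    (hmin y hyF)
                have hq'y : q' ∈ N y := heq ▸ hq'
                exact hsym _ _ ((hNmem y q').1 hq'y).2
          intro y h1 h2
          constructor
          · exact main p q hpN hqN htw y h1 h2
          · exact main q p hqN hpN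
              (fun r hr ha hb => (htw r hr hb ha).symm) y h2 h1
        refine ⟨p, ((hCmem p).1 hpC).2, ?_⟩
        exact htwin_foliage p q (hCverts p hpC) (hCverts q hqC) hpq hiff
end
end

section
/- Let R be a 3-regular graph and Λ(R) its triangular-expansion. If R is Hamiltonian, then Λ(R) allows a SOET with respect to V(R). -/
universe u v w

attribute [local instance 10] Classical.propDecidable

noncomputable section

variable {V : Type u} {E : Type v} {W : Type w}

/-- An undirected multigraph: an abstract finite edge set `edges` over an edge
type `E`, with each edge assigned an unordered pair of endpoints (possibly
equal, giving a self-loop).  Parallel edges are distinct elements of `edges`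
with the same endpoints. -/
structure Multigraph (V : Type u) (E : Type v) where
  verts : Finset V
  edges : Finset E
  ends : E → Sym2 V

namespace Multigraph

/-- All endpoints of edges lie in the vertex set. -/
def IsWellFormed (F : Multigraph V E) : Prop :=
  ∀ e ∈ F.edges, ∀ x, x ∈ F.ends e → x ∈ F.verts

/-- Degree of a vertex; a self-loop contributes `2`. -/
def degree (F : Multigraph V E) (x : V) : ℕ :=
  ∑ e ∈ F.edges, (if F.ends e = s(x, x) then 2 else if x ∈ F.ends e then 1 else 0)

/-- Every vertex has degree `4`. -/
def IsFourRegular (F : Multigraph V E) : Prop := ∀ x ∈ F.verts, F.degree x = 4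

/-- Connectedness of a multigraph. -/
def Connected (F : Multigraph V E) : Prop :=
  F.verts.Nonempty ∧ ∀ a ∈ F.verts, ∀ b ∈ F.verts,
    Relation.ReflTransGen (fun x y => ∃ e ∈ F.edges, F.ends e = s(x, y)) a b

/-- `(vs, es)` is an Eulerian tour of `F`: a closed trail traversing each
edge exactly once.  `vs` is the cyclic list of visited vertices and `es` the
corresponding list of edges, edge `es[i]` joining `vs[i]` to `vs[i+1 mod n]`.
The word `vs` is the induced double occurrence word `m(U)`. -/
def IsEulerianTour (F : Multigraph V E) (vs : List V) (es : List E) : Prop :=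
  vs ≠ [] ∧ es.length = vs.length ∧ es.Nodup ∧ es.toFinset = F.edges ∧
    (∀ x ∈ vs, x ∈ F.verts) ∧
    (∀ p ∈ es.zip (vs.zip (vs.rotate 1)), F.ends p.1 = s(p.2.1, p.2.2))

/-- `(vs, es)` is a semi-ordered Eulerian tour (SOET) of `F` with respect to
`V'`: an Eulerian tour whose induced word, restricted to the letters of `V'`,
has the form `s s` for an enumeration `s` of `V'`. -/
def IsSOET (F : Multigraph V E) (V' : Finset V) (vs : List V) (es : List E) : Prop :=
  F.IsEulerianTour vs es ∧
    ∃ s : List V, s.Nodup ∧ s.toFinset = V' ∧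
      vs.filter (fun x => decide (x ∈ V')) = s ++ s

/-- `F` allows a SOET with respect to `V'`. -/
def HasSOET (F : Multigraph V E) (V' : Finset V) : Prop :=
  ∃ vs es, F.IsSOET V' vs es

end Multigraph

/-- Vertex type of a triangular-expansion: `baseV v` is the original vertex
`v`, `outerV v w` is the outer vertex `v^(w)` of the triangle subgraph `T_v`
(connecting towards the neighbour `w`), and `innerV v w` is the inner vertex
`ṽ^(w)`. -/
abbrev TriV (V : Type u) := V ⊕ ((V × V) ⊕ (V × V))

def baseV (x : V) : TriV V := Sum.inl x
def outerV (x y : V) : TriV V := Sum.inr (Sum.inl (x, y))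
def innerV (x y : V) : TriV V := Sum.inr (Sum.inr (x, y))

/-- The neighbours of `x` in `G`, as a finset. -/
def LGraph.nbrFinset (G : LGraph V) (x : V) : Finset V :=
  G.verts.filter fun u => G.Adj x u

/-- Every vertex has exactly three neighbours. -/
def LGraph.IsThreeRegular (G : LGraph V) : Prop :=
  ∀ x ∈ G.verts, (G.nbrFinset x).card = 3

/-- `G` has a Hamiltonian cycle: a cyclic sequence of (at least three)
pairwise distinct vertices covering `V(G)`, with consecutive ones adjacent. -/
def LGraph.IsHamiltonian (G : LGraph V) : Prop :=
  ∃ vs : List V, 3 ≤ vs.length ∧ vs.Nodup ∧ vs.toFinset = G.verts ∧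
    ∀ p ∈ vs.zip (vs.rotate 1), G.Adj p.1 p.2

/-- The nine edges of the triangle subgraph `T_x`, where the three
neighbours of `x` have been assigned the roles `(a, b, c) = (x, y, z)` of
Definition 20 of the paper. -/
def triExpIntra (x a b c : V) : Multiset (Sym2 (TriV V)) :=
  {s(baseV x, innerV x b), s(baseV x, innerV x c), s(baseV x, outerV x b),
   s(baseV x, outerV x c), s(innerV x b, innerV x c), s(outerV x b, innerV x b),
   s(outerV x c, innerV x c), s(outerV x a, innerV x b), s(outerV x a, innerV x c)}

/-- The vertex set of the triangular-expansion determined by the role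
assignment `ch`. -/
def triExpVerts (R : LGraph V) (ch : V → V × V × V) : Finset (TriV V) :=
  R.verts.biUnion fun x =>
    {baseV x, outerV x (ch x).1, outerV x (ch x).2.1, outerV x (ch x).2.2,
     innerV x (ch x).2.1, innerV x (ch x).2.2}

/-- The edge multiset of the triangular-expansion determined by `ch`:
the nine intra-triangle edges for each vertex, together with a double edge
`{x^(w), w^(x)}` for every edge `(x, w)` of `R` (each unordered edge of `R`
is counted once from each direction, giving multiplicity two). -/
def triExpEdges (R : LGraph V) (ch : V → V × V × V) : Multiset (Sym2 (TriV V)) :=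
  (R.verts.val.bind fun x => triExpIntra x (ch x).1 (ch x).2.1 (ch x).2.2) +
  (R.verts.val.bind fun x => (R.nbrFinset x).val.map fun y => s(outerV x y, outerV y x))

/-- `Λ` is a triangular-expansion of the 3-regular graph `R`: for some
assignment `ch` of the roles `(x, y, z)` to the three neighbours of each
vertex, the vertex set of `Λ` is `triExpVerts R ch` and the multiset of
edge-endpoints of `Λ` is exactly `triExpEdges R ch`. -/
def IsTriangularExpansion (R : LGraph V) (Lam : Multigraph (TriV V) E) : Prop :=
  ∃ ch : V → V × V × V,
    (∀ x ∈ R.verts, (ch x).1 ≠ (ch x).2.1 ∧ (ch x).1 ≠ (ch x).2.2 ∧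
      (ch x).2.1 ≠ (ch x).2.2 ∧ R.nbrFinset x = {(ch x).1, (ch x).2.1, (ch x).2.2}) ∧
    Lam.verts = triExpVerts R ch ∧
    Multiset.map Lam.ends Lam.edges.val = triExpEdges R ch

/-- `a` and `b` are consecutive (with respect to `V'`) in the word `vs`:
`vs` contains a sub-word `a X b` or `b X a` with no letter of `X` in `V'`. -/
def ConsecutiveIn (vs : List W) (V' : Finset W) (a b : W) : Prop :=
  ∃ A X B : List W, (∀ x ∈ X, x ∉ V') ∧
    (vs = A ++ a :: (X ++ b :: B) ∨ vs = A ++ b :: (X ++ a :: B))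

/-- `(vs, es)` is a HAMSOET on `Λ` with respect to `R`: a SOET with respect
to `V(R)` in which any two vertices of `V(R)` that are consecutive are
adjacent in `R`. -/
def IsHAMSOET (R : LGraph V) (Lam : Multigraph (TriV V) E)
    (vs : List (TriV V)) (es : List E) : Prop :=
  Lam.IsSOET (R.verts.image baseV) vs es ∧
    ∀ a b : V, a ∈ R.verts → b ∈ R.verts →
      ConsecutiveIn vs (R.verts.image baseV) (baseV a) (baseV b) → R.Adj a b

/-!
Let `g 0, …, g (n - 1)` be the Hamiltonian cycle of `R`. Each `g i` has exactly one neighbour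
`g (J i)` off the cycle, and `J` is a fixed-point-free involution of the indices. The tour runs
around the cycle twice. Each time it passes the triangle `T_{g i}` it enters at `g i^(g (i - 1))`,
leaves at `g i^(g (i + 1))` and then crosses to `T_{g (i + 1)}` along one of the two parallel
edges; whichever of the three neighbours plays the role `x` of the definition, the nine edges of
`T_{g i}` split into two such passages, each visiting `g i` exactly once. The double edge of the
chord `{g i, g (J i)}` is taken as a detour `g i^(g (J i)) → g (J i)^(g i) → g i^(g (J i))` in the
first passage through the triangle of the endpoint with the smaller index. Restricted to `V(R)`,
the tour reads `g 0 ⋯ g (n - 1)` twice.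
-/

/-- The edges traversed by the walk `l ++ [z]`. -/
def walkEdges : List W → W → List (Sym2 W)
  | [], _ => []
  | v :: l, z => s(v, l.headD z) :: walkEdges l z

@[simp] lemma walkEdges_nil (z : W) : walkEdges [] z = [] := rfl

@[simp] lemma walkEdges_cons (v : W) (l : List W) (z : W) :
    walkEdges (v :: l) z = s(v, l.headD z) :: walkEdges l z := rfl

lemma walkEdges_append (l₁ l₂ : List W) (z : W) :
    walkEdges (l₁ ++ l₂) z = walkEdges l₁ (l₂.headD z) ++ walkEdges l₂ z := by
  induction l₁ with
  | nil => rfl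
  | cons v l₁ ih => cases l₁ <;> cases l₂ <;> simp_all

lemma walkEdges_eq_map_zip (l : List W) (z : W) :
    walkEdges l z = (l.zip (l.tail ++ [z])).map fun p => s(p.1, p.2) := by
  induction l with
  | nil => rfl
  | cons v l ih => cases l <;> simp_all

lemma length_walkEdges (l : List W) (z : W) : (walkEdges l z).length = l.length := by
  induction l <;> simp_all

lemma exists_mem_walkEdges_of_mem {l : List W} {y : W} (z : W) (hy : y ∈ l) :
    ∃ e ∈ walkEdges l z, y ∈ e := by
  induction l with
  | nil => simp at hy
  | cons v l ih =>
    rcases List.mem_cons.mp hy with rfl | hy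
    · exact ⟨_, List.mem_cons_self, Sym2.mem_mk_left _ _⟩
    · obtain ⟨e, he, hye⟩ := ih hy
      exact ⟨e, List.mem_cons_of_mem _ he, hye⟩

lemma walkEdges_flatMap {α : Type*} (S : α → List W) (h : α → W) {l : List α}
    (hS : ∀ a ∈ l, (S a).head? = some (h a)) (z : W) :
    walkEdges (l.flatMap S) z =
      (l.zip (l.tail.map h ++ [z])).flatMap fun p => walkEdges (S p.1) p.2 := by
  induction l with
  | nil => rfl
  | cons a l ih =>
    rw [List.flatMap_cons, walkEdges_append, ih fun b hb => hS b (List.mem_cons_of_mem _ hb)]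
    cases l with
    | nil => simp
    | cons b l =>
      have hb : (S b).head? = some (h b) := hS b (by simp)
      simp [List.headD_eq_head?_getD, List.head?_flatMap, hb]

lemma List.finRange_tail_append_zero (m : ℕ) :
    (List.finRange (m + 1)).tail ++ [0] = (List.finRange (m + 1)).map (· + 1) := by
  conv_lhs => rw [List.finRange_succ]
  simp [List.finRange_succ_last, Function.comp_def, Fin.coeSucc_eq_succ]

lemma coe_walkEdges_flatMap_finRange {n : ℕ} [NeZero n] (S : Fin n → List W) (h : Fin n → W)
    (hS : ∀ i, (S i).head? = some (h i)) :
    (walkEdges ((List.finRange n).flatMap S) (h 0) : Multiset (Sym2 W)) =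
      ∑ i, (walkEdges (S i) (h (i + 1)) : Multiset (Sym2 W)) := by
  obtain ⟨m, rfl⟩ := Nat.exists_eq_succ_of_ne_zero (NeZero.ne n)
  have hsucc : (List.finRange (m + 1)).tail.map h ++ [h 0] =
      (List.finRange (m + 1)).map (h ∘ (· + 1)) := by
    rw [← List.map_map, ← List.finRange_tail_append_zero, List.map_append, List.map_singleton]
  have hzip := List.zip_map' (f := id) (g := h ∘ (· + 1)) (l := List.finRange (m + 1))
  rw [List.map_id] at hzip
  rw [walkEdges_flatMap S h (fun i _ => hS i), hsucc, hzip, Fin.sum_univ_def, ← Multiset.sum_coe]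
  simp [← Multiset.coe_bind, Multiset.bind, Multiset.join, Function.comp_def]

lemma Multiset.exists_list_of_map_eq_coe {α β : Type*} (f : α → β) :
    ∀ (l : List β) (s : Multiset α), s.map f = l →
      ∃ l' : List α, (l' : Multiset α) = s ∧ l'.map f = l
  | [], s, h => ⟨[], by simpa [eq_comm] using h, rfl⟩
  | b :: l, s, h => by
    obtain ⟨a, ha, rfl, hrest⟩ := (Multiset.map_eq_cons f s l b).mpr h
    obtain ⟨l', hl', hmap⟩ := Multiset.exists_list_of_map_eq_coe f l _ hrest
    exact ⟨a :: l', by rw [← Multiset.cons_coe, hl', Multiset.cons_erase ha], by simp [hmap]⟩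

lemma List.filter_eq_of_filter_isLeft {α β : Type*} {l l' : List (α ⊕ β)} {p : α ⊕ β → Bool}
    (hp : ∀ y, p y → y.isLeft) (hl : l.filter Sum.isLeft = l') (hl' : ∀ y ∈ l', p y) :
    l.filter p = l' := by
  have hpq : ∀ y, (p y && y.isLeft) = p y := fun y => by cases h : p y <;> simp [h, hp y]
  calc l.filter p = (l.filter Sum.isLeft).filter p := by
        rw [List.filter_filter, List.filter_congr fun y _ => hpq y]
    _ = l' := by rw [hl, List.filter_eq_self.mpr hl']

namespace Multigraph

lemma exists_isEulerianTour {F : Multigraph V E} (hF : F.IsWellFormed) {vs : List V} {z : V}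
    (hz : vs.head? = some z) (h : F.edges.val.map F.ends = walkEdges vs z) :
    ∃ es, F.IsEulerianTour vs es := by
  obtain ⟨es, hes, hmap⟩ := Multiset.exists_list_of_map_eq_coe F.ends _ _ h
  have hnodup : es.Nodup := by simpa [← hes] using F.edges.nodup
  obtain ⟨t, rfl⟩ : ∃ t, vs = z :: t := List.head?_eq_some_iff.mp hz
  refine ⟨es, List.cons_ne_nil _ _, ?_, hnodup, ?_, ?_, ?_⟩
  · rw [← length_walkEdges _ z, ← hmap, List.length_map]
  · rw [← Finset.val_inj, List.toFinset_val, hnodup.dedup, hes]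
  · intro y hy
    obtain ⟨_, hw, hyw⟩ := exists_mem_walkEdges_of_mem z hy
    rw [← hmap] at hw
    obtain ⟨e, he, rfl⟩ := List.mem_map.mp hw
    exact hF e (by rw [← Finset.mem_val, ← hes]; exact he) y hyw
  · intro p hp
    have hp' := List.mem_map_of_mem (f := Prod.map F.ends id) hp
    rw [← List.zip_map_left, hmap, walkEdges_eq_map_zip, List.zip_map_left] at hp'
    have hdiag := List.zip_map' (f := id) (g := id) (l := (z :: t).zip (t ++ [z]))
    simp only [List.tail_cons, List.rotate_cons_succ, List.rotate_zero, List.map_id] at hp' hdiag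
    rw [hdiag, List.map_map, List.mem_map] at hp'
    obtain ⟨q, -, hq⟩ := hp'
    simp only [Function.comp_apply, Prod.map, id, Prod.mk.injEq] at hq
    rw [← hq.1, ← hq.2]

lemma IsEulerianTour.isSOET {F : Multigraph (TriV V) E} {vs : List (TriV V)} {es : List E}
    (hT : F.IsEulerianTour vs es) {w : List V} (hw : w.Nodup)
    (hleft : vs.filter Sum.isLeft = w.map baseV ++ w.map baseV) :
    F.IsSOET (w.toFinset.image baseV) vs es := by
  refine ⟨hT, w.map baseV, hw.map Sum.inl_injective, by ext; simp, ?_⟩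
  refine List.filter_eq_of_filter_isLeft (fun y hy => ?_) hleft fun y hy => ?_
  · simp only [decide_eq_true_eq, Finset.mem_image] at hy
    obtain ⟨x, -, rfl⟩ := hy
    rfl
  · rw [List.mem_append, or_self] at hy
    obtain ⟨x, hx, rfl⟩ := List.mem_map.mp hy
    simp only [decide_eq_true_eq]
    exact Finset.mem_image_of_mem _ (List.mem_toFinset.mpr hx)

end Multigraph

lemma Fintype.sum_eq_sum_ite_lt_of_involutive {ι M : Type*} [Fintype ι] [LinearOrder ι]
    [AddCommMonoid M] {J : ι → ι} (hJ : Function.Involutive J) (hfix : ∀ i, J i ≠ i) {f : ι → M}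
    (hf : ∀ i, f (J i) = f i) :
    ∑ i, f i = ∑ i, if i < J i then f i + f i else 0 := by
  have hswap : ∑ i, (if J i < i then f i else 0) = ∑ i, if i < J i then f i else 0 :=
    Fintype.sum_equiv (hJ.toPerm J) _ _ fun i => by simp [hJ i, hf]
  calc ∑ i, f i = ∑ i, ((if i < J i then f i else 0) + if J i < i then f i else 0) := by
        refine Finset.sum_congr rfl fun i _ => ?_
        rcases lt_trichotomy i (J i) with h | h | h
        · simp [h, h.not_gt]
        · exact absurd h.symm (hfix i)
        · simp [h, h.not_gt]
    _ = ∑ i, if i < J i then f i + f i else 0 := by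
        rw [Finset.sum_add_distrib, hswap, ← Finset.sum_add_distrib]
        exact Finset.sum_congr rfl fun i _ => by split_ifs <;> simp

lemma Fin.sub_one_ne_add_one {m : ℕ} (i : Fin (m + 3)) : i - 1 ≠ i + 1 := by
  intro h
  rw [sub_eq_iff_eq_add, add_assoc, left_eq_add, Fin.ext_iff] at h
  simp [Fin.val_add, Nat.mod_eq_of_lt] at h

namespace LGraph

lemma mem_nbrFinset {R : LGraph V} (hR : R.IsGraph) {x y : V} :
    y ∈ R.nbrFinset x ↔ R.Adj x y := by
  simpa [nbrFinset] using fun h => (hR.2.2 x y h).2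

lemma exists_nbrFinset_val_eq {R : LGraph V} (h3 : R.IsThreeRegular) {x p q : V}
    (hx : x ∈ R.verts) (hp : p ∈ R.nbrFinset x) (hq : q ∈ R.nbrFinset x) (hpq : p ≠ q) :
    ∃ t ∈ R.nbrFinset x, (R.nbrFinset x).val = {p, q, t} := by
  have hq' : q ∈ (R.nbrFinset x).erase p := Finset.mem_erase.mpr ⟨hpq.symm, hq⟩
  obtain ⟨t, ht⟩ := (Finset.card_eq_one (s := ((R.nbrFinset x).erase p).erase q)).mp (by
    rw [Finset.card_erase_of_mem hq', Finset.card_erase_of_mem hp, h3 x hx])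
  have htmem : t ∈ ((R.nbrFinset x).erase p).erase q := by simp [ht]
  simp only [Finset.mem_erase] at htmem
  have hsplit : R.nbrFinset x = insert p (insert q {t}) := by
    rw [← ht, Finset.insert_erase hq', Finset.insert_erase hp]
  refine ⟨t, htmem.2.2, ?_⟩
  rw [hsplit, Finset.insert_val_of_notMem (by simp [hpq, htmem.2.1.symm]),
    Finset.insert_val_of_notMem (by simp [htmem.1.symm])]
  rfl

lemma IsHamiltonian.exists_embedding {R : LGraph V} (h : R.IsHamiltonian) :
    ∃ (m : ℕ) (g : Fin (m + 3) ↪ V),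
      R.verts = Finset.univ.map g ∧ ∀ i, R.Adj (g i) (g (i + 1)) := by
  obtain ⟨cyc, hlen, hnodup, hverts, hadj⟩ := h
  obtain ⟨m, hm⟩ : ∃ m, cyc.length = m + 3 := ⟨cyc.length - 3, by omega⟩
  let g : Fin (m + 3) ↪ V :=
    ⟨cyc.get ∘ Fin.cast hm.symm,
      (List.nodup_iff_injective_get.mp hnodup).comp (Fin.cast_injective _)⟩
  refine ⟨m, g, ?_, fun i => ?_⟩
  · ext y
    simp only [← hverts, List.mem_toFinset, List.mem_iff_get, Finset.mem_map, Finset.mem_univ,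
      true_and]
    exact ⟨fun ⟨n, hn⟩ => ⟨n.cast hm, hn⟩, fun ⟨i, hi⟩ => ⟨i.cast hm.symm, hi⟩⟩
  · have hi : i.val < (cyc.zip (cyc.rotate 1)).length := by simp [hm]
    simpa [g, List.getElem_rotate, Fin.val_add, hm] using hadj _ (List.getElem_mem hi)

lemma exists_chord_involution {R : LGraph V} (hR : R.IsGraph) (h3 : R.IsThreeRegular) {m : ℕ}
    (g : Fin (m + 3) ↪ V) (hV : R.verts = Finset.univ.map g)
    (hadj : ∀ i, R.Adj (g i) (g (i + 1))) :
    ∃ J : Fin (m + 3) → Fin (m + 3), Function.Involutive J ∧ (∀ i, J i ≠ i) ∧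
      ∀ i, (R.nbrFinset (g i)).val = {g (i - 1), g (i + 1), g (J i)} := by
  have hthird : ∀ i, ∃ j, (R.nbrFinset (g i)).val = {g (i - 1), g (i + 1), g j} := by
    intro i
    have hprev : g (i - 1) ∈ R.nbrFinset (g i) :=
      (mem_nbrFinset hR).mpr (hR.1 _ _ (by simpa using hadj (i - 1)))
    obtain ⟨t, ht, hval⟩ := exists_nbrFinset_val_eq h3 (by simp [hV]) hprev
      ((mem_nbrFinset hR).mpr (hadj i)) (g.injective.ne (Fin.sub_one_ne_add_one i))
    obtain ⟨j, -, rfl⟩ := Finset.mem_map.mp (hV ▸ (hR.2.2 _ _ ((mem_nbrFinset hR).mp ht)).2)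
    exact ⟨j, hval⟩
  choose J hJ using hthird
  have hadjJ : ∀ i, R.Adj (g i) (g (J i)) := fun i =>
    (mem_nbrFinset hR).mp (by rw [← Finset.mem_val, hJ i]; simp)
  refine ⟨J, fun i => ?_, fun i h => hR.2.1 (g i) (by simpa [h] using hadjJ i), hJ⟩
  have hi : g i ∈ (R.nbrFinset (g (J i))).val := (mem_nbrFinset hR).mpr (hR.1 _ _ (hadjJ i))
  have hnodup := (R.nbrFinset (g i)).nodup
  rw [hJ (J i)] at hi
  rw [hJ i] at hnodup
  simp only [Multiset.insert_eq_cons, Multiset.mem_cons, Multiset.mem_singleton,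
    g.injective.eq_iff, Multiset.nodup_cons, not_or] at hi hnodup
  rcases hi with h | h | h
  · exact absurd (eq_sub_iff_add_eq.mp h) hnodup.2.1
  · exact absurd (sub_eq_iff_eq_add.mpr h) hnodup.1.2
  · exact h.symm

end LGraph

def linkEdge (x y : V) : Sym2 (TriV V) := s(outerV x y, outerV y x)

lemma linkEdge_comm (x y : V) : linkEdge x y = linkEdge y x := Sym2.eq_swap

lemma triExpIntra_swap (x a b c : V) : triExpIntra x a b c = triExpIntra x a c b := by
  simp only [triExpIntra, Multiset.insert_eq_cons, ← Multiset.singleton_add, Sym2.eq_swap]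
  abel

lemma triExpIntra_cases {x a b c p q t : V} (hab : a ≠ b) (hac : a ≠ c) (hbc : b ≠ c)
    (h : ({a, b, c} : Finset V) = {p, q, t}) :
    triExpIntra x a b c = triExpIntra x t p q ∨ triExpIntra x a b c = triExpIntra x p t q ∨
      triExpIntra x a b c = triExpIntra x q t p := by
  have hmem : ∀ y, y = a ∨ y = b ∨ y = c ↔ y = p ∨ y = q ∨ y = t := by
    simpa using Finset.ext_iff.mp h
  rcases (hmem a).mp (.inl rfl) with rfl | rfl | rfl <;>
  rcases (hmem b).mp (.inr (.inl rfl)) with rfl | rfl | rfl <;>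
  rcases (hmem c).mp (.inr (.inr rfl)) with rfl | rfl | rfl <;>
  simp_all [triExpIntra_swap]

/-- `p`, `q`, `t` stand for the predecessor, successor and chord neighbour of `x`; `hT` says which
of them plays the role `x` in the triangle. -/
lemma exists_triangle_segments (x p q t : V) (d : Bool) (z : TriV V)
    {T : Multiset (Sym2 (TriV V))}
    (hT : T = triExpIntra x t p q ∨ T = triExpIntra x p t q ∨ T = triExpIntra x q t p) :
    ∃ S₁ S₂ : List (TriV V), S₁.head? = some (outerV x p) ∧ S₂.head? = some (outerV x p) ∧
      S₁.filter Sum.isLeft = [baseV x] ∧ S₂.filter Sum.isLeft = [baseV x] ∧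
      (walkEdges S₁ z + walkEdges S₂ z : Multiset (Sym2 (TriV V))) =
        T + {s(outerV x q, z), s(outerV x q, z)} +
          if d then {linkEdge x t, linkEdge x t} else 0 := by
  rcases hT with rfl | rfl | rfl
  on_goal 1 => refine ⟨[outerV x p, innerV x p, outerV x t] ++
      (if d then [outerV t x, outerV x t] else []) ++ [innerV x q, baseV x, outerV x q],
    [outerV x p, baseV x, innerV x p, innerV x q, outerV x q], by cases d <;> rfl, rfl, ?_⟩
  on_goal 2 => refine ⟨[outerV x p, innerV x t, outerV x t] ++
      (if d then [outerV t x, outerV x t] else []) ++ [baseV x, innerV x q, outerV x q],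
    [outerV x p, innerV x q, innerV x t, baseV x, outerV x q], by cases d <;> rfl, rfl, ?_⟩
  on_goal 3 => refine ⟨[outerV x p, innerV x p, baseV x, outerV x t] ++
      (if d then [outerV t x, outerV x t] else []) ++ [innerV x t, outerV x q],
    [outerV x p, baseV x, innerV x t, innerV x p, outerV x q], by cases d <;> rfl, rfl, ?_⟩
  all_goals
    cases d <;> refine ⟨by simp [List.filter_cons, baseV, outerV, innerV],
      by simp [List.filter_cons, baseV, outerV, innerV], ?_⟩ <;>
    simp only [triExpIntra, linkEdge, walkEdges_cons, walkEdges_nil, List.headD_cons,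
      List.headD_nil, List.cons_append, List.nil_append, if_true, if_false, Bool.false_eq_true,
      List.append_nil, ← Multiset.cons_coe, Multiset.coe_nil, Multiset.insert_eq_cons,
      ← Multiset.singleton_add, Sym2.eq_swap] <;>
    abel

lemma outerV_mem_triExpVerts {R : LGraph V} {ch : V → V × V × V}
    (hroles : ∀ x ∈ R.verts, R.nbrFinset x = {(ch x).1, (ch x).2.1, (ch x).2.2}) {x w : V}
    (hx : x ∈ R.verts) (hw : w ∈ R.nbrFinset x) : outerV x w ∈ triExpVerts R ch := by
  rw [hroles x hx] at hw
  simp only [triExpVerts, Finset.mem_biUnion]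
  refine ⟨x, hx, ?_⟩
  simp only [Finset.mem_insert, Finset.mem_singleton] at hw
  rcases hw with rfl | rfl | rfl <;> simp

lemma IsTriangularExpansion.isWellFormed {R : LGraph V} {Lam : Multigraph (TriV V) E}
    (hR : R.IsGraph) (hexp : IsTriangularExpansion R Lam) : Lam.IsWellFormed := by
  obtain ⟨ch, hch, hverts, hedges⟩ := hexp
  have hroles : ∀ x ∈ R.verts, R.nbrFinset x = {(ch x).1, (ch x).2.1, (ch x).2.2} :=
    fun x hx => (hch x hx).2.2.2
  intro e he y hy
  have he' : Lam.ends e ∈ triExpEdges R ch := hedges ▸ Multiset.mem_map_of_mem _ he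
  rw [hverts]
  rcases Multiset.mem_add.mp he' with he' | he' <;>
    obtain ⟨x, hx, he'⟩ := Multiset.mem_bind.mp he'
  · simp only [triExpIntra, Multiset.insert_eq_cons, Multiset.mem_cons,
      Multiset.mem_singleton] at he'
    simp only [triExpVerts, Finset.mem_biUnion]
    refine ⟨x, hx, ?_⟩
    rcases he' with h | h | h | h | h | h | h | h | h <;> rw [h, Sym2.mem_iff] at hy <;>
      rcases hy with rfl | rfl <;> simp
  · obtain ⟨w, hw, hew⟩ := Multiset.mem_map.mp he'
    rw [← hew, Sym2.mem_iff] at hy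
    have hadj := (LGraph.mem_nbrFinset hR).mp hw
    rcases hy with rfl | rfl
    · exact outerV_mem_triExpVerts hroles hx hw
    · exact outerV_mem_triExpVerts hroles (hR.2.2 _ _ hadj).2
        ((LGraph.mem_nbrFinset hR).mpr (hR.1 _ _ hadj))

lemma triExpEdges_eq_sum {R : LGraph V} (ch : V → V × V × V) {n : ℕ} [NeZero n] (g : Fin n ↪ V)
    (hV : R.verts = Finset.univ.map g) {J : Fin n → Fin n} (hJ : Function.Involutive J)
    (hfix : ∀ i, J i ≠ i) (hnbr : ∀ i, (R.nbrFinset (g i)).val = {g (i - 1), g (i + 1), g (J i)}) :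
    triExpEdges R ch = ∑ i, (triExpIntra (g i) (ch (g i)).1 (ch (g i)).2.1 (ch (g i)).2.2 +
      {linkEdge (g i) (g (i + 1)), linkEdge (g i) (g (i + 1))} +
      if i < J i then {linkEdge (g i) (g (J i)), linkEdge (g i) (g (J i))} else 0) := by
  have hprev : ∑ i, ({linkEdge (g i) (g (i - 1))} : Multiset (Sym2 (TriV V))) =
      ∑ i, {linkEdge (g i) (g (i + 1))} :=
    Fintype.sum_equiv (Equiv.subRight 1) _ _ fun i => by simp [linkEdge_comm (g i)]
  have hchord := Fintype.sum_eq_sum_ite_lt_of_involutive hJ hfix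
    (f := fun i => ({linkEdge (g i) (g (J i))} : Multiset (Sym2 (TriV V))))
    fun i => by simp [hJ i, linkEdge_comm (g i)]
  rw [triExpEdges, hV, Finset.map_val, Multiset.bind_map, Multiset.bind_map]
  change ∑ i, _ + ∑ i, (R.nbrFinset (g i)).val.map (linkEdge (g i)) = _
  simp only [hnbr, Multiset.insert_eq_cons, ← Multiset.singleton_add, Multiset.map_add,
    Multiset.map_singleton, Finset.sum_add_distrib, hprev, hchord]
  abel

lemma exists_walk_eq_triExpEdges {R : LGraph V} {ch : V → V × V × V}
    (hch : ∀ x ∈ R.verts, (ch x).1 ≠ (ch x).2.1 ∧ (ch x).1 ≠ (ch x).2.2 ∧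
      (ch x).2.1 ≠ (ch x).2.2 ∧ R.nbrFinset x = {(ch x).1, (ch x).2.1, (ch x).2.2})
    {n : ℕ} [NeZero n] (g : Fin n ↪ V) (hV : R.verts = Finset.univ.map g) {J : Fin n → Fin n}
    (hJ : Function.Involutive J) (hfix : ∀ i, J i ≠ i)
    (hnbr : ∀ i, (R.nbrFinset (g i)).val = {g (i - 1), g (i + 1), g (J i)}) :
    ∃ vs z, vs.head? = some z ∧ (walkEdges vs z : Multiset (Sym2 (TriV V))) = triExpEdges R ch ∧
      vs.filter Sum.isLeft = (List.ofFn g).map baseV ++ (List.ofFn g).map baseV := by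
  have hseg := fun i => by
    obtain ⟨hab, hac, hbc, hroles⟩ := hch (g i) (by simp [hV])
    have hroles' : ({(ch (g i)).1, (ch (g i)).2.1, (ch (g i)).2.2} : Finset V) =
        {g (i - 1), g (i + 1), g (J i)} := by
      ext y; rw [← hroles, ← Finset.mem_val, hnbr i]; simp
    exact exists_triangle_segments (g i) (g (i - 1)) (g (i + 1)) (g (J i)) (decide (i < J i))
      (outerV (g (i + 1)) (g i)) (triExpIntra_cases hab hac hbc hroles')
  choose S₁ S₂ hS₁ hS₂ hleft₁ hleft₂ hedges using hseg
  have hclose : ∀ i, outerV (g (i + 1)) (g (i + 1 - 1)) = outerV (g (i + 1)) (g i) := fun i => by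
    rw [add_sub_cancel_right]
  refine ⟨(List.finRange n).flatMap S₁ ++ (List.finRange n).flatMap S₂, outerV (g 0) (g (0 - 1)),
    ?_, ?_, ?_⟩
  · obtain ⟨m, rfl⟩ := Nat.exists_eq_succ_of_ne_zero (NeZero.ne n)
    simp [List.finRange_succ, hS₁ 0]
  · have hhead₂ : ((List.finRange n).flatMap S₂).headD (outerV (g 0) (g (0 - 1))) =
        outerV (g 0) (g (0 - 1)) := by
      obtain ⟨m, rfl⟩ := Nat.exists_eq_succ_of_ne_zero (NeZero.ne n)
      simp [List.finRange_succ, List.headD_eq_head?_getD, hS₂ 0]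
    rw [walkEdges_append, hhead₂, ← Multiset.coe_add,
      coe_walkEdges_flatMap_finRange S₁ (fun i => outerV (g i) (g (i - 1))) hS₁,
      coe_walkEdges_flatMap_finRange S₂ (fun i => outerV (g i) (g (i - 1))) hS₂,
      ← Finset.sum_add_distrib, triExpEdges_eq_sum ch g hV hJ hfix hnbr]
    simp only [hclose, hedges, decide_eq_true_eq]
    rfl
  · simp only [List.filter_append, List.filter_flatMap, hleft₁, hleft₂, ← List.map_eq_flatMap,
      List.ofFn_eq_map, List.map_map, Function.comp_def]

/-- if a 3-regular graph `R` is Hamiltonian, then its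
triangular-expansion `Λ(R)` allows a SOET with respect to `V(R)`. -/
theorem hasSOET_of_hamiltonian (R : LGraph V) (hR : R.IsGraph)
    (h3 : R.IsThreeRegular) (Lam : Multigraph (TriV V) E)
    (hexp : IsTriangularExpansion R Lam)
    (hham : R.IsHamiltonian) :
    Lam.HasSOET (R.verts.image baseV) := by
  have hwf := hexp.isWellFormed hR
  obtain ⟨ch, hch, -, hedges⟩ := hexp
  obtain ⟨m, g, hV, hadj⟩ := hham.exists_embedding
  obtain ⟨J, hJ, hfix, hnbr⟩ := LGraph.exists_chord_involution hR h3 g hV hadj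
  obtain ⟨vs, z, hz, hwalk, hleft⟩ := exists_walk_eq_triExpEdges hch g hV hJ hfix hnbr
  obtain ⟨es, hes⟩ := Multigraph.exists_isEulerianTour hwf hz (hedges.trans hwalk.symm)
  have hverts : R.verts = (List.ofFn g).toFinset := by
    ext x
    simp only [hV, Finset.mem_map, Finset.mem_univ, true_and, List.mem_toFinset, List.mem_ofFn]
  rw [hverts]
  exact ⟨vs, es, hes.isSOET (List.nodup_ofFn.mpr g.injective) hleft⟩
end
end

section
/- Let R be a 3-regular graph and Λ(R) its triangular-expansion. If Λ(R) allows a HAMSOET with respect to R, then R is Hamiltonian. -/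
universe u v w

attribute [local instance 10] Classical.propDecidable

noncomputable section

variable {V : Type u} {E : Type v} {W : Type w}

/-!
Restricted to `V(R)`, the tour reads `s s` for an enumeration `s` of `V(R)`. Two cyclically
successive letters of `s` are then successive letters of `s s`, i.e. consecutive in the tour,
hence adjacent in `R` by the HAMSOET property: `s` is a Hamiltonian cycle. It has at least
three vertices because `R` is nonempty and 3-regular.
-/

theorem List.exists_eq_append_cons_append_cons_of_filter_eq {α : Type*} {p : α → Bool}
    {l L₁ L₂ : List α} {a b : α} (h : l.filter p = L₁ ++ a :: b :: L₂) :
    ∃ A X B, (∀ x ∈ X, ¬ p x) ∧ l = A ++ a :: (X ++ b :: B) := by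
  obtain ⟨l₁, l₂, rfl, -, h₂⟩ := List.filter_eq_append_iff.1 h
  obtain ⟨m₁, m₂, rfl, -, -, h₃⟩ := List.filter_eq_cons_iff.1 h₂
  obtain ⟨X, B, rfl, hX, -, -⟩ := List.filter_eq_cons_iff.1 h₃
  exact ⟨l₁ ++ m₁, X, B, hX, by simp⟩

theorem List.IsChain.rel_of_mem_zip_rotate_one {α : Type*} {r : α → α → Prop} {l : List α}
    (h : (l ++ l).IsChain r) {a b : α} (hab : (a, b) ∈ l.zip (l.rotate 1)) : r a b := by
  cases l with
  | nil => simp at hab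
  | cons x t =>
    have hcycle : (x :: t ++ [x]).IsChain r := h.infix ⟨[], t, by simp⟩
    rw [List.isChain_cons_append_singleton_iff_forall₂, List.forall₂_iff_zip] at hcycle
    exact hcycle.2 (by simpa using hab)

theorem ConsecutiveIn.of_filter_eq {vs A B : List W} {V' : Finset W} {a b : W}
    (h : vs.filter (fun x => decide (x ∈ V')) = A ++ a :: b :: B) :
    ConsecutiveIn vs V' a b := by
  obtain ⟨A', X, B', hX, rfl⟩ := List.exists_eq_append_cons_append_cons_of_filter_eq h
  exact ⟨A', X, B', fun x hx => by simpa using hX x hx, Or.inl rfl⟩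

theorem Multigraph.IsEulerianTour.verts_nonempty {F : Multigraph W E} {vs : List W}
    {es : List E} (h : F.IsEulerianTour vs es) : F.verts.Nonempty := by
  obtain ⟨hne, -, -, -, hmem, -⟩ := h
  obtain ⟨x, hx⟩ := List.exists_mem_of_ne_nil vs hne
  exact ⟨x, hmem x hx⟩

theorem Multigraph.IsSOET.exists_enum_of_image {F : Multigraph W E} {V' : Finset W}
    {S : Finset V} {f : V → W} (hf : Function.Injective f) (hV' : (V' : Set W) = f '' S)
    {vs : List W} {es : List E} (h : F.IsSOET V' vs es) :
    ∃ s : List V, s.Nodup ∧ s.toFinset = S ∧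
      vs.filter (fun x => decide (x ∈ V')) = (s ++ s).map f := by
  obtain ⟨-, s, hnd, hs, hfilter⟩ := h
  obtain ⟨s, rfl⟩ : s ∈ Set.range (List.map f) := by
    rw [Set.range_list_map]
    intro x hx
    have hxV' : x ∈ (V' : Set W) := by simpa [← hs] using hx
    exact Set.image_subset_range f S (hV' ▸ hxV')
  refine ⟨s, hnd.of_map f, ?_, by rw [hfilter, List.map_append]⟩
  apply Finset.coe_injective
  apply hf.image_injective
  rw [← hV', ← hs]
  ext
  simp

theorem LGraph.IsThreeRegular.three_le_card_verts {R : LGraph V} (h3 : R.IsThreeRegular)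
    (hne : R.verts.Nonempty) : 3 ≤ R.verts.card := by
  obtain ⟨x, hx⟩ := hne
  exact h3 x hx ▸ Finset.card_le_card (Finset.filter_subset _ _)

theorem IsTriangularExpansion.verts_nonempty {R : LGraph V} {Lam : Multigraph (TriV V) E}
    (hexp : IsTriangularExpansion R Lam) (hne : Lam.verts.Nonempty) : R.verts.Nonempty := by
  obtain ⟨ch, -, hverts, -⟩ := hexp
  rw [hverts, triExpVerts, Finset.biUnion_nonempty] at hne
  obtain ⟨v, hv, -⟩ := hne
  exact ⟨v, hv⟩

theorem hamiltonian_of_hamsoet_general (R : LGraph V)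
    (h3 : R.IsThreeRegular) (Lam : Multigraph (TriV V) E)
    (hexp : IsTriangularExpansion R Lam)
    (h : ∃ (vs : List (TriV V)) (es : List E), IsHAMSOET R Lam vs es) :
    R.IsHamiltonian := by
  obtain ⟨vs, es, hsoet, hcons⟩ := h
  obtain ⟨s, hnd, hs, hfilter⟩ :=
    hsoet.exists_enum_of_image (f := baseV) Sum.inl_injective Finset.coe_image
  have hmem : ∀ x ∈ s ++ s, x ∈ R.verts := fun x hx =>
    hs ▸ List.mem_toFinset.2 (by simpa using hx)
  have hchain : (s ++ s).IsChain R.Adj := by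
    refine List.isChain_iff_forall_rel_of_append_cons_cons.2 fun a b l₁ l₂ hsplit => ?_
    refine hcons a b (hmem a (by simp [hsplit])) (hmem b (by simp [hsplit]))
      (.of_filter_eq (A := l₁.map baseV) (B := l₂.map baseV) ?_)
    rw [hfilter, hsplit]
    simp
  have hlen : s.length = R.verts.card := by rw [← hs, List.toFinset_card_of_nodup hnd]
  refine ⟨s, ?_, hnd, hs, fun p hp => hchain.rel_of_mem_zip_rotate_one hp⟩
  exact hlen ▸ h3.three_le_card_verts (hexp.verts_nonempty hsoet.1.verts_nonempty)

/-- if the triangular-expansion `Λ(R)` of a 3-regular graph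
`R` allows a HAMSOET with respect to `R`, then `R` is Hamiltonian. -/
theorem hamiltonian_of_hamsoet (R : LGraph V) (hR : R.IsGraph)
    (h3 : R.IsThreeRegular) (Lam : Multigraph (TriV V) E)
    (hexp : IsTriangularExpansion R Lam)
    (h : ∃ (vs : List (TriV V)) (es : List E), IsHAMSOET R Lam vs es) :
    R.IsHamiltonian :=
  hamiltonian_of_hamsoet_general R h3 Lam hexp h
end
end

section
/- Let G be a finite simple graph whose vertex set is the disjoint union of sets U and L with U ≠ ∅. Assume that for every l ∈ L there exists u ∈ U not adjacent to l, and for every u ∈ U there exists l ∈ L adjacent to u. Then there exist distinct vertices u_1, u_2 ∈ U and distinct vertices l_1, l_2 ∈ L such that u_1 is adjacent to l_1 but not to l_2, and u_2 is adjacent to l_2 but not to l_1. -/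
universe u v w

attribute [local instance 10] Classical.propDecidable

noncomputable section

variable {V : Type u} {E : Type v} {W : Type w}

/-- Take `f i` of minimal size: some `f j` misses one of its elements, and by minimality `f j`
cannot be a subset of `f i` either. -/
theorem Finset.exists_not_subset_and_not_subset {ι β : Type*} {s : Finset ι} {f : ι → Finset β}
    (hs : s.Nonempty) (hne : ∀ i ∈ s, (f i).Nonempty)
    (hmiss : ∀ i ∈ s, ∀ x ∈ f i, ∃ j ∈ s, x ∉ f j) :
    ∃ i ∈ s, ∃ j ∈ s, ¬ f i ⊆ f j ∧ ¬ f j ⊆ f i := by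
  obtain ⟨i, hi, hmin⟩ := s.exists_min_image (fun i => (f i).card) hs
  obtain ⟨x, hx⟩ := hne i hi
  obtain ⟨j, hj, hxj⟩ := hmiss i hi x hx
  have hij : ¬ f i ⊆ f j := fun h => hxj (h hx)
  refine ⟨i, hi, j, hj, hij, fun hji => hij ?_⟩
  rw [Finset.eq_of_subset_of_card_le hji (hmin j hj)]

theorem exists_crossing_pairs_general (G : LGraph V)
    (U L : Finset V)
    (hU : U.Nonempty)
    (h1 : ∀ l ∈ L, ∃ u ∈ U, ¬ G.Adj u l)
    (h2 : ∀ u ∈ U, ∃ l ∈ L, G.Adj u l) :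
    ∃ u₁ ∈ U, ∃ u₂ ∈ U, ∃ l₁ ∈ L, ∃ l₂ ∈ L, u₁ ≠ u₂ ∧ l₁ ≠ l₂ ∧
      G.Adj u₁ l₁ ∧ ¬ G.Adj u₁ l₂ ∧ G.Adj u₂ l₂ ∧ ¬ G.Adj u₂ l₁ := by
  have hne : ∀ u ∈ U, (L.filter (G.Adj u)).Nonempty := fun u hu => by
    obtain ⟨l, hl, hul⟩ := h2 u hu
    exact ⟨l, Finset.mem_filter.2 ⟨hl, hul⟩⟩
  have hmiss : ∀ u ∈ U, ∀ l ∈ L.filter (G.Adj u), ∃ u' ∈ U, l ∉ L.filter (G.Adj u') :=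
    fun _ _ l hl => by
      obtain ⟨u', hu', hnadj⟩ := h1 l (Finset.mem_filter.1 hl).1
      exact ⟨u', hu', fun h => hnadj (Finset.mem_filter.1 h).2⟩
  obtain ⟨u₁, hu₁, u₂, hu₂, h₁₂, h₂₁⟩ := Finset.exists_not_subset_and_not_subset hU hne hmiss
  obtain ⟨l₁, hl₁, hnl₁⟩ := Finset.not_subset.1 h₁₂
  obtain ⟨l₂, hl₂, hnl₂⟩ := Finset.not_subset.1 h₂₁
  simp only [Finset.mem_filter] at hl₁ hl₂ hnl₁ hnl₂
  refine ⟨u₁, hu₁, u₂, hu₂, l₁, hl₁.1, l₂, hl₂.1, ?_, ?_, hl₁.2, fun h => hnl₂ ⟨hl₂.1, h⟩,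
    hl₂.2, fun h => hnl₁ ⟨hl₁.1, h⟩⟩
  · rintro rfl
    exact hnl₁ hl₁
  · rintro rfl
    exact hnl₂ hl₁

/-- if `V(G) = U ⊔ L` with `U ≠ ∅`, every `l ∈ L` has a
non-neighbour in `U` and every `u ∈ U` has a neighbour in `L`, then there
are distinct `u₁, u₂ ∈ U` and distinct `l₁, l₂ ∈ L` with `u₁ ∼ l₁`,
`u₁ ≁ l₂`, `u₂ ∼ l₂`, `u₂ ≁ l₁`. -/
theorem exists_crossing_pairs (G : LGraph V) (hG : G.IsGraph)
    (U L : Finset V) (hdisj : Disjoint U L) (hunion : G.verts = U ∪ L)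
    (hU : U.Nonempty)
    (h1 : ∀ l ∈ L, ∃ u ∈ U, ¬ G.Adj u l)
    (h2 : ∀ u ∈ U, ∃ l ∈ L, G.Adj u l) :
    ∃ u₁ ∈ U, ∃ u₂ ∈ U, ∃ l₁ ∈ L, ∃ l₂ ∈ L, u₁ ≠ u₂ ∧ l₁ ≠ l₂ ∧
      G.Adj u₁ l₁ ∧ ¬ G.Adj u₁ l₂ ∧ G.Adj u₂ l₂ ∧ ¬ G.Adj u₂ l₁ :=
  exists_crossing_pairs_general G U L hU h1 h2
end
end

section
/- Let G be a connected graph and let G' be a connected graph with |V(G')| ≤ 3. Then G' is a vertex-minor of G if and only if V(G') ⊆ V(G). -/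
/-! Local complementations of a connected graph `G` can make any nonempty `A ⊆ V(G)` induce a
connected subgraph: add the vertices of `A` one at a time, each brought next to the part already
built by shortening a shortest path to it. A connected graph on at most three vertices is
complete or a star, and complementing at the centre of a star completes it. So `G[V(G')]` (made
connected) and `G'` both reach the complete graph on `V(G')` by complementations inside `V(G')`;
local complementation is an involution and commutes with taking induced subgraphs containing
the vertex, which turns this into a vertex-minor relation. -/

universe u v w

attribute [local instance 10] Classical.propDecidable

noncomputable section

variable {V : Type u} {E : Type v} {W : Type w}

namespace LGraph

variable {G G' H K : LGraph V} {S A : Finset V} {a b c s u v x y z : V} {n : ℕ}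

protected lemma IsGraph.symm (hG : G.IsGraph) (h : G.Adj a b) : G.Adj b a := hG.1 a b h

lemma IsGraph.not_adj_self (hG : G.IsGraph) (a : V) : ¬G.Adj a a := hG.2.1 a

lemma IsGraph.ne (hG : G.IsGraph) (h : G.Adj a b) : a ≠ b := fun e => hG.not_adj_self a (e ▸ h)

lemma IsGraph.left_mem (hG : G.IsGraph) (h : G.Adj a b) : a ∈ G.verts := (hG.2.2 a b h).1

lemma IsGraph.right_mem (hG : G.IsGraph) (h : G.Adj a b) : b ∈ G.verts := (hG.2.2 a b h).2

lemma IsGraph.reflTransGen_symm (hG : G.IsGraph) (h : Relation.ReflTransGen G.Adj a b) :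
    Relation.ReflTransGen G.Adj b a :=
  Relation.ReflTransGen.mono (fun _ _ => hG.symm) _ _ (Relation.reflTransGen_swap.mpr h)

lemma ext_of_adj_iff (hv : G.verts = H.verts) (ha : ∀ x y, G.Adj x y ↔ H.Adj x y) : G = H := by
  cases G; cases H
  simp only [mk.injEq] at hv ha ⊢
  exact ⟨hv, funext₂ fun x y => propext (ha x y)⟩

@[simp] lemma verts_localComp : (G.localComp v).verts = G.verts := rfl

@[simp] lemma adj_localComp :
    (G.localComp v).Adj x y ↔ x ≠ y ∧ Xor (G.Adj x y) (G.Adj v x ∧ G.Adj v y) := Iff.rfl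

@[simp] lemma verts_induce : (G.induce A).verts = G.verts ∩ A := rfl

@[simp] lemma adj_induce : (G.induce A).Adj x y ↔ G.Adj x y ∧ x ∈ A ∧ y ∈ A := Iff.rfl

@[simp] lemma localCompSeq_nil : G.localCompSeq [] = G := rfl

@[simp] lemma localCompSeq_cons (l : List V) :
    G.localCompSeq (v :: l) = (G.localComp v).localCompSeq l := rfl

lemma localCompSeq_append (l m : List V) :
    G.localCompSeq (l ++ m) = (G.localCompSeq l).localCompSeq m :=
  List.foldl_append

@[simp] lemma verts_localCompSeq (l : List V) : (G.localCompSeq l).verts = G.verts := by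
  induction l generalizing G with
  | nil => rfl
  | cons x l ih => exact ih

lemma IsGraph.localComp (hG : G.IsGraph) (v : V) : (G.localComp v).IsGraph := by
  refine ⟨fun a b h => ?_, fun a h => h.1 rfl, fun a b h => ?_⟩
  · have := hG.symm (a := a) (b := b); have := hG.symm (a := b) (b := a)
    have := hG.symm (a := v) (b := a); have := hG.symm (a := v) (b := b)
    simp only [adj_localComp, xor_def] at h ⊢
    tauto
  · rcases h.2 with ⟨h, -⟩ | ⟨⟨ha, hb⟩, -⟩
    exacts [⟨hG.left_mem h, hG.right_mem h⟩, ⟨hG.right_mem ha, hG.right_mem hb⟩]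

lemma IsGraph.localCompSeq (hG : G.IsGraph) (l : List V) : (G.localCompSeq l).IsGraph := by
  induction l generalizing G with
  | nil => exact hG
  | cons x l ih => exact ih (hG.localComp x)

lemma IsGraph.induce (hG : G.IsGraph) (A : Finset V) : (G.induce A).IsGraph :=
  ⟨fun _ _ h => ⟨hG.symm h.1, h.2.2, h.2.1⟩, fun a h => hG.not_adj_self a h.1,
    fun _ _ h => ⟨Finset.mem_inter.mpr ⟨hG.left_mem h.1, h.2.1⟩,
      Finset.mem_inter.mpr ⟨hG.right_mem h.1, h.2.2⟩⟩⟩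

lemma localComp_adj_iff_of_not_adj (hG : G.IsGraph) (hvx : ¬G.Adj v x) :
    (G.localComp v).Adj x y ↔ G.Adj x y := by
  simp only [adj_localComp, hvx, false_and, xor_def, not_false_eq_true, and_true, or_false]
  exact ⟨And.right, fun h => ⟨hG.ne h, h⟩⟩

lemma localComp_adj_of_adj_of_adj (hvx : G.Adj v x) (hvy : G.Adj v y) (hxy : x ≠ y)
    (hn : ¬G.Adj x y) : (G.localComp v).Adj x y :=
  ⟨hxy, Or.inr ⟨⟨hvx, hvy⟩, hn⟩⟩

lemma localComp_localComp (hG : G.IsGraph) (v : V) : (G.localComp v).localComp v = G := by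
  refine ext_of_adj_iff rfl fun x y => ?_
  have hv : ∀ z, (G.localComp v).Adj v z ↔ G.Adj v z := fun z =>
    localComp_adj_iff_of_not_adj hG (hG.not_adj_self v)
  rw [adj_localComp, hv, hv, adj_localComp]
  have := hG.ne (a := x) (b := y)
  simp only [xor_def]
  tauto

lemma induce_localComp_of_forall_not_adj (hG : G.IsGraph) (h : ∀ x ∈ A, ¬G.Adj v x) :
    (G.localComp v).induce A = G.induce A := by
  refine ext_of_adj_iff rfl fun x y => ?_
  simp only [adj_induce]
  exact ⟨fun ⟨hxy, hx, hy⟩ => ⟨(localComp_adj_iff_of_not_adj hG (h x hx)).mp hxy, hx, hy⟩,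
    fun ⟨hxy, hx, hy⟩ => ⟨(localComp_adj_iff_of_not_adj hG (h x hx)).mpr hxy, hx, hy⟩⟩

lemma induce_localComp (hv : v ∈ A) : (G.induce A).localComp v = (G.localComp v).induce A := by
  refine ext_of_adj_iff rfl fun x y => ?_
  simp only [adj_localComp, adj_induce, xor_def]
  tauto

lemma induce_localCompSeq {l : List V} (hl : ∀ x ∈ l, x ∈ A) :
    (G.induce A).localCompSeq l = (G.localCompSeq l).induce A := by
  induction l generalizing G with
  | nil => rfl
  | cons x l ih =>
    simp only [List.mem_cons, forall_eq_or_imp] at hl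
    rw [localCompSeq_cons, induce_localComp hl.1, ih hl.2, localCompSeq_cons]

lemma localCompSeq_localCompSeq_reverse (hG : G.IsGraph) (l : List V) :
    (G.localCompSeq l).localCompSeq l.reverse = G := by
  induction l generalizing G with
  | nil => rfl
  | cons x l ih =>
    rw [List.reverse_cons, localCompSeq_append, localCompSeq_cons (G := G), ih (hG.localComp x)]
    exact localComp_localComp hG x

lemma IsGraph.reflTransGen_localComp (hG : G.IsGraph) (v : V)
    (h : Relation.ReflTransGen G.Adj a b) : Relation.ReflTransGen (G.localComp v).Adj a b := by
  induction h with
  | refl => rfl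
  | @tail x y _ hxy ih =>
    refine ih.trans ?_
    by_cases hv : G.Adj v x ∧ G.Adj v y
    · -- the edge `xy` may be lost, but the path `x v y` survives
      have hxv : (G.localComp v).Adj x v := (hG.localComp v).symm
        ((localComp_adj_iff_of_not_adj hG (hG.not_adj_self v)).mpr hv.1)
      have hvy : (G.localComp v).Adj v y := (localComp_adj_iff_of_not_adj hG (hG.not_adj_self v)).mpr hv.2
      exact .tail (.single hxv) hvy
    · exact .single ⟨hG.ne hxy, Or.inl ⟨hxy, hv⟩⟩

lemma Connected.localCompSeq (hconn : G.Connected) (hG : G.IsGraph) (l : List V) :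
    (G.localCompSeq l).Connected := by
  induction l generalizing G with
  | nil => exact hconn
  | cons x l ih =>
    exact ih ⟨hconn.1, fun a ha b hb => hG.reflTransGen_localComp x (hconn.2 a ha b hb)⟩
      (hG.localComp x)

lemma connected_of_forall_reflTransGen (hG : G.IsGraph) (hr : s ∈ G.verts)
    (h : ∀ x ∈ G.verts, Relation.ReflTransGen G.Adj x s) : G.Connected :=
  ⟨⟨s, hr⟩, fun _ ha _ hb => (h _ ha).trans (hG.reflTransGen_symm (h _ hb))⟩

lemma connected_induce_singleton (ha : a ∈ G.verts) : (G.induce {a}).Connected :=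
  ⟨⟨a, by simp [ha]⟩, fun x hx y hy => by
    simp only [verts_induce, Finset.mem_inter, Finset.mem_singleton] at hx hy
    rw [hx.2, hy.2]⟩

lemma connected_induce_insert (hH : H.IsGraph) (hv : H.verts = G.verts)
    (hS : (G.induce S).Connected) (hs : s ∈ S) (hsc : H.Adj s c)
    (hedge : ∀ x ∈ S, ∀ y ∈ S, G.Adj x y → H.Adj x y ∨ H.Adj x c) :
    (H.induce (insert c S)).Connected := by
  have reach : ∀ x, Relation.ReflTransGen (G.induce S).Adj x s →
      Relation.ReflTransGen (H.induce (insert c S)).Adj x c := by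
    intro x hx
    induction hx using Relation.ReflTransGen.head_induction_on with
    | refl => exact .single ⟨hsc, by simp [hs], by simp⟩
    | head hxy _ ih =>
      obtain ⟨hxy, hx, hy⟩ := hxy
      rcases hedge _ hx _ hy hxy with h | h
      · exact .head ⟨h, by simp [hx], by simp [hy]⟩ ih
      · exact .single ⟨h, by simp [hx], by simp⟩
  refine connected_of_forall_reflTransGen (hH.induce _) (s := c) (by simp [hH.right_mem hsc]) ?_
  intro x hx
  simp only [verts_induce, Finset.mem_inter, Finset.mem_insert] at hx
  rcases hx with ⟨hx, rfl | hxS⟩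
  · rfl
  · exact reach x (hS.2 x (by simp [← hv, hx, hxS]) s (by simp [← hv, hH.left_mem hsc, hs]))

lemma connected_induce_insert_localComp (hG : G.IsGraph) (hS : (G.induce S).Connected)
    (hs : s ∈ S) (hcu : G.Adj c u) (hus : G.Adj u s) (hcS : c ∉ S)
    (hc : ∀ x ∈ S, ¬G.Adj x c) : ((G.localComp u).induce (insert c S)).Connected := by
  have hxc : ∀ x ∈ S, G.Adj u x → (G.localComp u).Adj x c := fun x hx hux =>
    localComp_adj_of_adj_of_adj hux (hG.symm hcu) (fun e => hcS (e ▸ hx)) (hc x hx)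
  refine connected_induce_insert (G := G) (hG.localComp u) rfl hS hs (hxc s hs hus)
    fun x hx y _ hxy => ?_
  by_cases hux : G.Adj u x
  · exact Or.inr (hxc x hx hux)
  · exact Or.inl ((localComp_adj_iff_of_not_adj hG hux).mpr hxy)

def ReachesIn (G : LGraph V) (S : Finset V) : ℕ → V → Prop
  | 0, x => x ∈ S
  | n + 1, x => ∃ y, G.Adj x y ∧ G.ReachesIn S n y

lemma exists_reachesIn (h : Relation.ReflTransGen G.Adj x s) (hs : s ∈ S) :
    ∃ n, G.ReachesIn S n x := by
  induction h using Relation.ReflTransGen.head_induction_on with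
  | refl => exact ⟨0, hs⟩
  | head hxy _ ih =>
    obtain ⟨n, hn⟩ := ih
    exact ⟨n + 1, _, hxy, hn⟩

lemma ReachesIn.localComp (hG : G.IsGraph) (h : G.ReachesIn S n x)
    (hu : ∀ j < n, ∀ y, G.ReachesIn S j y → ¬G.Adj u y) :
    (G.localComp u).ReachesIn S n x := by
  induction n generalizing x with
  | zero => exact h
  | succ n ih =>
    obtain ⟨y, hxy, hy⟩ := h
    refine ⟨y, (hG.localComp u).symm ?_, ih hy fun j hj => hu j (by omega)⟩
    exact (localComp_adj_iff_of_not_adj hG (hu n (by omega) y hy)).mpr (hG.symm hxy)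

/-- Induction on the distance from `c` to `S`: local complementation at the second vertex of a
shortest path from `c` to `S` shortens it, and leaves `G[S]` alone as long as that vertex has
no neighbour in `S`. -/
lemma exists_connected_induce_insert (hG : G.IsGraph) (hS : (G.induce S).Connected)
    (hc : G.ReachesIn S n c) :
    ∃ l, (∀ x ∈ l, x ∈ G.verts) ∧ ((G.localCompSeq l).induce (insert c S)).Connected := by
  induction n using Nat.strong_induction_on generalizing G with
  | _ n ih =>
  have hex : ∃ m, G.ReachesIn S m c := ⟨n, hc⟩
  obtain ⟨m, hmn, hm, hmin⟩ :
      ∃ m ≤ n, G.ReachesIn S m c ∧ ∀ j < m, ¬G.ReachesIn S j c :=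
    ⟨Nat.find hex, Nat.find_min' hex hc, Nat.find_spec hex, fun _ => Nat.find_min hex⟩
  rcases m with _ | _ | _ | k
  · exact ⟨[], by simp, by rwa [localCompSeq_nil, Finset.insert_eq_of_mem hm]⟩
  · obtain ⟨s, hcs, hs⟩ := hm
    exact ⟨[], by simp,
      connected_induce_insert hG rfl hS hs (hG.symm hcs) fun _ _ _ _ hxy => Or.inl hxy⟩
  · obtain ⟨u, hcu, s, hus, hs⟩ := hm
    exact ⟨[u], by simpa using hG.right_mem hcu,
      connected_induce_insert_localComp hG hS hs hcu hus (hmin 0 (by omega))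
        fun x hx hxc => hmin 1 (by omega) ⟨x, hG.symm hxc, hx⟩⟩
  · obtain ⟨u, hcu, w, huw, hw⟩ := hm
    have hu : ∀ j < k + 1, ∀ y, G.ReachesIn S j y → ¬G.Adj u y := fun j hj y hy huy =>
      hmin (j + 2) (by omega) ⟨u, hcu, y, huy, hy⟩
    have hcw : (G.localComp u).Adj c w :=
      localComp_adj_of_adj_of_adj (hG.symm hcu) huw (fun e => hmin (k + 1) (by omega) (e ▸ hw))
        fun hcw => hmin (k + 2) (by omega) ⟨w, hcw, hw⟩
    have hS' : ((G.localComp u).induce S).Connected := by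
      rwa [induce_localComp_of_forall_not_adj hG fun x hx => hu 0 (by omega) x hx]
    obtain ⟨l, hl, hconn⟩ :=
      ih (k + 2) (by omega) (hG.localComp u) hS' ⟨w, hcw, hw.localComp hG hu⟩
    exact ⟨u :: l, by simpa [hG.right_mem hcu] using hl, hconn⟩

lemma exists_connected_induce (hG : G.IsGraph) (hconn : G.Connected) (hA : A ⊆ G.verts)
    (hne : A.Nonempty) :
    ∃ l, (∀ x ∈ l, x ∈ G.verts) ∧ ((G.localCompSeq l).induce A).Connected := by
  induction hne using Finset.Nonempty.cons_induction with
  | singleton a => exact ⟨[], by simp, connected_induce_singleton (hA (by simp))⟩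
  | cons c S _ hne ih =>
    rw [Finset.cons_eq_insert] at hA ⊢
    obtain ⟨l, hl, hS⟩ := ih ((Finset.subset_insert _ _).trans hA)
    obtain ⟨s, hs⟩ := hne
    have hcs := (hconn.localCompSeq hG l).2 c (by simpa using hA (by simp)) s
      (by simpa using hA (by simp [hs]))
    obtain ⟨n, hn⟩ := exists_reachesIn hcs hs
    obtain ⟨m, hm, hconn'⟩ := exists_connected_induce_insert (hG.localCompSeq l) hS hn
    refine ⟨l ++ m, fun x hx => ?_, by rwa [localCompSeq_append]⟩
    rcases List.mem_append.mp hx with hx | hx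
    exacts [hl x hx, by simpa using hm x hx]

lemma LCEquiv.trans (h₁ : G.LCEquiv H) (h₂ : H.LCEquiv K) : G.LCEquiv K := by
  obtain ⟨l, hl, rfl⟩ := h₁
  obtain ⟨m, hm, rfl⟩ := h₂
  refine ⟨l ++ m, fun x hx => ?_, localCompSeq_append l m⟩
  rcases List.mem_append.mp hx with hx | hx
  exacts [hl x hx, by simpa using hm x hx]

lemma LCEquiv.symm (hG : G.IsGraph) (h : G.LCEquiv H) : H.LCEquiv G := by
  obtain ⟨l, hl, rfl⟩ := h
  exact ⟨l.reverse, by simpa using hl, localCompSeq_localCompSeq_reverse hG l⟩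

lemma isVertexMinor_of_lcEquiv {l : List V} (hl : ∀ x ∈ l, x ∈ G.verts)
    (h : ((G.localCompSeq l).induce G'.verts).LCEquiv G') : G'.IsVertexMinor G := by
  obtain ⟨m, hm, heq⟩ := h
  simp only [verts_induce, verts_localCompSeq, Finset.mem_inter] at hm
  refine ⟨l ++ m, fun x hx => ?_, ?_⟩
  · rcases List.mem_append.mp hx with hx | hx
    exacts [hl x hx, (hm x hx).1]
  · rw [localCompSeq_append, ← induce_localCompSeq fun x hx => (hm x hx).2, heq]

def complete (A : Finset V) : LGraph V :=
  ⟨A, fun x y => x ∈ A ∧ y ∈ A ∧ x ≠ y⟩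

lemma eq_complete_of_forall_adj (hK : K.IsGraph)
    (h : ∀ x ∈ K.verts, ∀ y ∈ K.verts, x ≠ y → K.Adj x y) : K = complete K.verts :=
  ext_of_adj_iff rfl fun _ _ => ⟨fun hxy => ⟨hK.left_mem hxy, hK.right_mem hxy, hK.ne hxy⟩,
    fun ⟨hx, hy, hxy⟩ => h _ hx _ hy hxy⟩

lemma localComp_eq_complete (hK : K.IsGraph) (hx : ∀ y ∈ K.verts, y ≠ x → K.Adj x y)
    (hind : ∀ y ∈ K.verts, ∀ z ∈ K.verts, y ≠ x → z ≠ x → ¬K.Adj y z) :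
    K.localComp x = complete K.verts := by
  refine eq_complete_of_forall_adj (hK.localComp x) fun y hy z hz hyz => ?_
  have hxx : ¬K.Adj x x := hK.not_adj_self x
  by_cases hyx : y = x
  · subst hyx
    exact (localComp_adj_iff_of_not_adj hK hxx).mpr (hx z hz (Ne.symm hyz))
  by_cases hzx : z = x
  · subst hzx
    exact (hK.localComp z).symm ((localComp_adj_iff_of_not_adj hK hxx).mpr (hx y hy hyx))
  exact localComp_adj_of_adj_of_adj (hx y hy hyx) (hx z hz hzx) hyz (hind y hy z hz hyx hzx)

lemma exists_common_neighbor (hK : K.IsGraph) (hconn : K.Connected) (hcard : K.verts.card ≤ 3)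
    (hy : y ∈ K.verts) (hz : z ∈ K.verts) (hyz : y ≠ z) (hn : ¬K.Adj y z) :
    ∃ x, K.Adj x y ∧ K.Adj x z ∧ K.verts = {x, y, z} := by
  obtain ⟨x, hyx, -⟩ := (hconn.2 y hy z hz).cases_head.resolve_left hyz
  obtain ⟨x', hzx', -⟩ := (hconn.2 z hz y hy).cases_head.resolve_left hyz.symm
  have hxz : x ≠ z := fun e => hn (e ▸ hyx)
  have hV : K.verts = {x, y, z} := by
    refine (Finset.eq_of_subset_of_card_le ?_ ?_).symm
    · simp [Finset.insert_subset_iff, hK.right_mem hyx, hy, hz]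
    · rw [Finset.card_eq_three.mpr ⟨x, y, z, (hK.ne hyx).symm, hxz, hyz, rfl⟩]
      exact hcard
  have hx' : x' ∈ ({x, y, z} : Finset V) := hV ▸ hK.right_mem hzx'
  simp only [Finset.mem_insert, Finset.mem_singleton] at hx'
  rcases hx' with rfl | rfl | rfl
  · exact ⟨x', hK.symm hyx, hK.symm hzx', hV⟩
  · exact absurd (hK.symm hzx') hn
  · exact absurd rfl (hK.ne hzx')

/-- A connected graph on at most three vertices is either complete or a star. -/
lemma lcEquiv_complete_of_card_le_three (hK : K.IsGraph) (hconn : K.Connected)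
    (hcard : K.verts.card ≤ 3) : K.LCEquiv (complete K.verts) := by
  by_cases h : ∀ x ∈ K.verts, ∀ y ∈ K.verts, x ≠ y → K.Adj x y
  · exact ⟨[], by simp, eq_complete_of_forall_adj hK h⟩
  push Not at h
  obtain ⟨y, hy, z, hz, hyz, hn⟩ := h
  obtain ⟨x, hxy, hxz, hV⟩ := exists_common_neighbor hK hconn hcard hy hz hyz hn
  refine ⟨[x], by simp [hV], localComp_eq_complete hK (fun w hw hwx => ?_)
    fun w hw w' hw' hwx hw'x => ?_⟩
  · rw [hV] at hw
    simp only [Finset.mem_insert, Finset.mem_singleton] at hw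
    rcases hw with rfl | rfl | rfl
    exacts [absurd rfl hwx, hxy, hxz]
  · rw [hV] at hw hw'
    simp only [Finset.mem_insert, Finset.mem_singleton] at hw hw'
    have := hK.ne (a := w) (b := w')
    have := hK.symm (a := z) (b := y)
    rcases hw with rfl | rfl | rfl <;> rcases hw' with rfl | rfl | rfl <;> tauto

end LGraph

/-- a connected graph `G'` on at most three vertices is a
vertex-minor of a connected graph `G` iff `V(G') ⊆ V(G)`. -/
theorem small_connected_vertexMinor (G G' : LGraph V)
    (hG : G.IsGraph) (hG' : G'.IsGraph)
    (hGconn : G.Connected) (hG'conn : G'.Connected)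
    (hcard : G'.verts.card ≤ 3) :
    G'.IsVertexMinor G ↔ G'.verts ⊆ G.verts := by
  refine ⟨fun ⟨l, _, h⟩ => ?_, fun hsub => ?_⟩
  · have hv := congrArg LGraph.verts h
    simp only [LGraph.verts_induce, LGraph.verts_localCompSeq] at hv
    exact Finset.inter_eq_right.mp hv
  obtain ⟨l, hl, hK⟩ := LGraph.exists_connected_induce hG hGconn hsub hG'conn.1
  have hKv : ((G.localCompSeq l).induce G'.verts).verts = G'.verts := by
    simpa using hsub
  have hKG := (hG.localCompSeq l).induce G'.verts
  have hKc := LGraph.lcEquiv_complete_of_card_le_three hKG hK (hKv.symm ▸ hcard)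
  rw [hKv] at hKc
  exact LGraph.isVertexMinor_of_lcEquiv hl
    (hKc.trans ((LGraph.lcEquiv_complete_of_card_le_three hG' hG'conn hcard).symm hG'))
end
end
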